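/- arXiv:2211.14454 — 7 statements merged into one kernel-verified Lean document; each statement's English description precedes it below -/
import Mathlib

section
/- Let X be a Banach space, Y a Hilbert space, A : X → Y a bounded linear operator, and R : X → [0,∞] proper, lower semicontinuous and c₀-strongly convex for some c₀ > 0; assume Ax = y has a solution in dom(R). Let L := ‖A‖²/(2c₀) and 0 < γ < 1/L. For fixed data ȳ ∈ Y, consider the dual gradient iteration λ₀ = 0, x_t = argmin_{x∈X}{R(x) − ⟨λ_t, Ax⟩}, λ_{t+1} = λ_t − γ(Ax_t − ȳ), and define d_ȳ(λ) := R*(A*λ) − ⟨λ, ȳ⟩. Then for every λ ∈ Y and every integer t ≥ 0, d_ȳ(λ) − d_ȳ(λ_{t+1}) ≥ (1/(2γ(t+1)))(‖λ − λ_{t+1}‖² − ‖λ‖²) + {(1/2 − Lγ/4)t + (1/2 − Lγ/2)} γ ‖Ax_t − ȳ‖². -/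
open Filter Topology
open scoped RealInnerProductSpace ENNReal

/-- The convex conjugate `R*(A*λ)` of a proper function `R : X → [0,∞]`, evaluated at `A*λ`,
realized as `sup { ⟨λ, A u⟩ - R(u) : u ∈ dom R }`. -/
noncomputable def conjDualPair {X Y : Type*} [NormedAddCommGroup X] [NormedSpace ℝ X]
    [NormedAddCommGroup Y] [InnerProductSpace ℝ Y]
    (R : X → ℝ≥0∞) (A : X →L[ℝ] Y) (lam : Y) : ℝ :=
  sSup {r : ℝ | ∃ u : X, R u ≠ ⊤ ∧ r = ⟪lam, A u⟫ - (R u).toReal}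

set_option maxHeartbeats 1000000 in
/-- Proposition 3.1: the basic one-step estimate for the dual gradient method
`λ₀ = 0`, `x_t = argmin_x {R(x) - ⟨λ_t, A x⟩}`, `λ_{t+1} = λ_t - γ (A x_t - b)`
applied to data `b`, for the dual function `d_b(λ) = R*(A*λ) - ⟨λ, b⟩`. -/
theorem dual_gradient_one_step_estimate
    {X Y : Type*} [NormedAddCommGroup X] [NormedSpace ℝ X] [CompleteSpace X]
    [NormedAddCommGroup Y] [InnerProductSpace ℝ Y] [CompleteSpace Y]
    (A : X →L[ℝ] Y) (R : X → ℝ≥0∞) (c₀ : ℝ) (hc₀ : 0 < c₀)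
    (hproper : ∃ u : X, R u ≠ ⊤)
    (hlsc : LowerSemicontinuous R)
    (hsconv : ∀ u v : X, R u ≠ ⊤ → R v ≠ ⊤ → ∀ s : ℝ, 0 ≤ s → s ≤ 1 →
      R (s • u + (1 - s) • v) + ENNReal.ofReal (c₀ * s * (1 - s) * ‖u - v‖ ^ 2)
        ≤ ENNReal.ofReal s * R u + ENNReal.ofReal (1 - s) * R v)
    (y : Y) (hsol : ∃ u : X, R u ≠ ⊤ ∧ A u = y)
    (L γ : ℝ) (hL : L = ‖A‖ ^ 2 / (2 * c₀)) (hγ0 : 0 < γ) (hγL : γ < 1 / L)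
    (b : Y) (x : ℕ → X) (lam : ℕ → Y)
    (hlam0 : lam 0 = 0)
    (hmin : ∀ t : ℕ, R (x t) ≠ ⊤ ∧ ∀ z : X,
      ENNReal.ofReal ((R (x t)).toReal - ⟪lam t, A (x t)⟫ + ⟪lam t, A z⟫) ≤ R z)
    (hupd : ∀ t : ℕ, lam (t + 1) = lam t - γ • (A (x t) - b)) :
    ∀ (lam' : Y) (t : ℕ),
      (conjDualPair R A lam' - ⟪lam', b⟫)
          - (conjDualPair R A (lam (t + 1)) - ⟪lam (t + 1), b⟫)
        ≥ (1 / (2 * γ * ((t : ℝ) + 1))) * (‖lam' - lam (t + 1)‖ ^ 2 - ‖lam'‖ ^ 2)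
          + ((1 / 2 - L * γ / 4) * (t : ℝ) + (1 / 2 - L * γ / 2)) * γ
              * ‖A (x t) - b‖ ^ 2 := by
  obtain ⟨u₀, hu₀⟩ := hproper
  have h1L : 0 < 1 / L := hγ0.trans hγL
  have hL0 : 0 < L := by
    by_contra h
    push_neg at h
    have : 1 / L ≤ 0 := div_nonpos_of_nonneg_of_nonpos zero_le_one h
    linarith
  have hγL1 : γ * L < 1 := (lt_div_iff₀ hL0).mp hγL
  have hA2 : 0 < ‖A‖ ^ 2 := by
    by_contra h
    push_neg at h
    have : ‖A‖ ^ 2 / (2 * c₀) ≤ 0 := div_nonpos_of_nonpos_of_nonneg h (by positivity)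
    rw [← hL] at this
    linarith
  have hA0 : 0 < ‖A‖ := by nlinarith [norm_nonneg A]
  -- coercivity of R
  have hcoer : ∀ u : X, R u ≠ ⊤ → c₀ / 2 * ‖u - u₀‖ ^ 2 ≤ (R u).toReal + (R u₀).toReal := by
    intro u hu
    have h := hsconv u u₀ hu hu₀ (1 / 2) (by norm_num) (by norm_num)
    set B := ENNReal.ofReal (1 / 2) * R u + ENNReal.ofReal (1 - 1 / 2) * R u₀ with hB
    have hBne : B ≠ ⊤ := by
      rw [hB]
      exact ENNReal.add_ne_top.2 ⟨ENNReal.mul_ne_top ENNReal.ofReal_ne_top hu,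
        ENNReal.mul_ne_top ENNReal.ofReal_ne_top hu₀⟩
    have h2 : ENNReal.ofReal (c₀ * (1 / 2) * (1 - 1 / 2) * ‖u - u₀‖ ^ 2) ≤ B :=
      le_trans le_add_self h
    have h3 : c₀ * (1 / 2) * (1 - 1 / 2) * ‖u - u₀‖ ^ 2 ≤ B.toReal :=
      (ENNReal.ofReal_le_iff_le_toReal hBne).mp h2
    have hBt : B.toReal = (1 / 2) * (R u).toReal + (1 / 2) * (R u₀).toReal := by
      rw [hB, ENNReal.toReal_add (ENNReal.mul_ne_top ENNReal.ofReal_ne_top hu)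
        (ENNReal.mul_ne_top ENNReal.ofReal_ne_top hu₀), ENNReal.toReal_mul,
        ENNReal.toReal_mul, ENNReal.toReal_ofReal (by norm_num : (0:ℝ) ≤ 1/2),
        ENNReal.toReal_ofReal (by norm_num : (0:ℝ) ≤ 1 - 1/2)]
      norm_num
    rw [hBt] at h3
    nlinarith
  -- the sets defining conjDualPair are nonempty and bounded above
  have hmem : ∀ (μ : Y) (u : X), R u ≠ ⊤ →
      (⟪μ, A u⟫ - (R u).toReal) ∈ {r : ℝ | ∃ u : X, R u ≠ ⊤ ∧ r = ⟪μ, A u⟫ - (R u).toReal} :=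
    fun μ u hu => ⟨u, hu, rfl⟩
  have hbdd : ∀ μ : Y, BddAbove {r : ℝ | ∃ u : X, R u ≠ ⊤ ∧ r = ⟪μ, A u⟫ - (R u).toReal} := by
    intro μ
    refine ⟨⟪μ, A u₀⟫ + (R u₀).toReal + (‖μ‖ * ‖A‖) ^ 2 / (2 * c₀), ?_⟩
    rintro r ⟨u, hu, rfl⟩
    have h1 : ⟪μ, A u⟫ - ⟪μ, A u₀⟫ ≤ ‖μ‖ * (‖A‖ * ‖u - u₀‖) := by
      have he : ⟪μ, A u⟫ - ⟪μ, A u₀⟫ = ⟪μ, A (u - u₀)⟫ := by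
        rw [map_sub, inner_sub_right]
      rw [he]
      calc ⟪μ, A (u - u₀)⟫ ≤ ‖μ‖ * ‖A (u - u₀)‖ := real_inner_le_norm _ _
        _ ≤ ‖μ‖ * (‖A‖ * ‖u - u₀‖) :=
          mul_le_mul_of_nonneg_left (A.le_opNorm _) (norm_nonneg μ)
    have h2 := hcoer u hu
    have key : ‖μ‖ * ‖A‖ * ‖u - u₀‖ - c₀ / 2 * ‖u - u₀‖ ^ 2 ≤ (‖μ‖ * ‖A‖) ^ 2 / (2 * c₀) := by
      rw [le_div_iff₀ (by positivity)]
      nlinarith [sq_nonneg (‖μ‖ * ‖A‖ - c₀ * ‖u - u₀‖)]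
    nlinarith [h1, h2, key]
  -- real form of the minimality property
  have hminR : ∀ (s : ℕ) (z : X), R z ≠ ⊤ →
      (R (x s)).toReal - ⟪lam s, A (x s)⟫ ≤ (R z).toReal - ⟪lam s, A z⟫ := by
    intro s z hz
    have := (ENNReal.ofReal_le_iff_le_toReal hz).mp ((hmin s).2 z)
    linarith
  -- the sup is attained at x s
  have hFeq : ∀ s : ℕ, conjDualPair R A (lam s) = ⟪lam s, A (x s)⟫ - (R (x s)).toReal := by
    intro s
    apply le_antisymm
    · apply csSup_le ⟨_, hmem (lam s) (x s) (hmin s).1⟩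
      rintro r ⟨u, hu, rfl⟩
      have := hminR s u hu
      linarith
    · exact le_csSup (hbdd _) (hmem (lam s) (x s) (hmin s).1)
  -- general lower bound for conjDualPair
  have hFge : ∀ (μ : Y) (s : ℕ), ⟪μ, A (x s)⟫ - (R (x s)).toReal ≤ conjDualPair R A μ :=
    fun μ s => le_csSup (hbdd _) (hmem μ (x s) (hmin s).1)
  -- quadratic growth at the minimizer
  have hQG : ∀ (s : ℕ) (z : X), R z ≠ ⊤ →
      (R (x s)).toReal - ⟪lam s, A (x s)⟫ + c₀ * ‖x s - z‖ ^ 2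
        ≤ (R z).toReal - ⟪lam s, A z⟫ := by
    intro s z hz
    obtain ⟨q, hq⟩ : ∃ q : ℝ, q = ‖x s - z‖ ^ 2 := ⟨_, rfl⟩
    obtain ⟨D, hD⟩ : ∃ D : ℝ,
        D = ((R z).toReal - ⟪lam s, A z⟫) - ((R (x s)).toReal - ⟪lam s, A (x s)⟫) := ⟨_, rfl⟩
    have hD0 : 0 ≤ D := by
      have := hminR s z hz
      rw [hD]; linarith
    have claim : ∀ σ : ℝ, 0 ≤ σ → σ < 1 → c₀ * σ * q ≤ D := by
      intro σ h0 h1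
      have hs := hsconv (x s) z (hmin s).1 hz σ h0 h1.le
      set B := ENNReal.ofReal σ * R (x s) + ENNReal.ofReal (1 - σ) * R z with hB
      have hBne : B ≠ ⊤ := by
        rw [hB]
        exact ENNReal.add_ne_top.2 ⟨ENNReal.mul_ne_top ENNReal.ofReal_ne_top (hmin s).1,
          ENNReal.mul_ne_top ENNReal.ofReal_ne_top hz⟩
      have hwne : R (σ • x s + (1 - σ) • z) ≠ ⊤ :=
        ne_top_of_le_ne_top hBne (le_trans le_self_add hs)
      have hqnn : 0 ≤ c₀ * σ * (1 - σ) * ‖x s - z‖ ^ 2 :=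
        mul_nonneg (mul_nonneg (mul_nonneg hc₀.le h0) (by linarith)) (sq_nonneg _)
      have hsR : (R (σ • x s + (1 - σ) • z)).toReal + c₀ * σ * (1 - σ) * q
          ≤ σ * (R (x s)).toReal + (1 - σ) * (R z).toReal := by
        have htR := ENNReal.toReal_mono hBne hs
        rw [ENNReal.toReal_add hwne ENNReal.ofReal_ne_top,
          ENNReal.toReal_ofReal hqnn] at htR
        rw [hB, ENNReal.toReal_add (ENNReal.mul_ne_top ENNReal.ofReal_ne_top (hmin s).1)
          (ENNReal.mul_ne_top ENNReal.ofReal_ne_top hz), ENNReal.toReal_mul,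
          ENNReal.toReal_mul, ENNReal.toReal_ofReal h0,
          ENNReal.toReal_ofReal (by linarith : (0:ℝ) ≤ 1 - σ)] at htR
        rw [hq]
        linarith
      have hAw : ⟪lam s, A (σ • x s + (1 - σ) • z)⟫
          = σ * ⟪lam s, A (x s)⟫ + (1 - σ) * ⟪lam s, A z⟫ := by
        rw [map_add, map_smul, map_smul, inner_add_right, real_inner_smul_right,
          real_inner_smul_right]
      have hmw := hminR s (σ • x s + (1 - σ) • z) hwne
      rw [hAw] at hmw
      have hfac : 0 ≤ (1 - σ) * (D - c₀ * σ * q) := by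
        rw [hD]
        nlinarith [hsR, hmw]
      nlinarith [hfac]
    suffices hfin : c₀ * q ≤ D by rw [hD, hq] at hfin; linarith
    by_contra hcon
    push_neg at hcon
    have hDlt : D < c₀ * q := hcon
    have hq0 : 0 < q := by
      rcases lt_or_ge 0 q with h | h
      · exact h
      · have hqnn : 0 ≤ q := by rw [hq]; positivity
        have hq00 : q = 0 := le_antisymm h hqnn
        rw [hq00] at hDlt
        simp at hDlt
        linarith
    have hσ0 : 0 ≤ (D / (c₀ * q) + 1) / 2 := by
      have : 0 ≤ D / (c₀ * q) := div_nonneg hD0 (by positivity)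
      linarith
    have hσ1 : (D / (c₀ * q) + 1) / 2 < 1 := by
      have : D / (c₀ * q) < 1 := (div_lt_one (by positivity)).2 hDlt
      linarith
    have hcl := claim _ hσ0 hσ1
    have hcq : c₀ * ((D / (c₀ * q) + 1) / 2) * q = (D + c₀ * q) / 2 := by
      field_simp
    rw [hcq] at hcl
    linarith
  -- notation
  obtain ⟨g, hgEq⟩ : ∃ g : ℕ → Y, ∀ s : ℕ, g s = A (x s) - b := ⟨_, fun _ => rfl⟩
  obtain ⟨dd, hddEq⟩ : ∃ dd : Y → ℝ, ∀ μ : Y, dd μ = conjDualPair R A μ - ⟪μ, b⟫ :=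
    ⟨_, fun _ => rfl⟩
  have hupd' : ∀ s : ℕ, lam s - lam (s + 1) = γ • g s := by
    intro s
    rw [hupd s, hgEq]
    abel
  -- cocoercivity between iterates
  have hAle : ∀ s r : ℕ, ‖A (x s) - A (x r)‖ ^ 2 ≤ ‖A‖ ^ 2 * ‖x s - x r‖ ^ 2 := by
    intro s r
    rw [← map_sub]
    calc ‖A (x s - x r)‖ ^ 2 ≤ (‖A‖ * ‖x s - x r‖) ^ 2 := by
          apply pow_le_pow_left₀ (norm_nonneg _) (A.le_opNorm _)
      _ = ‖A‖ ^ 2 * ‖x s - x r‖ ^ 2 := by ring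
  have hmono2 : ∀ s r : ℕ, 2 * c₀ * ‖x s - x r‖ ^ 2 ≤ ⟪lam s - lam r, A (x s) - A (x r)⟫ := by
    intro s r
    have h1 := hQG s (x r) (hmin r).1
    have h2 := hQG r (x s) (hmin s).1
    have hnorm : ‖x r - x s‖ = ‖x s - x r‖ := norm_sub_rev _ _
    rw [hnorm] at h2
    have hexp : ⟪lam s - lam r, A (x s) - A (x r)⟫
        = ⟪lam s, A (x s)⟫ - ⟪lam s, A (x r)⟫ - ⟪lam r, A (x s)⟫ + ⟪lam r, A (x r)⟫ := by
      rw [inner_sub_left, inner_sub_right, inner_sub_right]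
      ring
    rw [hexp]
    linarith
  have hcoco : ∀ s r : ℕ, (1 / L) * ‖A (x s) - A (x r)‖ ^ 2
      ≤ ⟪lam s - lam r, A (x s) - A (x r)⟫ := by
    intro s r
    have h1 := hAle s r
    have h2 := hmono2 s r
    have hLA : (1 / L) * ‖A‖ ^ 2 = 2 * c₀ := by
      rw [hL]; field_simp
    calc (1 / L) * ‖A (x s) - A (x r)‖ ^ 2 ≤ (1 / L) * (‖A‖ ^ 2 * ‖x s - x r‖ ^ 2) :=
          mul_le_mul_of_nonneg_left h1 (by positivity)
      _ = 2 * c₀ * ‖x s - x r‖ ^ 2 := by rw [← mul_assoc, hLA]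
      _ ≤ _ := h2
  -- subgradient inequality, general point
  have hdsub : ∀ (μ : Y) (s : ℕ), dd (lam s) + ⟪μ - lam s, g s⟫ ≤ dd μ := by
    intro μ s
    have h1 := hFge μ s
    have h2 := hFeq s
    have h3 : ⟪μ - lam s, g s⟫
        = ⟪μ, A (x s)⟫ - ⟪lam s, A (x s)⟫ - ⟪μ, b⟫ + ⟪lam s, b⟫ := by
      rw [hgEq, inner_sub_left, inner_sub_right, inner_sub_right]
      ring
    rw [h3, hddEq, hddEq, h2]
    linarith
  -- strengthened subgradient inequality between iterates
  have hdsubQ : ∀ s r : ℕ, dd (lam s) + ⟪lam r - lam s, g s⟫ + (1 / (2 * L)) * ‖g r - g s‖ ^ 2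
      ≤ dd (lam r) := by
    intro s r
    have hQ := hQG r (x s) (hmin s).1
    have hgg : g r - g s = A (x r) - A (x s) := by rw [hgEq, hgEq]; abel
    have hqle : (1 / (2 * L)) * ‖A (x r) - A (x s)‖ ^ 2 ≤ c₀ * ‖x r - x s‖ ^ 2 := by
      have h1 := hAle r s
      have hLA : (1 / (2 * L)) * ‖A‖ ^ 2 = c₀ := by rw [hL]; field_simp
      calc (1 / (2 * L)) * ‖A (x r) - A (x s)‖ ^ 2
          ≤ (1 / (2 * L)) * (‖A‖ ^ 2 * ‖x r - x s‖ ^ 2) :=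
            mul_le_mul_of_nonneg_left h1 (by positivity)
        _ = c₀ * ‖x r - x s‖ ^ 2 := by rw [← mul_assoc, hLA]
    have hexp : ⟪lam r - lam s, g s⟫
        = ⟪lam r, A (x s)⟫ - ⟪lam s, A (x s)⟫ - ⟪lam r, b⟫ + ⟪lam s, b⟫ := by
      rw [hgEq, inner_sub_left, inner_sub_right, inner_sub_right]
      ring
    rw [hgg, hexp, hddEq, hddEq, hFeq s, hFeq r]
    linarith
  -- the descent constant
  obtain ⟨c, hc⟩ : ∃ c : ℝ, c = γ * (1 - L * γ / 2) := ⟨_, rfl⟩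
  have hcpos : γ / 2 ≤ c := by rw [hc]; nlinarith
  have hcnn : 0 ≤ c := by linarith
  -- descent property
  have hdesc : ∀ s : ℕ, dd (lam (s + 1)) + c * ‖g s‖ ^ 2 ≤ dd (lam s) := by
    intro s
    have h := hdsubQ (s + 1) s
    rw [hupd' s, real_inner_smul_left] at h
    have h3 : ⟪g s, g (s + 1) - g s⟫ = ⟪g s, g (s + 1)⟫ - ‖g s‖ ^ 2 := by
      rw [← real_inner_self_eq_norm_sq]
      exact inner_sub_right _ _ _
    have hip : -(‖g s‖ * ‖g s - g (s + 1)‖) ≤ ⟪g s, g (s + 1) - g s⟫ := by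
      have hcs := abs_real_inner_le_norm (g s) (g (s + 1) - g s)
      have hne : ‖g (s + 1) - g s‖ = ‖g s - g (s + 1)‖ := norm_sub_rev _ _
      rw [hne] at hcs
      have := neg_abs_le ⟪g s, g (s + 1) - g s⟫
      linarith
    have hamgm : γ * (‖g s‖ * ‖g s - g (s + 1)‖)
        ≤ L * γ ^ 2 / 2 * ‖g s‖ ^ 2 + 1 / (2 * L) * ‖g s - g (s + 1)‖ ^ 2 := by
      rw [← sub_nonneg]
      have hkey : (L * γ ^ 2 / 2 * ‖g s‖ ^ 2 + 1 / (2 * L) * ‖g s - g (s + 1)‖ ^ 2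
            - γ * (‖g s‖ * ‖g s - g (s + 1)‖)) * (2 * L)
          = (L * γ * ‖g s‖ - ‖g s - g (s + 1)‖) ^ 2 := by
        field_simp
        ring
      have hsq := sq_nonneg (L * γ * ‖g s‖ - ‖g s - g (s + 1)‖)
      rw [← hkey] at hsq
      exact nonneg_of_mul_nonneg_left hsq (by positivity)
    have hcval : c * ‖g s‖ ^ 2 = γ * ‖g s‖ ^ 2 - L * γ ^ 2 / 2 * ‖g s‖ ^ 2 := by rw [hc]; ring
    have hgam : γ * (-(‖g s‖ * ‖g s - g (s + 1)‖)) ≤ γ * ⟪g s, g (s + 1) - g s⟫ :=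
      mul_le_mul_of_nonneg_left hip hγ0.le
    have h3' : γ * ⟪g s, g (s + 1)⟫ = γ * ‖g s‖ ^ 2 + γ * ⟪g s, g (s + 1) - g s⟫ := by
      rw [h3]; ring
    nlinarith [h, hgam, hamgm, hcval, h3']
  -- the gradient norms are non-increasing
  have hgmono : ∀ s : ℕ, ‖g (s + 1)‖ ^ 2 ≤ ‖g s‖ ^ 2 := by
    intro s
    have hco := hcoco (s + 1) s
    have h1 : lam (s + 1) - lam s = (-γ) • g s := by
      rw [neg_smul, ← hupd' s]
      abel
    rw [h1, real_inner_smul_left] at hco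
    obtain ⟨Δ, hΔ⟩ : ∃ Δ : Y, Δ = A (x (s + 1)) - A (x s) := ⟨_, rfl⟩
    rw [← hΔ] at hco
    have hgd : g (s + 1) = g s + Δ := by rw [hgEq, hgEq, hΔ]; abel
    have hnd : (0:ℝ) ≤ ‖Δ‖ ^ 2 := sq_nonneg _
    have h2 : L * γ * ⟪g s, Δ⟫ ≤ -(‖Δ‖ ^ 2) := by
      have h2' := mul_le_mul_of_nonneg_left hco hL0.le
      have h2'' : L * (1 / L * ‖Δ‖ ^ 2) = ‖Δ‖ ^ 2 := by field_simp
      nlinarith [h2', h2'']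
    have h3 : (2 * ⟪g s, Δ⟫ + ‖Δ‖ ^ 2) * (γ * L) ≤ 0 := by
      nlinarith [h2, mul_nonneg (by linarith : (0:ℝ) ≤ 1 - γ * L) hnd]
    have h4 : 2 * ⟪g s, Δ⟫ + ‖Δ‖ ^ 2 ≤ 0 := by
      have := le_of_mul_le_mul_right (by linarith : (2 * ⟪g s, Δ⟫ + ‖Δ‖ ^ 2) * (γ * L) ≤ 0 * (γ * L))
        (by positivity : (0:ℝ) < γ * L)
      linarith
    rw [hgd, norm_add_sq_real]
    linarith
  -- one-step combined estimate
  have hstep : ∀ (s : ℕ) (μ : Y), dd (lam (s + 1)) - dd μ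
      ≤ (1 / (2 * γ)) * (‖μ - lam s‖ ^ 2 - ‖μ - lam (s + 1)‖ ^ 2) + (γ / 2 - c) * ‖g s‖ ^ 2 := by
    intro s μ
    have hsb := hdsub μ s
    have hidv : μ - lam (s + 1) = (μ - lam s) + γ • g s := by
      have := hupd' s
      rw [show lam (s + 1) = lam s - γ • g s by rw [← this]; abel]
      abel
    have hid : ‖μ - lam (s + 1)‖ ^ 2
        = ‖μ - lam s‖ ^ 2 + 2 * (γ * ⟪μ - lam s, g s⟫) + γ ^ 2 * ‖g s‖ ^ 2 := by
      rw [hidv, norm_add_sq_real, real_inner_smul_right, norm_smul]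
      rw [Real.norm_eq_abs, abs_of_pos hγ0]
      ring
    have hfrac : (1 / (2 * γ)) * (‖μ - lam s‖ ^ 2 - ‖μ - lam (s + 1)‖ ^ 2)
        = -⟪μ - lam s, g s⟫ - γ / 2 * ‖g s‖ ^ 2 := by
      rw [hid]
      field_simp
      ring
    have hde := hdesc s
    rw [hfrac]
    linarith
  -- main induction
  have key : ∀ (t : ℕ) (μ : Y),
      (1 / (2 * γ)) * (‖μ - lam (t + 1)‖ ^ 2 - ‖μ - lam 0‖ ^ 2)
        + (c - γ / 2) * ((t : ℝ) + 1) * ‖g t‖ ^ 2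
        + (c / 2) * (t : ℝ) * ((t : ℝ) + 1) * ‖g t‖ ^ 2
      ≤ ((t : ℝ) + 1) * (dd μ - dd (lam (t + 1))) := by
    intro t
    induction t with
    | zero =>
      intro μ
      have := hstep 0 μ
      push_cast
      linarith
    | succ t ih =>
      intro μ
      have h1 := ih μ
      have h2 := hstep (t + 1) μ
      have h3 := hdesc (t + 1)
      have hq := hgmono t
      have ht0 : (0:ℝ) ≤ (t : ℝ) := Nat.cast_nonneg t
      have hcg : 0 ≤ c - γ / 2 := by linarith
      have hp1 : (c - γ / 2) * ((t : ℝ) + 1) * ‖g (t + 1)‖ ^ 2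
          ≤ (c - γ / 2) * ((t : ℝ) + 1) * ‖g t‖ ^ 2 :=
        mul_le_mul_of_nonneg_left hq (mul_nonneg hcg (by linarith))
      have hp2 : (c / 2) * (t : ℝ) * ((t : ℝ) + 1) * ‖g (t + 1)‖ ^ 2
          ≤ (c / 2) * (t : ℝ) * ((t : ℝ) + 1) * ‖g t‖ ^ 2 :=
        mul_le_mul_of_nonneg_left hq
          (mul_nonneg (mul_nonneg (by linarith) ht0) (by linarith))
      have hp3 : ((t : ℝ) + 1) * (dd (lam (t + 1 + 1)) + c * ‖g (t + 1)‖ ^ 2)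
          ≤ ((t : ℝ) + 1) * dd (lam (t + 1)) :=
        mul_le_mul_of_nonneg_left h3 (by linarith)
      push_cast
      push_cast at h1
      nlinarith [h1, h2, hp1, hp2, hp3]
  -- conclusion
  intro lam' t
  have hkey := key t lam'
  rw [hlam0, sub_zero] at hkey
  rw [ge_iff_le, show A (x t) - b = g t from (hgEq t).symm,
    show conjDualPair R A lam' - ⟪lam', b⟫ = dd lam' from (hddEq lam').symm,
    show conjDualPair R A (lam (t + 1)) - ⟪lam (t + 1), b⟫ = dd (lam (t + 1)) from
      (hddEq (lam (t + 1))).symm]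
  have hT : (0:ℝ) < (t : ℝ) + 1 := by positivity
  rw [← mul_le_mul_iff_right₀ hT]
  have hexpand : ((t : ℝ) + 1) * ((1 / (2 * γ * ((t : ℝ) + 1))) * (‖lam' - lam (t + 1)‖ ^ 2 - ‖lam'‖ ^ 2)
      + ((1 / 2 - L * γ / 4) * (t : ℝ) + (1 / 2 - L * γ / 2)) * γ * ‖g t‖ ^ 2)
      = (1 / (2 * γ)) * (‖lam' - lam (t + 1)‖ ^ 2 - ‖lam'‖ ^ 2)
        + (c - γ / 2) * ((t : ℝ) + 1) * ‖g t‖ ^ 2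
        + (c / 2) * (t : ℝ) * ((t : ℝ) + 1) * ‖g t‖ ^ 2 := by
    rw [hc]
    field_simp
    ring
  rw [hexpand]
  linarith
end

section
/- Under the standing assumptions (X Banach, Y Hilbert, A : X → Y bounded linear, R proper, lower semicontinuous, c₀-strongly convex, Ax = y solvable in dom(R), y₁, y₂, … i.i.d. Y-valued with E[y₁] = y and 0 < σ² := E[‖y₁−y‖²] < ∞, ȳ⁽ⁿ⁾ := (1/n)∑_{i=1}^n yᵢ), let {x_t, λ_t} be the dual gradient iterates with exact data y and {x_t⁽ⁿ⁾, λ_t⁽ⁿ⁾} the iterates with data ȳ⁽ⁿ⁾, both started from λ₀ = λ₀⁽ⁿ⁾ = 0 with the same step size γ > 0. Then for every fixed integer t ≥ 0, E[‖x_t⁽ⁿ⁾ − x_t‖²] → 0 and E[‖λ_t⁽ⁿ⁾ − λ_t‖²] → 0 as n → ∞. -/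
/-!
For fixed `t`, the iterates are deterministic functions of the data that are Lipschitz in it.
By strong convexity the primal map `λ ↦ argmin (R - ⟪λ, A ·⟫)` is `‖A‖ / c₀`-Lipschitz, so one
dual step amplifies a perturbation of the data by at most `1 + |γ| ‖A‖² / c₀`. Hence
`‖x_t⁽ⁿ⁾ - x_t‖` and `‖λ_t⁽ⁿ⁾ - λ_t‖` are bounded by a constant times `‖ȳ⁽ⁿ⁾ - y‖`, whose mean
square tends to `0` by the `L²` law of large numbers.
-/

open MeasureTheory ProbabilityTheory Filter Topology
open scoped RealInnerProductSpace ENNReal BigOperators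

/-- The sample mean `ȳ⁽ⁿ⁾ = (1/n) ∑_{i<n} yᵢ` of the first `n` measurements. -/
noncomputable def sampleMean {Y Ω : Type*} [NormedAddCommGroup Y] [NormedSpace ℝ Y]
    (ys : ℕ → Ω → Y) (n : ℕ) (ω : Ω) : Y :=
  (n : ℝ)⁻¹ • ∑ i ∈ Finset.range n, ys i ω

section LagrangianMin

variable {X Y : Type*} [NormedAddCommGroup X] [NormedSpace ℝ X]
  [NormedAddCommGroup Y] [InnerProductSpace ℝ Y]

/-- Strong convexity on the effective domain, with the modulus convention `c s (1 - s) ‖u - v‖²`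
(Mathlib's `StrongConvexOn` with `m = 2 c`). -/
def ExtStrongConvex (c : ℝ) (R : X → ℝ≥0∞) : Prop :=
  ∀ u v : X, R u ≠ ⊤ → R v ≠ ⊤ → ∀ s : ℝ, 0 ≤ s → s ≤ 1 →
    R (s • u + (1 - s) • v) + ENNReal.ofReal (c * s * (1 - s) * ‖u - v‖ ^ 2)
      ≤ ENNReal.ofReal s * R u + ENNReal.ofReal (1 - s) * R v

/-- `u` minimises `R - ⟪l, A ·⟫`; the `ofReal` form avoids subtracting from `⊤`. -/
def IsLagrangianMin (A : X →L[ℝ] Y) (R : X → ℝ≥0∞) (l : Y) (u : X) : Prop :=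
  R u ≠ ⊤ ∧ ∀ z : X, ENNReal.ofReal ((R u).toReal - ⟪l, A u⟫ + ⟪l, A z⟫) ≤ R z

theorem ExtStrongConvex.ne_top_and_toReal_le {c : ℝ} {R : X → ℝ≥0∞} (hR : ExtStrongConvex c R)
    {u v : X} (hu : R u ≠ ⊤) (hv : R v ≠ ⊤) {s : ℝ} (hs₀ : 0 ≤ s) (hs₁ : s ≤ 1) :
    R (s • u + (1 - s) • v) ≠ ⊤ ∧
      (R (s • u + (1 - s) • v)).toReal + c * s * (1 - s) * ‖u - v‖ ^ 2
        ≤ s * (R u).toReal + (1 - s) * (R v).toReal := by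
  have h := hR u v hu hv s hs₀ hs₁
  have hrhs : ENNReal.ofReal s * R u + ENNReal.ofReal (1 - s) * R v ≠ ⊤ := by
    finiteness
  have hw : R (s • u + (1 - s) • v) ≠ ⊤ := ne_top_of_le_ne_top hrhs (le_self_add.trans h)
  refine ⟨hw, ?_⟩
  have h' := ENNReal.toReal_mono hrhs h
  rw [ENNReal.toReal_add hw ENNReal.ofReal_ne_top,
    ENNReal.toReal_add (by finiteness) (by finiteness),
    ENNReal.toReal_mul, ENNReal.toReal_mul, ENNReal.toReal_ofReal hs₀,
    ENNReal.toReal_ofReal (sub_nonneg.2 hs₁), ENNReal.toReal_ofReal'] at h'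
  linarith [le_max_left (c * s * (1 - s) * ‖u - v‖ ^ 2) 0]

theorem IsLagrangianMin.toReal_le {A : X →L[ℝ] Y} {R : X → ℝ≥0∞} {l : Y} {u : X}
    (h : IsLagrangianMin A R l u) {z : X} (hz : R z ≠ ⊤) :
    (R u).toReal - ⟪l, A u⟫ + ⟪l, A z⟫ ≤ (R z).toReal :=
  (ENNReal.ofReal_le_iff_le_toReal hz).1 (h.2 z)

/-- Test both minimality conditions at the midpoint of `u` and `v`. -/
theorem IsLagrangianMin.mul_norm_sub_sq_le_inner {A : X →L[ℝ] Y} {R : X → ℝ≥0∞} {c : ℝ}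
    (hR : ExtStrongConvex c R) {l l' : Y} {u v : X} (hu : IsLagrangianMin A R l u)
    (hv : IsLagrangianMin A R l' v) :
    c * ‖u - v‖ ^ 2 ≤ ⟪l - l', A u - A v⟫ := by
  obtain ⟨hm, hconv⟩ :=
    hR.ne_top_and_toReal_le hu.1 hv.1 (s := 1 / 2) (by norm_num) (by norm_num)
  have hAm : ∀ k : Y, ⟪k, A ((1 / 2 : ℝ) • u + (1 - 1 / 2 : ℝ) • v)⟫
      = 1 / 2 * ⟪k, A u⟫ + 1 / 2 * ⟪k, A v⟫ := fun k => by
    simp only [map_add, map_smul, inner_add_right, real_inner_smul_right]; norm_num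
  have h₁ := hu.toReal_le hm
  have h₂ := hv.toReal_le hm
  rw [hAm] at h₁ h₂
  simp only [inner_sub_left, inner_sub_right]
  linarith

theorem IsLagrangianMin.norm_sub_le {A : X →L[ℝ] Y} {R : X → ℝ≥0∞} {c : ℝ} (hc : 0 < c)
    (hR : ExtStrongConvex c R) {l l' : Y} {u v : X} (hu : IsLagrangianMin A R l u)
    (hv : IsLagrangianMin A R l' v) :
    ‖u - v‖ ≤ ‖A‖ / c * ‖l - l'‖ := by
  have hmono : c * ‖u - v‖ ^ 2 ≤ ‖A‖ * ‖l - l'‖ * ‖u - v‖ :=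
    calc c * ‖u - v‖ ^ 2 ≤ ⟪l - l', A u - A v⟫ := hu.mul_norm_sub_sq_le_inner hR hv
      _ ≤ ‖l - l'‖ * ‖A (u - v)‖ := map_sub A u v ▸ real_inner_le_norm _ _
      _ ≤ ‖l - l'‖ * (‖A‖ * ‖u - v‖) := by gcongr; exact A.le_opNorm _
      _ = ‖A‖ * ‖l - l'‖ * ‖u - v‖ := by ring
  rcases (norm_nonneg (u - v)).eq_or_lt with h0 | hpos
  · rw [← h0]; positivity
  · rw [div_mul_eq_mul_div, le_div_iff₀ hc]
    nlinarith

structure IsDualGradientSeq (A : X →L[ℝ] Y) (R : X → ℝ≥0∞) (γ : ℝ) (b : Y) (x : ℕ → X)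
    (lam : ℕ → Y) : Prop where
  lam_zero : lam 0 = 0
  isLagrangianMin : ∀ t, IsLagrangianMin A R (lam t) (x t)
  lam_succ : ∀ t, lam (t + 1) = lam t - γ • (A (x t) - b)

namespace IsDualGradientSeq

variable {A : X →L[ℝ] Y} {R : X → ℝ≥0∞} {c γ : ℝ} {b b' : Y} {x x' : ℕ → X} {lam lam' : ℕ → Y}

theorem norm_sub_x_le (hc : 0 < c) (hR : ExtStrongConvex c R)
    (h' : IsDualGradientSeq A R γ b' x' lam') (h : IsDualGradientSeq A R γ b x lam) (t : ℕ) :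
    ‖x' t - x t‖ ≤ ‖A‖ / c * ‖lam' t - lam t‖ :=
  (h'.isLagrangianMin t).norm_sub_le hc hR (h.isLagrangianMin t)

theorem norm_sub_lam_succ_le (hc : 0 < c) (hR : ExtStrongConvex c R)
    (h' : IsDualGradientSeq A R γ b' x' lam') (h : IsDualGradientSeq A R γ b x lam) (t : ℕ) :
    ‖lam' (t + 1) - lam (t + 1)‖
      ≤ (1 + ‖γ‖ * ‖A‖ ^ 2 / c) * ‖lam' t - lam t‖ + ‖γ‖ * ‖b' - b‖ := by
  have hx := h'.norm_sub_x_le hc hR h t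
  calc ‖lam' (t + 1) - lam (t + 1)‖
      = ‖(lam' t - lam t) - γ • A (x' t - x t) + γ • (b' - b)‖ := by
        rw [h'.lam_succ, h.lam_succ, map_sub]; congr 1; module
    _ ≤ ‖lam' t - lam t‖ + ‖γ‖ * (‖A‖ * ‖x' t - x t‖) + ‖γ‖ * ‖b' - b‖ := by
        grw [norm_add_le, norm_sub_le, norm_smul, norm_smul, A.le_opNorm]
    _ ≤ ‖lam' t - lam t‖ + ‖γ‖ * (‖A‖ * (‖A‖ / c * ‖lam' t - lam t‖)) + ‖γ‖ * ‖b' - b‖ := by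
        gcongr
    _ = (1 + ‖γ‖ * ‖A‖ ^ 2 / c) * ‖lam' t - lam t‖ + ‖γ‖ * ‖b' - b‖ := by ring

/-- Unrolls `norm_sub_lam_succ_le`, bounding `∑_{s<t} Lˢ` by `t Lᵗ`. -/
theorem norm_sub_lam_le (hc : 0 < c) (hR : ExtStrongConvex c R)
    (h' : IsDualGradientSeq A R γ b' x' lam') (h : IsDualGradientSeq A R γ b x lam) (t : ℕ) :
    ‖lam' t - lam t‖ ≤ t * ‖γ‖ * (1 + ‖γ‖ * ‖A‖ ^ 2 / c) ^ t * ‖b' - b‖ := by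
  set L := 1 + ‖γ‖ * ‖A‖ ^ 2 / c
  have hL : 1 ≤ L := le_add_of_nonneg_right (by positivity)
  induction t with
  | zero => simp [h'.lam_zero, h.lam_zero]
  | succ t ih =>
    calc ‖lam' (t + 1) - lam (t + 1)‖ ≤ L * ‖lam' t - lam t‖ + ‖γ‖ * ‖b' - b‖ :=
          h'.norm_sub_lam_succ_le hc hR h t
      _ ≤ L * (t * ‖γ‖ * L ^ t * ‖b' - b‖) + L ^ (t + 1) * (‖γ‖ * ‖b' - b‖) := by
          gcongr ?_ + ?_
          · gcongr
          · exact le_mul_of_one_le_left (by positivity) (one_le_pow₀ hL)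
      _ = (t + 1 : ℕ) * ‖γ‖ * L ^ (t + 1) * ‖b' - b‖ := by push_cast; ring

end IsDualGradientSeq

end LagrangianMin

section MeanSquare

variable {Ω E : Type*} [MeasurableSpace Ω] {μ : Measure Ω} [NormedAddCommGroup E]

theorem memLp_two_of_integrable_sq_norm_sub [IsFiniteMeasure μ] {f : Ω → E} {c : E}
    (hf : AEStronglyMeasurable f μ) (h : Integrable (fun ω => ‖f ω - c‖ ^ 2) μ) :
    MemLp f 2 μ := by
  have hsub : MemLp (fun ω => f ω - c) 2 μ :=
    (memLp_two_iff_integrable_sq_norm (hf.sub aestronglyMeasurable_const)).2 h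
  convert hsub.add (memLp_const c) using 1
  ext ω
  simp

theorem integral_norm_sq_eq_toReal_eLpNorm_sq {f : Ω → E} (hf : MemLp f 2 μ) :
    ∫ ω, ‖f ω‖ ^ 2 ∂μ = (eLpNorm f 2 μ).toReal ^ 2 := by
  have hI : 0 ≤ ∫ ω, ‖f ω‖ ^ (2 : ℝ) ∂μ := integral_nonneg fun ω => by positivity
  rw [hf.eLpNorm_eq_integral_rpow_norm two_ne_zero ENNReal.ofNat_ne_top, ENNReal.toReal_ofNat,
    ENNReal.toReal_ofReal (by positivity), ← Real.rpow_natCast, ← Real.rpow_mul hI]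
  norm_num

theorem tendsto_integral_sq_of_norm_le_mul {F : ℕ → Ω → E} {g : ℕ → Ω → ℝ} (C : ℝ)
    (hle : ∀ n ω, ‖F n ω‖ ≤ C * g n ω) (hg : ∀ n, Integrable (fun ω => g n ω ^ 2) μ)
    (hlim : Tendsto (fun n => ∫ ω, g n ω ^ 2 ∂μ) atTop (𝓝 0)) :
    Tendsto (fun n => ∫ ω, ‖F n ω‖ ^ 2 ∂μ) atTop (𝓝 0) := by
  have hbound : ∀ n, ∫ ω, ‖F n ω‖ ^ 2 ∂μ ≤ C ^ 2 * ∫ ω, g n ω ^ 2 ∂μ := fun n => by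
    rw [← integral_const_mul]
    refine integral_mono_of_nonneg (.of_forall fun ω => by positivity) ((hg n).const_mul _)
      (.of_forall fun ω => ?_)
    calc ‖F n ω‖ ^ 2 ≤ (C * g n ω) ^ 2 := pow_le_pow_left₀ (norm_nonneg _) (hle n ω) 2
      _ = C ^ 2 * g n ω ^ 2 := by ring
  refine squeeze_zero (fun n => integral_nonneg fun ω => by positivity) hbound ?_
  simpa using hlim.const_mul (C ^ 2)

end MeanSquare

section SampleMean

variable {Ω Y : Type*} [MeasurableSpace Ω] {μ : Measure Ω} [NormedAddCommGroup Y]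
  [NormedSpace ℝ Y] {ys : ℕ → Ω → Y}

theorem memLp_sampleMean {p : ℝ≥0∞} (h : ∀ i, MemLp (ys i) p μ) (n : ℕ) :
    MemLp (sampleMean ys n) p μ := by
  convert (memLp_finsetSum' (Finset.range n) fun i _ => h i).const_smul (n : ℝ)⁻¹ using 1
  ext ω
  simp [sampleMean]

theorem tendsto_integral_norm_sampleMean_sub_sq [CompleteSpace Y] [MeasurableSpace Y]
    [BorelSpace Y] [IsFiniteMeasure μ] (hmem : MemLp (ys 0) 2 μ)
    (hindep : Pairwise fun i j => IndepFun (ys i) (ys j) μ)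
    (hident : ∀ i, IdentDistrib (ys i) (ys 0) μ μ) :
    Tendsto (fun n => ∫ ω, ‖sampleMean ys n ω - μ[ys 0]‖ ^ 2 ∂μ) atTop (𝓝 0) := by
  have hmem_n : ∀ n, MemLp (fun ω => sampleMean ys n ω - μ[ys 0]) 2 μ := fun n =>
    (memLp_sampleMean (fun i => (hident i).memLp_iff.2 hmem) n).sub (memLp_const _)
  simp_rw [fun n => integral_norm_sq_eq_toReal_eLpNorm_sq (hmem_n n)]
  have hLp := strong_law_Lp one_le_two ENNReal.ofNat_ne_top ys hmem hindep hident
  simpa [sampleMean] using ((ENNReal.tendsto_toReal ENNReal.zero_ne_top).comp hLp).pow 2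

end SampleMean

theorem dual_gradient_iterates_converge_to_exact_general
    {X Y : Type*} [NormedAddCommGroup X] [NormedSpace ℝ X]
    [NormedAddCommGroup Y] [InnerProductSpace ℝ Y] [CompleteSpace Y]
    [MeasurableSpace Y] [BorelSpace Y]
    {Ω : Type*} [MeasurableSpace Ω] (μ : Measure Ω) [IsProbabilityMeasure μ]
    (A : X →L[ℝ] Y) (R : X → ℝ≥0∞) (c₀ : ℝ) (hc₀ : 0 < c₀)
    (hsconv : ∀ u v : X, R u ≠ ⊤ → R v ≠ ⊤ → ∀ s : ℝ, 0 ≤ s → s ≤ 1 →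
      R (s • u + (1 - s) • v) + ENNReal.ofReal (c₀ * s * (1 - s) * ‖u - v‖ ^ 2)
        ≤ ENNReal.ofReal s * R u + ENNReal.ofReal (1 - s) * R v)
    (y : Y)
    -- the i.i.d. data
    (ys : ℕ → Ω → Y)
    (hindep : iIndepFun ys μ)
    (hident : ∀ i, IdentDistrib (ys i) (ys 0) μ μ)
    (hint1 : Integrable (ys 0) μ)
    (hmean : ∫ ω, ys 0 ω ∂μ = y)
    (hint2 : Integrable (fun ω => ‖ys 0 ω - y‖ ^ 2) μ)
    -- the step size
    (γ : ℝ)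
    -- the dual gradient iterates with exact data y
    (x : ℕ → X) (lam : ℕ → Y)
    (hlam0 : lam 0 = 0)
    (hmin : ∀ t : ℕ, R (x t) ≠ ⊤ ∧ ∀ z : X,
      ENNReal.ofReal ((R (x t)).toReal - ⟪lam t, A (x t)⟫ + ⟪lam t, A z⟫) ≤ R z)
    (hupd : ∀ t : ℕ, lam (t + 1) = lam t - γ • (A (x t) - y))
    -- the dual gradient iterates with averaged data ȳ⁽ⁿ⁾
    (xs : ℕ → ℕ → Ω → X) (lams : ℕ → ℕ → Ω → Y)
    (hlams0 : ∀ n ω, lams n 0 ω = 0)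
    (hmins : ∀ n t ω, R (xs n t ω) ≠ ⊤ ∧ ∀ z : X,
      ENNReal.ofReal ((R (xs n t ω)).toReal - ⟪lams n t ω, A (xs n t ω)⟫
        + ⟪lams n t ω, A z⟫) ≤ R z)
    (hupds : ∀ n t ω, lams n (t + 1) ω
      = lams n t ω - γ • (A (xs n t ω) - sampleMean ys n ω)) :
    ∀ t : ℕ,
      Tendsto (fun n : ℕ => ∫ ω, ‖xs n t ω - x t‖ ^ 2 ∂μ) atTop (𝓝 0)
        ∧ Tendsto (fun n : ℕ => ∫ ω, ‖lams n t ω - lam t‖ ^ 2 ∂μ) atTop (𝓝 0) := by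
  have hY : MemLp (ys 0) 2 μ := memLp_two_of_integrable_sq_norm_sub hint1.1 hint2
  have herr_int : ∀ n, Integrable (fun ω => ‖sampleMean ys n ω - y‖ ^ 2) μ := fun n =>
    ((memLp_sampleMean (fun i => (hident i).memLp_iff.2 hY) n).sub
      (memLp_const y)).integrable_norm_pow two_ne_zero
  have herr : Tendsto (fun n => ∫ ω, ‖sampleMean ys n ω - y‖ ^ 2 ∂μ) atTop (𝓝 0) :=
    hmean ▸ tendsto_integral_norm_sampleMean_sub_sq hY (fun _ _ hij => hindep.indepFun hij) hident
  have hexact : IsDualGradientSeq A R γ y x lam := ⟨hlam0, hmin, hupd⟩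
  have hnoisy : ∀ n ω, IsDualGradientSeq A R γ (sampleMean ys n ω)
      (fun t => xs n t ω) (fun t => lams n t ω) := fun n ω =>
    ⟨hlams0 n ω, fun t => hmins n t ω, fun t => hupds n t ω⟩
  intro t
  set C := t * ‖γ‖ * (1 + ‖γ‖ * ‖A‖ ^ 2 / c₀) ^ t
  have hlam : ∀ n ω, ‖lams n t ω - lam t‖ ≤ C * ‖sampleMean ys n ω - y‖ := fun n ω =>
    (hnoisy n ω).norm_sub_lam_le hc₀ hsconv hexact t
  have hx : ∀ n ω, ‖xs n t ω - x t‖ ≤ ‖A‖ / c₀ * C * ‖sampleMean ys n ω - y‖ := fun n ω => by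
    rw [mul_assoc]
    exact ((hnoisy n ω).norm_sub_x_le hc₀ hsconv hexact t).trans (by gcongr; exact hlam n ω)
  exact ⟨tendsto_integral_sq_of_norm_le_mul _ hx herr_int herr,
    tendsto_integral_sq_of_norm_le_mul _ hlam herr_int herr⟩

/-- Lemma 3.4: for every fixed `t`, the dual gradient iterates `(x_t⁽ⁿ⁾, λ_t⁽ⁿ⁾)` computed
from the averaged data `ȳ⁽ⁿ⁾` converge in mean square, as `n → ∞`, to the iterates
`(x_t, λ_t)` computed from the exact data `y`. -/
theorem dual_gradient_iterates_converge_to_exact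
    {X Y : Type*} [NormedAddCommGroup X] [NormedSpace ℝ X] [CompleteSpace X]
    [NormedAddCommGroup Y] [InnerProductSpace ℝ Y] [CompleteSpace Y]
    [MeasurableSpace Y] [BorelSpace Y]
    {Ω : Type*} [MeasurableSpace Ω] (μ : Measure Ω) [IsProbabilityMeasure μ]
    (A : X →L[ℝ] Y) (R : X → ℝ≥0∞) (c₀ : ℝ) (hc₀ : 0 < c₀)
    (hproper : ∃ u : X, R u ≠ ⊤)
    (hlsc : LowerSemicontinuous R)
    (hsconv : ∀ u v : X, R u ≠ ⊤ → R v ≠ ⊤ → ∀ s : ℝ, 0 ≤ s → s ≤ 1 →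
      R (s • u + (1 - s) • v) + ENNReal.ofReal (c₀ * s * (1 - s) * ‖u - v‖ ^ 2)
        ≤ ENNReal.ofReal s * R u + ENNReal.ofReal (1 - s) * R v)
    (y : Y) (xdag : X) (hxdag_sol : A xdag = y) (hxdag_dom : R xdag ≠ ⊤)
    (hxdag_min : ∀ z : X, A z = y → R xdag ≤ R z)
    -- the i.i.d. data
    (ys : ℕ → Ω → Y) (σ2 : ℝ)
    (hmeas : ∀ i, Measurable (ys i))
    (hindep : iIndepFun ys μ)
    (hident : ∀ i, IdentDistrib (ys i) (ys 0) μ μ)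
    (hint1 : Integrable (ys 0) μ)
    (hmean : ∫ ω, ys 0 ω ∂μ = y)
    (hint2 : Integrable (fun ω => ‖ys 0 ω - y‖ ^ 2) μ)
    (hσ2 : σ2 = ∫ ω, ‖ys 0 ω - y‖ ^ 2 ∂μ) (hσ2pos : 0 < σ2)
    -- the step size
    (γ : ℝ) (hγ0 : 0 < γ)
    -- the dual gradient iterates with exact data y
    (x : ℕ → X) (lam : ℕ → Y)
    (hlam0 : lam 0 = 0)
    (hmin : ∀ t : ℕ, R (x t) ≠ ⊤ ∧ ∀ z : X,
      ENNReal.ofReal ((R (x t)).toReal - ⟪lam t, A (x t)⟫ + ⟪lam t, A z⟫) ≤ R z)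
    (hupd : ∀ t : ℕ, lam (t + 1) = lam t - γ • (A (x t) - y))
    -- the dual gradient iterates with averaged data ȳ⁽ⁿ⁾
    (xs : ℕ → ℕ → Ω → X) (lams : ℕ → ℕ → Ω → Y)
    (hlams0 : ∀ n ω, lams n 0 ω = 0)
    (hmins : ∀ n t ω, R (xs n t ω) ≠ ⊤ ∧ ∀ z : X,
      ENNReal.ofReal ((R (xs n t ω)).toReal - ⟪lams n t ω, A (xs n t ω)⟫
        + ⟪lams n t ω, A z⟫) ≤ R z)
    (hupds : ∀ n t ω, lams n (t + 1) ω
      = lams n t ω - γ • (A (xs n t ω) - sampleMean ys n ω)) :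
    ∀ t : ℕ,
      Tendsto (fun n : ℕ => ∫ ω, ‖xs n t ω - x t‖ ^ 2 ∂μ) atTop (𝓝 0)
        ∧ Tendsto (fun n : ℕ => ∫ ω, ‖lams n t ω - lam t‖ ^ 2 ∂μ) atTop (𝓝 0) :=
  dual_gradient_iterates_converge_to_exact_general μ A R c₀ hc₀ hsconv y ys hindep hident hint1
    hmean hint2 γ x lam hlam0 hmin hupd xs lams hlams0 hmins hupds
end

section
/- Under the standing assumptions (X Banach, Y Hilbert, A : X → Y bounded linear, R proper, lower semicontinuous, c₀-strongly convex, Ax = y solvable in dom(R), y₁, y₂, … i.i.d. Y-valued with E[y₁] = y and 0 < σ² := E[‖y₁−y‖²] < ∞, ȳ⁽ⁿ⁾ the sample mean), consider the dual gradient iterates {x_t⁽ⁿ⁾, λ_t⁽ⁿ⁾} with data ȳ⁽ⁿ⁾, λ₀⁽ⁿ⁾ = 0, and step size 0 < γ < 4c₀/‖A‖². Let Δ_t⁽ⁿ⁾ := D_R^{A*λ_t⁽ⁿ⁾}(x†, x_t⁽ⁿ⁾) be the Bregman distance to the unique R-minimizing solution x†. Then for all integers t ≥ 0, E[Δ_{t+1}⁽ⁿ⁾]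 − E[Δ_t⁽ⁿ⁾] ≤ C₁σ²/n with C₁ := c₀γ/(4c₀ − γ‖A‖²). -/
open MeasureTheory ProbabilityTheory Filter Topology
open scoped RealInnerProductSpace ENNReal BigOperators

/-- The Bregman distance `D_R^{A*λ}(u, v) = R(u) - R(v) - ⟨A*λ, u - v⟩` induced by `R`
at `v` in the direction `A*λ`. -/
noncomputable def bregman {X Y : Type*} [NormedAddCommGroup X] [NormedSpace ℝ X]
    [NormedAddCommGroup Y] [InnerProductSpace ℝ Y]
    (R : X → ℝ≥0∞) (A : X →L[ℝ] Y) (lam : Y) (u v : X) : ℝ :=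
  (R u).toReal - (R v).toReal - ⟪lam, A u - A v⟫


/-!
Pathwise, the three-point identity for Bregman distances gives
`Δ_{t+1} - Δ_t = D^{λ_{t+1}}(x_t, x_{t+1}) + γ ⟪A x_t - ȳ, y - A x_t⟫`. Strong convexity bounds
the first term by `γ ‖A‖ ‖A x_t - ȳ‖ ‖x_t - x_{t+1}‖ - c₀ ‖x_t - x_{t+1}‖²`, and maximizing the
resulting quadratic in `‖x_t - x_{t+1}‖` and `‖A x_t - ȳ‖` leaves `C₁ ‖ȳ - y‖²`. In expectation,
`E ‖ȳ - y‖² = σ² / n` because the centred samples are pairwise independent with mean zero.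

The iterates are only given pointwise, so their integrability has to be proved: they are functions
of `λ_t`, through the argmin map `λ ↦ x(λ)`, which is `‖A‖ / (2 c₀)`-Lipschitz and along which `R`
is continuous. Hence each `Δ_t` is a.e. strongly measurable, and `0 ≤ Δ_t ≤ Δ_0 + t C₁ ‖ȳ - y‖²`
with `Δ_0` constant.
-/

section StrongConvex

variable {E : Type*} [NormedAddCommGroup E] [NormedSpace ℝ E] {s : Set E} {m : ℝ} {f : E → ℝ}

lemma StrongConvexOn.sub_linearMap (hf : StrongConvexOn s m f) (ℓ : E →ₗ[ℝ] ℝ) :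
    StrongConvexOn s m (f - ℓ) := by
  unfold StrongConvexOn
  simpa using UniformConvexOn.sub hf (ℓ.concaveOn hf.1).uniformConcaveOn_zero

lemma StrongConvexOn.add_sq_norm_le_of_isMinOn (hf : StrongConvexOn s m f) {x u : E}
    (hmin : IsMinOn f s x) (hx : x ∈ s) (hu : u ∈ s) :
    f x + m / 2 * ‖u - x‖ ^ 2 ≤ f u := by
  have key : ∀ a ∈ Set.Ioo (0 : ℝ) 1, (1 - a) * (m / 2 * ‖u - x‖ ^ 2) ≤ f u - f x := by
    rintro a ⟨ha0, ha1⟩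
    have hconv := hf.2 hu hx ha0.le (sub_nonneg.2 ha1.le) (add_sub_cancel a 1)
    have hmin := isMinOn_iff.1 hmin _ (hf.1 hu hx ha0.le (sub_nonneg.2 ha1.le) (add_sub_cancel a 1))
    simp only [smul_eq_mul] at hconv
    refine le_of_mul_le_mul_left ?_ ha0
    linarith
  have hlim : Tendsto (fun a : ℝ => (1 - a) * (m / 2 * ‖u - x‖ ^ 2)) (𝓝[>] 0)
      (𝓝 (m / 2 * ‖u - x‖ ^ 2)) :=
    tendsto_nhdsWithin_of_tendsto_nhds <| by
      simpa using (show Continuous fun a : ℝ => (1 - a) * (m / 2 * ‖u - x‖ ^ 2) by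
        fun_prop).tendsto 0
  have := le_of_tendsto hlim (Filter.eventually_of_mem (Ioo_mem_nhdsGT one_pos) key)
  linarith

end StrongConvex

section DualArgmin

variable {X Y : Type*} [NormedAddCommGroup X] [NormedSpace ℝ X]
  [NormedAddCommGroup Y] [InnerProductSpace ℝ Y] {R : X → ℝ≥0∞} {A : X →L[ℝ] Y} {c₀ : ℝ}

lemma strongConvexOn_toReal_of_ennreal
    (hsconv : ∀ u v : X, R u ≠ ⊤ → R v ≠ ⊤ → ∀ s : ℝ, 0 ≤ s → s ≤ 1 →
      R (s • u + (1 - s) • v) + ENNReal.ofReal (c₀ * s * (1 - s) * ‖u - v‖ ^ 2)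
        ≤ ENNReal.ofReal s * R u + ENNReal.ofReal (1 - s) * R v) :
    StrongConvexOn {u | R u ≠ ⊤} (2 * c₀) fun u => (R u).toReal := by
  have key : ∀ ⦃u⦄, R u ≠ ⊤ → ∀ ⦃v⦄, R v ≠ ⊤ → ∀ ⦃a b : ℝ⦄, 0 ≤ a → 0 ≤ b → a + b = 1 →
      R (a • u + b • v) ≠ ⊤ ∧ (R (a • u + b • v)).toReal + c₀ * a * b * ‖u - v‖ ^ 2
        ≤ a * (R u).toReal + b * (R v).toReal := by
    intro u hu v hv a b ha hb hab
    obtain rfl : b = 1 - a := by linarith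
    have h := hsconv u v hu hv a ha (by linarith)
    have hfin : ENNReal.ofReal a * R u + ENNReal.ofReal (1 - a) * R v ≠ ⊤ := by finiteness
    have hz : R (a • u + (1 - a) • v) ≠ ⊤ := ne_top_of_le_ne_top hfin (le_self_add.trans h)
    refine ⟨hz, ?_⟩
    have h' := ENNReal.toReal_mono hfin h
    rw [ENNReal.toReal_add hz ENNReal.ofReal_ne_top, ENNReal.toReal_add (by finiteness)
      (by finiteness), ENNReal.toReal_mul, ENNReal.toReal_mul, ENNReal.toReal_ofReal ha,
      ENNReal.toReal_ofReal hb, ENNReal.toReal_ofReal'] at h'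
    linarith [le_max_left (c₀ * a * (1 - a) * ‖u - v‖ ^ 2) 0]
  refine ⟨fun u hu v hv a b ha hb hab => (key hu hv ha hb hab).1,
    fun u hu v hv a b ha hb hab => ?_⟩
  simp only [smul_eq_mul]
  linarith [(key hu hv ha hb hab).2]

lemma bregman_add_bregman (l₁ l₂ : Y) (x₁ x₂ : X) :
    bregman R A l₂ x₁ x₂ + bregman R A l₁ x₂ x₁ = ⟪l₁ - l₂, A x₁ - A x₂⟫ := by
  simp only [bregman, inner_sub_left, inner_sub_right]
  ring

lemma bregman_sub_bregman (l₁ l₂ : Y) (u x₁ x₂ : X) :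
    bregman R A l₂ u x₂ - bregman R A l₁ u x₁ = bregman R A l₂ x₁ x₂ + ⟪l₁ - l₂, A u - A x₁⟫ := by
  simp only [bregman, inner_sub_left, inner_sub_right]
  ring

lemma inner_map_sub_map_le (l : Y) (A : X →L[ℝ] Y) (x₁ x₂ : X) :
    ⟪l, A x₁ - A x₂⟫ ≤ ‖l‖ * ‖A‖ * ‖x₁ - x₂‖ := by
  rw [mul_assoc, ← map_sub]
  exact (real_inner_le_norm _ _).trans (by gcongr; exact A.le_opNorm _)

/-- `x` minimizes `R - ⟪lam, A ·⟫`. -/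
def IsDualArgmin (R : X → ℝ≥0∞) (A : X →L[ℝ] Y) (lam : Y) (x : X) : Prop :=
  R x ≠ ⊤ ∧ ∀ z : X, ENNReal.ofReal ((R x).toReal - ⟪lam, A x⟫ + ⟪lam, A z⟫) ≤ R z

variable {lam l₁ l₂ : Y} {x x₁ x₂ u : X}

lemma IsDualArgmin.isMinOn (h : IsDualArgmin R A lam x) :
    IsMinOn (fun u => (R u).toReal - ⟪lam, A u⟫) {u | R u ≠ ⊤} x := fun z hz => by
  have := (ENNReal.ofReal_le_iff_le_toReal hz).1 (h.2 z)
  simp only [Set.mem_ofPred_eq]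
  linarith

lemma IsDualArgmin.mul_sq_norm_le_bregman
    (hR : StrongConvexOn {u | R u ≠ ⊤} (2 * c₀) fun u => (R u).toReal)
    (h : IsDualArgmin R A lam x) (hu : R u ≠ ⊤) :
    c₀ * ‖u - x‖ ^ 2 ≤ bregman R A lam u x := by
  have := (hR.sub_linearMap ((innerSL ℝ lam).comp A).toLinearMap).add_sq_norm_le_of_isMinOn
    h.isMinOn h.1 hu
  simp only [Pi.sub_apply, ContinuousLinearMap.coe_coe, ContinuousLinearMap.coe_comp,
    Function.comp_apply, innerSL_apply_apply] at this
  rw [bregman, inner_sub_right]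
  linarith

lemma IsDualArgmin.norm_sub_le (hc₀ : 0 < c₀)
    (hR : StrongConvexOn {u | R u ≠ ⊤} (2 * c₀) fun u => (R u).toReal)
    (h₁ : IsDualArgmin R A l₁ x₁) (h₂ : IsDualArgmin R A l₂ x₂) :
    ‖x₁ - x₂‖ ≤ ‖A‖ / (2 * c₀) * ‖l₁ - l₂‖ := by
  have hb₁ := h₂.mul_sq_norm_le_bregman hR h₁.1
  have hb₂ := h₁.mul_sq_norm_le_bregman hR h₂.1
  rw [norm_sub_rev] at hb₂
  have hsum := (bregman_add_bregman (R := R) (A := A) l₁ l₂ x₁ x₂).trans_le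
    (inner_map_sub_map_le (l₁ - l₂) A x₁ x₂)
  have hsq : (2 * c₀ * ‖x₁ - x₂‖) * ‖x₁ - x₂‖ ≤ (‖A‖ * ‖l₁ - l₂‖) * ‖x₁ - x₂‖ := by
    linarith
  rcases (norm_nonneg (x₁ - x₂)).eq_or_lt with h0 | hpos
  · rw [← h0]
    positivity
  · rw [div_mul_eq_mul_div, le_div_iff₀ (by positivity)]
    linarith [le_of_mul_le_mul_right hsq hpos]

lemma IsDualArgmin.eq (hc₀ : 0 < c₀)
    (hR : StrongConvexOn {u | R u ≠ ⊤} (2 * c₀) fun u => (R u).toReal)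
    (h₁ : IsDualArgmin R A lam x₁) (h₂ : IsDualArgmin R A lam x₂) : x₁ = x₂ := by
  simpa [sub_eq_zero] using h₁.norm_sub_le hc₀ hR h₂

open scoped Classical in
variable (R A) in
noncomputable def dualArgmin (lam : Y) : X :=
  if h : ∃ x, IsDualArgmin R A lam x then h.choose else 0

lemma isDualArgmin_dualArgmin (h : ∃ x, IsDualArgmin R A lam x) :
    IsDualArgmin R A lam (dualArgmin R A lam) := by
  rw [dualArgmin, dif_pos h]
  exact h.choose_spec

lemma IsDualArgmin.dualArgmin_eq (hc₀ : 0 < c₀)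
    (hR : StrongConvexOn {u | R u ≠ ⊤} (2 * c₀) fun u => (R u).toReal)
    (h : IsDualArgmin R A lam x) : dualArgmin R A lam = x :=
  (isDualArgmin_dualArgmin ⟨x, h⟩).eq hc₀ hR h

lemma continuousOn_dualArgmin (hc₀ : 0 < c₀)
    (hR : StrongConvexOn {u | R u ≠ ⊤} (2 * c₀) fun u => (R u).toReal) :
    ContinuousOn (dualArgmin R A) {lam | ∃ x, IsDualArgmin R A lam x} := by
  refine (LipschitzOnWith.of_dist_le_mul fun l₁ h₁ l₂ h₂ => ?_).continuousOn
    (K := Real.toNNReal (‖A‖ / (2 * c₀)))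
  rw [dist_eq_norm, dist_eq_norm, Real.coe_toNNReal _ (by positivity)]
  exact (isDualArgmin_dualArgmin h₁).norm_sub_le hc₀ hR (isDualArgmin_dualArgmin h₂)

lemma continuousOn_toReal_comp_dualArgmin (hc₀ : 0 < c₀)
    (hR : StrongConvexOn {u | R u ≠ ⊤} (2 * c₀) fun u => (R u).toReal) :
    ContinuousOn (fun lam => (R (dualArgmin R A lam)).toReal)
      {lam | ∃ x, IsDualArgmin R A lam x} := by
  intro lam hlam
  set x := dualArgmin R A lam
  have hx := isDualArgmin_dualArgmin hlam
  have hAx : Tendsto (fun l => A (dualArgmin R A l) - A x)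
      (𝓝[{lam | ∃ x, IsDualArgmin R A lam x}] lam) (𝓝 0) := by
    simpa using ((A.continuous.tendsto x).comp (continuousOn_dualArgmin hc₀ hR lam hlam)).sub_const
      (A x)
  -- `R` is squeezed between the two subgradient inequalities at `x` and at `dualArgmin R A l`.
  refine tendsto_of_tendsto_of_tendsto_of_le_of_le'
    (g := fun l => (R x).toReal + ⟪lam, A (dualArgmin R A l) - A x⟫)
    (h := fun l => (R x).toReal + ⟪l, A (dualArgmin R A l) - A x⟫) ?_ ?_ ?_ ?_
  · simpa using (tendsto_const_nhds (x := (R x).toReal)).add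
      ((tendsto_const_nhds (x := lam)).inner (𝕜 := ℝ) hAx)
  · simpa using (tendsto_const_nhds (x := (R x).toReal)).add
      ((tendsto_nhdsWithin_of_tendsto_nhds tendsto_id).inner (𝕜 := ℝ) hAx)
  · filter_upwards [self_mem_nhdsWithin] with l hl
    have := hx.isMinOn (isDualArgmin_dualArgmin hl).1
    simp only [Set.mem_ofPred_eq, inner_sub_right] at this ⊢
    linarith
  · filter_upwards [self_mem_nhdsWithin] with l hl
    have := (isDualArgmin_dualArgmin hl).isMinOn hx.1
    simp only [Set.mem_ofPred_eq, inner_sub_right] at this ⊢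
    linarith

lemma continuousOn_bregman_dualArgmin (hc₀ : 0 < c₀)
    (hR : StrongConvexOn {u | R u ≠ ⊤} (2 * c₀) fun u => (R u).toReal) (u : X) :
    ContinuousOn (fun lam => bregman R A lam u (dualArgmin R A lam))
      {lam | ∃ x, IsDualArgmin R A lam x} :=
  (continuousOn_const.sub (continuousOn_toReal_comp_dualArgmin hc₀ hR)).sub
    (continuousOn_id.inner (continuousOn_const.sub
      (A.continuous.comp_continuousOn (continuousOn_dualArgmin hc₀ hR))))

lemma IsDualArgmin.bregman_sub_bregman_le {γ : ℝ} {b : Y}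
    (hR : StrongConvexOn {u | R u ≠ ⊤} (2 * c₀) fun u => (R u).toReal)
    (hγ : 0 < γ) (hγA : γ * ‖A‖ ^ 2 < 4 * c₀)
    (h₁ : IsDualArgmin R A l₁ x₁) (h₂ : IsDualArgmin R A l₂ x₂)
    (hl : l₂ = l₁ - γ • (A x₁ - b)) (u : X) :
    bregman R A l₂ u x₂ - bregman R A l₁ u x₁
      ≤ c₀ * γ / (4 * c₀ - γ * ‖A‖ ^ 2) * ‖b - A u‖ ^ 2 := by
  have hc₀ : 0 < c₀ := by nlinarith [sq_nonneg ‖A‖]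
  have hl' : l₁ - l₂ = γ • (A x₁ - b) := by rw [hl]; abel
  have hx₁x₂ : bregman R A l₂ x₁ x₂ ≤ γ * ‖A x₁ - b‖ * ‖A‖ * ‖x₁ - x₂‖ - c₀ * ‖x₁ - x₂‖ ^ 2 := by
    have hb := h₁.mul_sq_norm_le_bregman hR h₂.1
    have hcs := inner_map_sub_map_le (l₁ - l₂) A x₁ x₂
    rw [norm_sub_rev] at hb
    rw [show ‖l₁ - l₂‖ = γ * ‖A x₁ - b‖ by rw [hl', norm_smul, Real.norm_of_nonneg hγ.le]]
      at hcs
    linarith [bregman_add_bregman (R := R) (A := A) l₁ l₂ x₁ x₂]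
  have hux₁ : ⟪l₁ - l₂, A u - A x₁⟫ ≤ γ * ‖A x₁ - b‖ * ‖b - A u‖ - γ * ‖A x₁ - b‖ ^ 2 := by
    rw [hl', real_inner_smul_left, show A u - A x₁ = -(b - A u) - (A x₁ - b) by abel,
      inner_sub_right, inner_neg_right, real_inner_self_eq_norm_sq]
    nlinarith [neg_le_abs ⟪A x₁ - b, b - A u⟫, abs_real_inner_le_norm (A x₁ - b) (b - A u)]
  set W := ‖A x₁ - b‖
  set d := ‖x₁ - x₂‖
  set e := ‖b - A u‖
  have hβ : 0 < 4 * c₀ - γ * ‖A‖ ^ 2 := by linarith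
  -- `4c₀` times the gap equals `β (2c₀d - γ‖A‖W)² + γ (βW - 2c₀e)²`, where `β = 4c₀ - γ‖A‖²`.
  have hsq : γ * W * ‖A‖ * d - c₀ * d ^ 2 + (γ * W * e - γ * W ^ 2)
      ≤ c₀ * γ / (4 * c₀ - γ * ‖A‖ ^ 2) * e ^ 2 := by
    rw [div_mul_eq_mul_div, le_div_iff₀ hβ]
    nlinarith [mul_nonneg hβ.le (sq_nonneg (2 * c₀ * d - γ * ‖A‖ * W)),
      mul_nonneg hγ.le (sq_nonneg ((4 * c₀ - γ * ‖A‖ ^ 2) * W - 2 * c₀ * e))]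
  rw [bregman_sub_bregman]
  linarith

end DualArgmin

lemma ContinuousOn.comp_aestronglyMeasurable_of_forall_mem {Ω α β : Type*} [MeasurableSpace Ω]
    {μ : Measure Ω} [TopologicalSpace α] [TopologicalSpace.PseudoMetrizableSpace α]
    [TopologicalSpace β]
    {g : α → β} {s : Set α} (hg : ContinuousOn g s) {f : Ω → α}
    (hf : AEStronglyMeasurable f μ) (hfs : ∀ ω, f ω ∈ s) :
    AEStronglyMeasurable (fun ω => g (f ω)) μ :=
  hg.domRestrict.comp_aestronglyMeasurable
    ((Topology.IsEmbedding.subtypeVal.aestronglyMeasurable_comp_iff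
      (f := Set.codRestrict f s hfs)).1 hf)

section DualGradient

variable {X Y Ω : Type*} [NormedAddCommGroup X] [NormedSpace ℝ X]
  [NormedAddCommGroup Y] [InnerProductSpace ℝ Y] {R : X → ℝ≥0∞} {A : X →L[ℝ] Y} {c₀ γ : ℝ}
  [MeasurableSpace Ω] {μ : Measure Ω} {b : Ω → Y} {lam : ℕ → Ω → Y} {x : ℕ → Ω → X}

lemma aestronglyMeasurable_dualGradient (hc₀ : 0 < c₀)
    (hR : StrongConvexOn {u | R u ≠ ⊤} (2 * c₀) fun u => (R u).toReal)
    (hb : AEStronglyMeasurable b μ) (hlam₀ : ∀ ω, lam 0 ω = 0)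
    (hx : ∀ t ω, IsDualArgmin R A (lam t ω) (x t ω))
    (hlam : ∀ t ω, lam (t + 1) ω = lam t ω - γ • (A (x t ω) - b ω)) (t : ℕ) :
    AEStronglyMeasurable (lam t) μ := by
  induction t with
  | zero => simpa [funext hlam₀] using aestronglyMeasurable_const
  | succ t ih =>
    have hAx : AEStronglyMeasurable (fun ω => A (x t ω)) μ := by
      simpa [(hx t _).dualArgmin_eq hc₀ hR] using
        (A.continuous.comp_continuousOn
          (continuousOn_dualArgmin hc₀ hR)).comp_aestronglyMeasurable_of_forall_mem
          ih fun ω => ⟨_, hx t ω⟩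
    rw [funext (hlam t)]
    exact ih.sub ((hAx.sub hb).const_smul γ)

lemma integrable_bregman_dualGradient [IsFiniteMeasure μ] (hc₀ : 0 < c₀)
    (hR : StrongConvexOn {u | R u ≠ ⊤} (2 * c₀) fun u => (R u).toReal)
    (hγ : 0 < γ) (hγA : γ * ‖A‖ ^ 2 < 4 * c₀)
    (hb : AEStronglyMeasurable b μ) (hlam₀ : ∀ ω, lam 0 ω = 0)
    (hx : ∀ t ω, IsDualArgmin R A (lam t ω) (x t ω))
    (hlam : ∀ t ω, lam (t + 1) ω = lam t ω - γ • (A (x t ω) - b ω))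
    {u : X} (hu : R u ≠ ⊤) (hbu : Integrable (fun ω => ‖b ω - A u‖ ^ 2) μ) (t : ℕ) :
    Integrable (fun ω => bregman R A (lam t ω) u (x t ω)) μ := by
  induction t with
  | zero => simp [hlam₀, ← (hx 0 _).dualArgmin_eq hc₀ hR]
  | succ t ih =>
    have hmeas : AEStronglyMeasurable (fun ω => bregman R A (lam (t + 1) ω) u (x (t + 1) ω)) μ := by
      simpa [(hx (t + 1) _).dualArgmin_eq hc₀ hR] using
        (continuousOn_bregman_dualArgmin hc₀ hR u).comp_aestronglyMeasurable_of_forall_mem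
          (aestronglyMeasurable_dualGradient hc₀ hR hb hlam₀ hx hlam (t + 1))
          fun ω => ⟨_, hx (t + 1) ω⟩
    refine (ih.add (hbu.const_mul (c₀ * γ / (4 * c₀ - γ * ‖A‖ ^ 2)))).mono' hmeas
      (Eventually.of_forall fun ω => ?_)
    have hstep := (hx t ω).bregman_sub_bregman_le hR hγ hγA (hx (t + 1) ω) (hlam t ω) u
    have hnonneg := (mul_nonneg hc₀.le (sq_nonneg _)).trans
      ((hx (t + 1) ω).mul_sq_norm_le_bregman hR hu)
    rw [Real.norm_of_nonneg hnonneg, Pi.add_apply]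
    linarith

end DualGradient

lemma norm_sum_sq_eq_sum_sum_inner {ι Y : Type*} [NormedAddCommGroup Y] [InnerProductSpace ℝ Y]
    (s : Finset ι) (v : ι → Y) : ‖∑ i ∈ s, v i‖ ^ 2 = ∑ i ∈ s, ∑ j ∈ s, ⟪v i, v j⟫ := by
  simp_rw [← real_inner_self_eq_norm_sq, sum_inner, inner_sum]

lemma sampleMean_sub {Ω Y : Type*} [NormedAddCommGroup Y] [NormedSpace ℝ Y] {ys : ℕ → Ω → Y}
    {y : Y} {n : ℕ} (hn : n ≠ 0) (ω : Ω) :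
    sampleMean ys n ω - y = (n : ℝ)⁻¹ • ∑ i ∈ Finset.range n, (ys i ω - y) := by
  rw [sampleMean, Finset.sum_sub_distrib, smul_sub, Finset.sum_const, Finset.card_range,
    ← Nat.cast_smul_eq_nsmul ℝ, inv_smul_smul₀ (Nat.cast_ne_zero.2 hn)]

section Variance

variable {Ω Y ι : Type*} [MeasurableSpace Ω] {μ : Measure Ω}
  [NormedAddCommGroup Y] [InnerProductSpace ℝ Y] [MeasurableSpace Y] [BorelSpace Y] {z : ι → Ω → Y}

lemma integrable_inner_of_indepFun (hind : ∀ i j, i ≠ j → IndepFun (z i) (z j) μ)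
    (hint : ∀ i, Integrable (z i) μ) (hsq : ∀ i, Integrable (fun ω => ‖z i ω‖ ^ 2) μ)
    (i j : ι) : Integrable (fun ω => ⟪z i ω, z j ω⟫) μ := by
  rcases eq_or_ne i j with rfl | hij
  · simpa [real_inner_self_eq_norm_sq] using hsq i
  · exact (hind i j hij).integrable_bilin (hint i) (hint j) (innerSL ℝ)

lemma integrable_norm_sum_sq_of_indepFun (hind : ∀ i j, i ≠ j → IndepFun (z i) (z j) μ)
    (hint : ∀ i, Integrable (z i) μ) (hsq : ∀ i, Integrable (fun ω => ‖z i ω‖ ^ 2) μ)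
    (s : Finset ι) : Integrable (fun ω => ‖∑ i ∈ s, z i ω‖ ^ 2) μ := by
  simp_rw [norm_sum_sq_eq_sum_sum_inner]
  exact integrable_finsetSum _ fun i _ => integrable_finsetSum _ fun j _ =>
    integrable_inner_of_indepFun hind hint hsq i j

lemma integral_norm_sum_sq_of_indepFun [CompleteSpace Y]
    (hind : ∀ i j, i ≠ j → IndepFun (z i) (z j) μ)
    (hint : ∀ i, Integrable (z i) μ) (hmean : ∀ i, ∫ ω, z i ω ∂μ = 0)
    (hsq : ∀ i, Integrable (fun ω => ‖z i ω‖ ^ 2) μ) (s : Finset ι) :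
    ∫ ω, ‖∑ i ∈ s, z i ω‖ ^ 2 ∂μ = ∑ i ∈ s, ∫ ω, ‖z i ω‖ ^ 2 ∂μ := by
  classical
  have hoff : ∀ i j, i ≠ j → ∫ ω, ⟪z i ω, z j ω⟫ ∂μ = 0 := fun i j hij => by
    rw [show (fun ω => ⟪z i ω, z j ω⟫) = fun ω => innerSL ℝ (z i ω) (z j ω) from rfl,
      (hind i j hij).integral_bilin (hint i) (hint j) (innerSL ℝ), hmean, map_zero,
      zero_apply]
  simp_rw [norm_sum_sq_eq_sum_sum_inner]
  rw [integral_finsetSum _ fun i _ => integrable_finsetSum _ fun j _ =>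
    integrable_inner_of_indepFun hind hint hsq i j]
  refine Finset.sum_congr rfl fun i hi => ?_
  rw [integral_finsetSum _ fun j _ => integrable_inner_of_indepFun hind hint hsq i j,
    Finset.sum_eq_single_of_mem i hi fun j _ hji => hoff i j hji.symm]
  simp_rw [real_inner_self_eq_norm_sq]

variable {ys : ℕ → Ω → Y} {y : Y}

lemma integrable_norm_sampleMean_sub_sq [IsFiniteMeasure μ] (hindep : iIndepFun ys μ)
    (hident : ∀ i, IdentDistrib (ys i) (ys 0) μ μ) (hint1 : Integrable (ys 0) μ)
    (hint2 : Integrable (fun ω => ‖ys 0 ω - y‖ ^ 2) μ) {n : ℕ} (hn : n ≠ 0) :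
    Integrable (fun ω => ‖sampleMean ys n ω - y‖ ^ 2) μ := by
  simp_rw [sampleMean_sub hn, norm_smul, mul_pow]
  refine (integrable_norm_sum_sq_of_indepFun (z := fun i ω => ys i ω - y)
    (fun i j hij => (hindep.indepFun hij).comp (measurable_id.sub_const y)
      (measurable_id.sub_const y))
    (fun i => ((hident i).integrable_iff.2 hint1).sub (integrable_const y))
    (fun i => ((hident i).comp ((measurable_id.sub_const y).norm.pow_const 2)).integrable_iff.2
      hint2) _).const_mul _

lemma integral_norm_sampleMean_sub_sq [CompleteSpace Y] [IsProbabilityMeasure μ]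
    (hindep : iIndepFun ys μ)
    (hident : ∀ i, IdentDistrib (ys i) (ys 0) μ μ) (hint1 : Integrable (ys 0) μ)
    (hmean : ∫ ω, ys 0 ω ∂μ = y) (hint2 : Integrable (fun ω => ‖ys 0 ω - y‖ ^ 2) μ)
    {n : ℕ} (hn : n ≠ 0) :
    ∫ ω, ‖sampleMean ys n ω - y‖ ^ 2 ∂μ = (∫ ω, ‖ys 0 ω - y‖ ^ 2 ∂μ) / n := by
  have hsq := fun i => (hident i).comp ((measurable_id.sub_const y).norm.pow_const 2)
  have hys := fun i => (hident i).integrable_iff.2 hint1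
  have hσ : ∀ i, ∫ ω, ‖ys i ω - y‖ ^ 2 ∂μ = ∫ ω, ‖ys 0 ω - y‖ ^ 2 ∂μ := fun i =>
    (hsq i).integral_eq
  simp_rw [sampleMean_sub hn, norm_smul, mul_pow]
  rw [integral_const_mul, integral_norm_sum_sq_of_indepFun (z := fun i ω => ys i ω - y)
    (fun i j hij => (hindep.indepFun hij).comp (measurable_id.sub_const y)
      (measurable_id.sub_const y))
    (fun i => (hys i).sub (integrable_const y))
    (fun i => by simp [integral_sub (hys i) (integrable_const y), (hident i).integral_eq, hmean])
    (fun i => (hsq i).integrable_iff.2 hint2)]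
  simp_rw [hσ]
  rw [Finset.sum_const, Finset.card_range, nsmul_eq_mul, norm_inv, Real.norm_natCast]
  field_simp

end Variance

theorem expected_bregman_one_step_growth_general
    {X Y : Type*} [NormedAddCommGroup X] [NormedSpace ℝ X]
    [NormedAddCommGroup Y] [InnerProductSpace ℝ Y] [CompleteSpace Y]
    [MeasurableSpace Y] [BorelSpace Y]
    {Ω : Type*} [MeasurableSpace Ω] (μ : Measure Ω) [IsProbabilityMeasure μ]
    (A : X →L[ℝ] Y) (R : X → ℝ≥0∞) (c₀ : ℝ) (hc₀ : 0 < c₀)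
    (hsconv : ∀ u v : X, R u ≠ ⊤ → R v ≠ ⊤ → ∀ s : ℝ, 0 ≤ s → s ≤ 1 →
      R (s • u + (1 - s) • v) + ENNReal.ofReal (c₀ * s * (1 - s) * ‖u - v‖ ^ 2)
        ≤ ENNReal.ofReal s * R u + ENNReal.ofReal (1 - s) * R v)
    (y : Y) (xdag : X) (hxdag_sol : A xdag = y) (hxdag_dom : R xdag ≠ ⊤)
    -- the i.i.d. data
    (ys : ℕ → Ω → Y) (σ2 : ℝ)
    (hindep : iIndepFun ys μ)
    (hident : ∀ i, IdentDistrib (ys i) (ys 0) μ μ)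
    (hint1 : Integrable (ys 0) μ)
    (hmean : ∫ ω, ys 0 ω ∂μ = y)
    (hint2 : Integrable (fun ω => ‖ys 0 ω - y‖ ^ 2) μ)
    (hσ2 : σ2 = ∫ ω, ‖ys 0 ω - y‖ ^ 2 ∂μ)
    -- the step size
    (γ : ℝ) (hγ0 : 0 < γ) (hγ : γ < 4 * c₀ / ‖A‖ ^ 2)
    -- the dual gradient iterates with averaged data ȳ⁽ⁿ⁾
    (xs : ℕ → ℕ → Ω → X) (lams : ℕ → ℕ → Ω → Y)
    (hlams0 : ∀ n ω, lams n 0 ω = 0)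
    (hmins : ∀ n t ω, R (xs n t ω) ≠ ⊤ ∧ ∀ z : X,
      ENNReal.ofReal ((R (xs n t ω)).toReal - ⟪lams n t ω, A (xs n t ω)⟫
        + ⟪lams n t ω, A z⟫) ≤ R z)
    (hupds : ∀ n t ω, lams n (t + 1) ω
      = lams n t ω - γ • (A (xs n t ω) - sampleMean ys n ω))
 :
    ∀ (n : ℕ), 1 ≤ n → ∀ t : ℕ,
      (∫ ω, bregman R A (lams n (t + 1) ω) xdag (xs n (t + 1) ω) ∂μ)
          - (∫ ω, bregman R A (lams n t ω) xdag (xs n t ω) ∂μ)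
        ≤ (c₀ * γ / (4 * c₀ - γ * ‖A‖ ^ 2)) * σ2 / n := by
  intro n hn t
  have hn0 : n ≠ 0 := by omega
  have hR := strongConvexOn_toReal_of_ennreal hsconv
  have hγA : γ * ‖A‖ ^ 2 < 4 * c₀ := by
    rcases (norm_nonneg A).eq_or_lt with hA | hA
    · simpa [← hA] using hc₀
    · exact (lt_div_iff₀ (by positivity)).1 hγ
  have hb : AEStronglyMeasurable (sampleMean ys n) μ :=
    ((integrable_finsetSum _ fun i _ => (hident i).integrable_iff.2 hint1).smul
      ((n : ℝ)⁻¹)).aestronglyMeasurable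
  have hnoise := integrable_norm_sampleMean_sub_sq hindep hident hint1 hint2 hn0
  rw [← hxdag_sol] at hnoise
  have hx : ∀ t ω, IsDualArgmin R A (lams n t ω) (xs n t ω) := hmins n
  have hΔ := integrable_bregman_dualGradient hc₀ hR hγ0 hγA hb (hlams0 n) hx (hupds n)
    hxdag_dom hnoise
  calc _ = ∫ ω, (bregman R A (lams n (t + 1) ω) xdag (xs n (t + 1) ω)
          - bregman R A (lams n t ω) xdag (xs n t ω)) ∂μ := (integral_sub (hΔ _) (hΔ _)).symm
    _ ≤ ∫ ω, c₀ * γ / (4 * c₀ - γ * ‖A‖ ^ 2) * ‖sampleMean ys n ω - A xdag‖ ^ 2 ∂μ :=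
      integral_mono ((hΔ _).sub (hΔ _)) (hnoise.const_mul _) fun ω =>
        (hx t ω).bregman_sub_bregman_le hR hγ0 hγA (hx (t + 1) ω) (hupds n t ω) xdag
    _ = _ := by
      rw [integral_const_mul, hxdag_sol,
        integral_norm_sampleMean_sub_sq hindep hident hint1 hmean hint2 hn0, ← hσ2]
      ring

/-- Lemma 3.5: one-step growth of the expected Bregman distance
`Δ_t⁽ⁿ⁾ = D_R^{A*λ_t⁽ⁿ⁾}(x†, x_t⁽ⁿ⁾)`:
`E[Δ_{t+1}⁽ⁿ⁾] - E[Δ_t⁽ⁿ⁾] ≤ C₁ σ²/n` with `C₁ = c₀γ/(4c₀ - γ‖A‖²)`. -/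
theorem expected_bregman_one_step_growth
    {X Y : Type*} [NormedAddCommGroup X] [NormedSpace ℝ X] [CompleteSpace X]
    [NormedAddCommGroup Y] [InnerProductSpace ℝ Y] [CompleteSpace Y]
    [MeasurableSpace Y] [BorelSpace Y]
    {Ω : Type*} [MeasurableSpace Ω] (μ : Measure Ω) [IsProbabilityMeasure μ]
    (A : X →L[ℝ] Y) (R : X → ℝ≥0∞) (c₀ : ℝ) (hc₀ : 0 < c₀)
    (hproper : ∃ u : X, R u ≠ ⊤)
    (hlsc : LowerSemicontinuous R)
    (hsconv : ∀ u v : X, R u ≠ ⊤ → R v ≠ ⊤ → ∀ s : ℝ, 0 ≤ s → s ≤ 1 →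
      R (s • u + (1 - s) • v) + ENNReal.ofReal (c₀ * s * (1 - s) * ‖u - v‖ ^ 2)
        ≤ ENNReal.ofReal s * R u + ENNReal.ofReal (1 - s) * R v)
    (y : Y) (xdag : X) (hxdag_sol : A xdag = y) (hxdag_dom : R xdag ≠ ⊤)
    (hxdag_min : ∀ z : X, A z = y → R xdag ≤ R z)
    -- the i.i.d. data
    (ys : ℕ → Ω → Y) (σ2 : ℝ)
    (hmeas : ∀ i, Measurable (ys i))
    (hindep : iIndepFun ys μ)
    (hident : ∀ i, IdentDistrib (ys i) (ys 0) μ μ)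
    (hint1 : Integrable (ys 0) μ)
    (hmean : ∫ ω, ys 0 ω ∂μ = y)
    (hint2 : Integrable (fun ω => ‖ys 0 ω - y‖ ^ 2) μ)
    (hσ2 : σ2 = ∫ ω, ‖ys 0 ω - y‖ ^ 2 ∂μ) (hσ2pos : 0 < σ2)
    -- the step size
    (γ : ℝ) (hγ0 : 0 < γ) (hγ : γ < 4 * c₀ / ‖A‖ ^ 2)
    -- the dual gradient iterates with averaged data ȳ⁽ⁿ⁾
    (xs : ℕ → ℕ → Ω → X) (lams : ℕ → ℕ → Ω → Y)
    (hlams0 : ∀ n ω, lams n 0 ω = 0)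
    (hmins : ∀ n t ω, R (xs n t ω) ≠ ⊤ ∧ ∀ z : X,
      ENNReal.ofReal ((R (xs n t ω)).toReal - ⟪lams n t ω, A (xs n t ω)⟫
        + ⟪lams n t ω, A z⟫) ≤ R z)
    (hupds : ∀ n t ω, lams n (t + 1) ω
      = lams n t ω - γ • (A (xs n t ω) - sampleMean ys n ω))
 :
    ∀ (n : ℕ), 1 ≤ n → ∀ t : ℕ,
      (∫ ω, bregman R A (lams n (t + 1) ω) xdag (xs n (t + 1) ω) ∂μ)
          - (∫ ω, bregman R A (lams n t ω) xdag (xs n t ω) ∂μ)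
        ≤ (c₀ * γ / (4 * c₀ - γ * ‖A‖ ^ 2)) * σ2 / n :=
  expected_bregman_one_step_growth_general μ A R c₀ hc₀ hsconv y xdag hxdag_sol hxdag_dom ys σ2
    hindep hident hint1 hmean hint2 hσ2 γ hγ0 hγ xs lams hlams0 hmins hupds
end

section
/- Let X and Y be Hilbert spaces, A : X → Y bounded linear, and let R : X → [0,∞] be proper, lower semicontinuous and c₀-strongly convex for some c₀ > 0. Let x† solve Ax = y and suppose the spectral source condition holds: ξ† := (A*A)^{ν/2}ω ∈ ∂R(x†) for some 0 < ν ≤ 1 and ω ∈ X. Then for all x ∈ dom(R), (1/2) D_R^{ξ†}(x, x†) ≤ R(x) − R(x†) + C_ν ‖ω‖^{2/(1+ν)} ‖Ax − y‖^{2ν/(1+ν)}, where C_ν := ((1+ν)/2)((1−ν)/c₀)^{(1−ν)/(1+ν)}; i.e., the variational source condition holds with E†(x) = (1/2)D_R^{ξ†}(x, x†), M = C_ν‖ω‖^{2/(1+ν)}, and q = 2ν/(1+ν). -/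
open Filter Topology
open scoped RealInnerProductSpace ENNReal

/-- The continuous function `r ↦ r^p` on `[0, b]`, for `p ≥ 0`. -/
noncomputable def rpowC (b p : ℝ) (hp : 0 ≤ p) : C(Set.Icc (0 : ℝ) b, ℝ) :=
  ⟨fun r => (r : ℝ) ^ p, Continuous.rpow_const continuous_subtype_val fun _ => Or.inr hp⟩

/-- The identity function on `[0, b]` as a continuous map. -/
noncomputable def idC (b : ℝ) : C(Set.Icc (0 : ℝ) b, ℝ) :=
  ⟨fun r => (r : ℝ), continuous_subtype_val⟩

lemma aux_young (c₀ ν W t s : ℝ) (hc₀ : 0 < c₀) (hν0 : 0 < ν) (hν1 : ν ≤ 1)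
    (hW : 0 ≤ W) (ht : 0 ≤ t) (hs : 0 ≤ s) :
    W * t ^ (1 - ν) * s ^ ν
      ≤ c₀ / 2 * t ^ 2
        + (((1 + ν) / 2) * ((1 - ν) / c₀) ^ ((1 - ν) / (1 + ν)))
            * W ^ (2 / (1 + ν)) * s ^ (2 * ν / (1 + ν)) := by
  have h1ν : (0:ℝ) < 1 + ν := by linarith
  rcases eq_or_lt_of_le hν1 with h | h
  · subst h
    norm_num
    nlinarith [sq_nonneg t, Real.rpow_one s, Real.rpow_one W]
  · -- ν < 1
    have h1ν' : (0:ℝ) < 1 - ν := by linarith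
    set p₁ : ℝ := c₀ / (1 - ν) * t ^ 2 with hp₁
    set p₂ : ℝ := ((1 - ν) / c₀) ^ ((1 - ν) / (1 + ν)) * W ^ (2 / (1 + ν)) * s ^ (2 * ν / (1 + ν)) with hp₂
    have hp₁0 : 0 ≤ p₁ := by positivity
    have hp₂0 : 0 ≤ p₂ := by positivity
    have hgm := Real.geom_mean_le_arith_mean2_weighted (by linarith : (0:ℝ) ≤ (1-ν)/2)
      (by linarith : (0:ℝ) ≤ (1+ν)/2) hp₁0 hp₂0 (by ring)
    have e1 : p₁ ^ ((1-ν)/2) = (c₀/(1-ν)) ^ ((1-ν)/2) * t ^ (1-ν) := by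
      rw [hp₁, Real.mul_rpow (by positivity) (by positivity)]
      congr 1
      rw [← Real.rpow_natCast t 2, ← Real.rpow_mul ht]
      congr 1
      push_cast
      ring
    have e2 : p₂ ^ ((1+ν)/2)
        = ((1-ν)/c₀) ^ ((1-ν)/2) * W * s ^ ν := by
      rw [hp₂, Real.mul_rpow (by positivity) (by positivity),
        Real.mul_rpow (by positivity) (by positivity),
        ← Real.rpow_mul (by positivity), ← Real.rpow_mul hW, ← Real.rpow_mul hs]
      have ea : (1-ν)/(1+ν) * ((1+ν)/2) = (1-ν)/2 := by field_simp
      have eb : 2/(1+ν) * ((1+ν)/2) = 1 := by field_simp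
      have ec : 2*ν/(1+ν) * ((1+ν)/2) = ν := by field_simp
      rw [ea, eb, ec, Real.rpow_one]
    have e3 : (c₀/(1-ν)) ^ ((1-ν)/2) * ((1-ν)/c₀) ^ ((1-ν)/2) = 1 := by
      rw [← Real.mul_rpow (by positivity) (by positivity)]
      have : c₀/(1-ν) * ((1-ν)/c₀) = 1 := by field_simp
      rw [this, Real.one_rpow]
    rw [e1, e2] at hgm
    have key : (c₀/(1-ν)) ^ ((1-ν)/2) * t ^ (1-ν) * (((1-ν)/c₀) ^ ((1-ν)/2) * W * s ^ ν)
        = W * t ^ (1-ν) * s ^ ν := by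
      calc (c₀/(1-ν)) ^ ((1-ν)/2) * t ^ (1-ν) * (((1-ν)/c₀) ^ ((1-ν)/2) * W * s ^ ν)
          = ((c₀/(1-ν)) ^ ((1-ν)/2) * ((1-ν)/c₀) ^ ((1-ν)/2)) * (W * t ^ (1-ν) * s ^ ν) := by ring
        _ = W * t ^ (1-ν) * s ^ ν := by rw [e3]; ring
    rw [key] at hgm
    have ew1 : (1-ν)/2 * p₁ = c₀/2 * t^2 := by rw [hp₁]; field_simp
    have ew2 : (1+ν)/2 * p₂
        = (((1 + ν) / 2) * ((1 - ν) / c₀) ^ ((1 - ν) / (1 + ν)))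
            * W ^ (2 / (1 + ν)) * s ^ (2 * ν / (1 + ν)) := by rw [hp₂]; ring
    linarith

lemma aux_interp {X Y : Type*} [NormedAddCommGroup X] [InnerProductSpace ℝ X] [CompleteSpace X]
    [NormedAddCommGroup Y] [InnerProductSpace ℝ Y] [CompleteSpace Y]
    (A : X →L[ℝ] Y) (ν : ℝ) (hν0 : 0 < ν) (hν1 : ν ≤ 1)
    (Φ : C(Set.Icc (0 : ℝ) (‖A‖ ^ 2), ℝ) →⋆ₐ[ℝ] (X →L[ℝ] X))
    (hΦ_id : Φ (idC (‖A‖ ^ 2)) = (ContinuousLinearMap.adjoint A).comp A)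
    (hp : 0 ≤ ν / 2) (z : X) :
    ‖(Φ (rpowC (‖A‖ ^ 2) (ν / 2) hp)) z‖ ≤ ‖z‖ ^ (1 - ν) * ‖A z‖ ^ ν := by
  -- self-adjointness of Φ g
  have hsa : ∀ (g : C(Set.Icc (0:ℝ) (‖A‖ ^ 2), ℝ)) (u v : X), ⟪(Φ g) u, v⟫ = ⟪u, (Φ g) v⟫ := by
    intro g u v
    have hstar : star g = g := by ext r; simp
    have hΦstar : ContinuousLinearMap.adjoint (Φ g) = Φ g := by
      rw [← ContinuousLinearMap.star_eq_adjoint, ← map_star, hstar]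
    calc ⟪(Φ g) u, v⟫ = ⟪(ContinuousLinearMap.adjoint (Φ g)) u, v⟫ := by rw [hΦstar]
      _ = ⟪u, (Φ g) v⟫ := ContinuousLinearMap.adjoint_inner_left _ _ _
  -- positivity of the functional g ↦ ⟪z, Φ g z⟫
  have hpos : ∀ g : C(Set.Icc (0:ℝ) (‖A‖ ^ 2), ℝ), (∀ r, 0 ≤ g r) → 0 ≤ ⟪z, (Φ g) z⟫ := by
    intro g hg
    set sq : C(Set.Icc (0:ℝ) (‖A‖ ^ 2), ℝ) := ⟨fun r => Real.sqrt (g r),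
      Real.continuous_sqrt.comp g.continuous⟩ with hsq
    have hgsq : g = sq * sq := by
      ext r
      simp [hsq, ContinuousMap.mul_apply, Real.mul_self_sqrt (hg r)]
    rw [hgsq, map_mul, ContinuousLinearMap.mul_apply, ← hsa sq]
    exact real_inner_self_nonneg
  have hmono : ∀ g h : C(Set.Icc (0:ℝ) (‖A‖ ^ 2), ℝ), (∀ r, g r ≤ h r) →
      ⟪z, (Φ g) z⟫ ≤ ⟪z, (Φ h) z⟫ := by
    intro g h hgh
    have := hpos (h - g) (fun r => by simpa [ContinuousMap.sub_apply, sub_nonneg] using hgh r)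
    rw [map_sub, ContinuousLinearMap.sub_apply, inner_sub_right] at this
    linarith
  have hOne : ⟪z, (Φ 1) z⟫ = ‖z‖ ^ 2 := by
    rw [map_one, ContinuousLinearMap.one_apply]; exact real_inner_self_eq_norm_sq z
  have hId : ⟪z, (Φ (idC (‖A‖ ^ 2))) z⟫ = ‖A z‖ ^ 2 := by
    rw [hΦ_id, ContinuousLinearMap.comp_apply, ContinuousLinearMap.adjoint_inner_right]
    exact real_inner_self_eq_norm_sq (A z)
  -- ⟪z, Φ(r^ν) z⟫ = ‖Φ(r^{ν/2}) z‖²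
  have hff : rpowC (‖A‖ ^ 2) (ν/2) hp * rpowC (‖A‖ ^ 2) (ν/2) hp = rpowC (‖A‖ ^ 2) ν hν0.le := by
    ext r
    simp only [ContinuousMap.mul_apply, rpowC, ContinuousMap.coe_mk]
    rw [← Real.rpow_add' r.2.1 (by intro hc; rw [← hc] at hν0; linarith : ν/2 + ν/2 ≠ 0)]
    norm_num
  have hT2 : ⟪z, (Φ (rpowC (‖A‖ ^ 2) ν hν0.le)) z⟫ = ‖(Φ (rpowC (‖A‖ ^ 2) (ν/2) hp)) z‖ ^ 2 := by
    rw [← hff, map_mul, ContinuousLinearMap.mul_apply, ← hsa,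
      real_inner_self_eq_norm_sq]
  -- the λ-family of bounds
  have hlam : ∀ lam : ℝ, 0 < lam →
      ⟪z, (Φ (rpowC (‖A‖ ^ 2) ν hν0.le)) z⟫
        ≤ ν * lam ^ (ν - 1) * ‖A z‖ ^ 2 + (1 - ν) * lam ^ ν * ‖z‖ ^ 2 := by
    intro lam hlam
    set h : C(Set.Icc (0:ℝ) (‖A‖ ^ 2), ℝ) :=
      (ν * lam ^ (ν - 1)) • idC (‖A‖ ^ 2) + ((1 - ν) * lam ^ ν) • (1 : C(Set.Icc (0:ℝ) (‖A‖ ^ 2), ℝ)) with hh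
    have hpt : ∀ r : Set.Icc (0:ℝ) (‖A‖ ^ 2), (rpowC (‖A‖ ^ 2) ν hν0.le) r ≤ h r := by
      intro r
      have hr : (0:ℝ) ≤ (r:ℝ) := r.2.1
      have g1 : (r:ℝ) ^ ν * lam ^ (1 - ν) ≤ ν * r + (1 - ν) * lam :=
        Real.geom_mean_le_arith_mean2_weighted hν0.le (by linarith) hr hlam.le (by ring)
      have g2 : lam ^ (1 - ν) * lam ^ (ν - 1) = 1 := by
        rw [← Real.rpow_add hlam]; norm_num
      have g3 : lam * lam ^ (ν - 1) = lam ^ ν := by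
        nth_rewrite 1 [← Real.rpow_one lam]
        rw [← Real.rpow_add hlam]; ring_nf
      have := mul_le_mul_of_nonneg_right g1 (Real.rpow_nonneg hlam.le (ν - 1))
      calc (rpowC (‖A‖ ^ 2) ν hν0.le) r = (r:ℝ) ^ ν := rfl
        _ = (r:ℝ) ^ ν * lam ^ (1 - ν) * lam ^ (ν - 1) := by
            rw [mul_assoc, g2, mul_one]
        _ ≤ (ν * r + (1 - ν) * lam) * lam ^ (ν - 1) := this
        _ = ν * lam ^ (ν - 1) * r + (1 - ν) * (lam * lam ^ (ν - 1)) := by ring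
        _ = h r := by
            rw [g3]
            simp [hh, idC, ContinuousMap.add_apply, ContinuousMap.smul_apply]
    have := hmono _ _ hpt
    rw [hh, map_add, map_smul, map_smul, ContinuousLinearMap.add_apply,
      ContinuousLinearMap.smul_apply, ContinuousLinearMap.smul_apply,
      inner_add_right, real_inner_smul_right, real_inner_smul_right, hOne, hId] at this
    calc ⟪z, (Φ (rpowC (‖A‖ ^ 2) ν hν0.le)) z⟫ ≤ _ := this
      _ = ν * lam ^ (ν - 1) * ‖A z‖ ^ 2 + (1 - ν) * lam ^ ν * ‖z‖ ^ 2 := by ring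
  -- main estimate on ‖Tz‖²
  rcases eq_or_lt_of_le (norm_nonneg z) with hz | hz
  · -- z = 0
    have hz0 : z = 0 := by rwa [eq_comm, norm_eq_zero] at hz
    rw [hz0, map_zero, norm_zero]
    positivity
  · have key : ‖(Φ (rpowC (‖A‖ ^ 2) (ν/2) hp)) z‖ ^ 2 ≤ (‖z‖ ^ 2) ^ (1 - ν) * (‖A z‖ ^ 2) ^ ν := by
      rw [← hT2]
      set P := ‖A z‖ ^ 2 with hP
      set Q := ‖z‖ ^ 2 with hQ
      have hQ0 : 0 < Q := by positivity
      rcases eq_or_lt_of_le (by positivity : (0:ℝ) ≤ P) with hP0 | hP0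
      · -- P = 0
        rw [← hP0, Real.zero_rpow hν0.ne', mul_zero]
        rcases eq_or_lt_of_le hν1 with he | hlt
        · have h1 := hlam 1 one_pos
          rw [← hP0] at h1
          have h2 : ν * (1:ℝ) ^ (ν - 1) * 0 + (1 - ν) * (1:ℝ) ^ ν * Q = 0 := by
            rw [he]; simp
          linarith
        · apply le_of_forall_pos_le_add
          intro ε hε
          set lam := (ε / ((1 - ν) * Q)) ^ (ν⁻¹ : ℝ) with hlamdef
          have hεq : 0 < ε / ((1 - ν) * Q) := by
            apply div_pos hε; nlinarith
          have hlampos : 0 < lam := Real.rpow_pos_of_pos hεq _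
          have hlamν : lam ^ ν = ε / ((1 - ν) * Q) := Real.rpow_inv_rpow hεq.le hν0.ne'
          have := hlam lam hlampos
          rw [← hP0, mul_zero, zero_add, hlamν] at this
          calc ⟪z, (Φ (rpowC (‖A‖ ^ 2) ν hν0.le)) z⟫ ≤ (1 - ν) * (ε / ((1 - ν) * Q)) * Q := this
            _ = ε := by
                have hne1 : (1-ν) ≠ 0 := by linarith
                have hne2 : Q ≠ 0 := ne_of_gt hQ0
                field_simp
                try ring
            _ = 0 + ε := by ring
      · -- P > 0
        have := hlam (P / Q) (div_pos hP0 hQ0)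
        have e1 : (P / Q) ^ (ν - 1) = P ^ (ν - 1) * Q ^ (1 - ν) := by
          rw [Real.div_rpow hP0.le hQ0.le, div_eq_mul_inv, ← Real.rpow_neg hQ0.le]
          norm_num
        have e2 : (P / Q) ^ ν = P ^ ν * Q ^ (-ν) := by
          rw [Real.div_rpow hP0.le hQ0.le, div_eq_mul_inv, ← Real.rpow_neg hQ0.le]
        have e3 : P ^ (ν - 1) * P = P ^ ν := by
          rw [← Real.rpow_add_one hP0.ne' (ν - 1)]; ring_nf
        have e4 : Q ^ (-ν) * Q = Q ^ (1 - ν) := by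
          rw [← Real.rpow_add_one hQ0.ne' (-ν)]; ring_nf
        calc ⟪z, (Φ (rpowC (‖A‖ ^ 2) ν hν0.le)) z⟫ ≤ ν * (P/Q) ^ (ν - 1) * P + (1 - ν) * (P/Q) ^ ν * Q := this
          _ = ν * (P ^ (ν-1) * P) * Q ^ (1-ν) + (1 - ν) * P ^ ν * (Q ^ (-ν) * Q) := by
              rw [e1, e2]; ring
          _ = Q ^ (1 - ν) * P ^ ν := by rw [e3, e4]; ring
    -- take square roots
    have hrhs : (0:ℝ) ≤ ‖z‖ ^ (1 - ν) * ‖A z‖ ^ ν := by positivity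
    have hsq : (‖z‖ ^ (1 - ν) * ‖A z‖ ^ ν) ^ 2 = (‖z‖ ^ 2) ^ (1 - ν) * (‖A z‖ ^ 2) ^ ν := by
      rw [mul_pow, ← Real.rpow_natCast (‖z‖ ^ (1-ν)) 2, ← Real.rpow_natCast (‖A z‖ ^ ν) 2,
        ← Real.rpow_mul (norm_nonneg z), ← Real.rpow_mul (norm_nonneg (A z)),
        ← Real.rpow_natCast ‖z‖ 2, ← Real.rpow_natCast ‖A z‖ 2,
        ← Real.rpow_mul (norm_nonneg z), ← Real.rpow_mul (norm_nonneg (A z))]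
      push_cast
      rw [mul_comm (1-ν) 2, mul_comm ν 2]
    rw [← hsq] at key
    exact (pow_le_pow_iff_left₀ (norm_nonneg _) hrhs (by norm_num : (2:ℕ) ≠ 0)).mp key

/-- Remark 3.7: in Hilbert spaces, the spectral source condition
`ξ† = (A*A)^{ν/2} ω ∈ ∂R(x†)` (with `0 < ν ≤ 1`) implies the variational source condition
`(1/2) D_R^{ξ†}(x, x†) ≤ R(x) - R(x†) + C_ν ‖ω‖^{2/(1+ν)} ‖Ax - y‖^{2ν/(1+ν)}` on `dom R`,
with `C_ν = ((1+ν)/2)((1-ν)/c₀)^{(1-ν)/(1+ν)}`. Here the fractional power `(A*A)^{ν/2}` is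
realized through a (necessarily unique) continuous unital star algebra homomorphism
`Φ : C([0, ‖A‖²], ℝ) → (X →L[ℝ] X)` sending the identity function to `A*A`
(the continuous functional calculus of the nonnegative self-adjoint operator `A*A`). -/
theorem spectral_source_condition_implies_vsc
    {X Y : Type*} [NormedAddCommGroup X] [InnerProductSpace ℝ X] [CompleteSpace X]
    [NormedAddCommGroup Y] [InnerProductSpace ℝ Y] [CompleteSpace Y]
    (A : X →L[ℝ] Y) (R : X → ℝ≥0∞) (c₀ : ℝ) (hc₀ : 0 < c₀)
    (hproper : ∃ u : X, R u ≠ ⊤)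
    (hlsc : LowerSemicontinuous R)
    (hsconv : ∀ u v : X, R u ≠ ⊤ → R v ≠ ⊤ → ∀ s : ℝ, 0 ≤ s → s ≤ 1 →
      R (s • u + (1 - s) • v) + ENNReal.ofReal (c₀ * s * (1 - s) * ‖u - v‖ ^ 2)
        ≤ ENNReal.ofReal s * R u + ENNReal.ofReal (1 - s) * R v)
    (y : Y) (xdag : X) (hxdag_sol : A xdag = y) (hxdag_dom : R xdag ≠ ⊤)
    (ν : ℝ) (hν0 : 0 < ν) (hν1 : ν ≤ 1) (w : X)
    -- the continuous functional calculus of A*A on C([0, ‖A‖²], ℝ)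
    (Φ : C(Set.Icc (0 : ℝ) (‖A‖ ^ 2), ℝ) →⋆ₐ[ℝ] (X →L[ℝ] X))
    (hΦ_cont : Continuous Φ)
    (hΦ_id : Φ (idC (‖A‖ ^ 2)) = (ContinuousLinearMap.adjoint A).comp A)
    -- the spectral source condition ξ† := (A*A)^{ν/2} ω ∈ ∂R(x†)
    (ξdag : X)
    (hξ : ξdag = (Φ (rpowC (‖A‖ ^ 2) (ν / 2) (by positivity))) w)
    (hsub : ∀ z : X, ENNReal.ofReal ((R xdag).toReal + ⟪ξdag, z - xdag⟫) ≤ R z) :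
    ∀ x : X, R x ≠ ⊤ →
      (1 / 2) * ((R x).toReal - (R xdag).toReal - ⟪ξdag, x - xdag⟫)
        ≤ (R x).toReal - (R xdag).toReal
          + (((1 + ν) / 2) * ((1 - ν) / c₀) ^ ((1 - ν) / (1 + ν)))
              * ‖w‖ ^ (2 / (1 + ν)) * ‖A x - y‖ ^ (2 * ν / (1 + ν)) := by
  intro x hx
  set ΔR : ℝ := (R x).toReal - (R xdag).toReal with hΔR
  set ip : ℝ := ⟪ξdag, x - xdag⟫ with hip
  set K : ℝ := ‖x - xdag‖ ^ 2 with hK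
  have hK0 : 0 ≤ K := by positivity
  -- Step 1: strong convexity + subgradient ⟹ c₀ K ≤ ΔR - ip
  have hstep : ∀ s : ℝ, 0 < s → s ≤ 1 → ip + c₀ * (1 - s) * K ≤ ΔR := by
    intro s hs0 hs1
    set zs : X := s • x + (1 - s) • xdag with hzs
    have h1 := hsconv x xdag hx hxdag_dom s hs0.le hs1
    have hRHS : ENNReal.ofReal s * R x + ENNReal.ofReal (1 - s) * R xdag ≠ ⊤ := by
      apply ENNReal.add_ne_top.mpr
      constructor <;> exact ENNReal.mul_ne_top ENNReal.ofReal_ne_top (by assumption)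
    have hzsub : zs - xdag = s • (x - xdag) := by
      rw [hzs]; rw [smul_sub, sub_smul, one_smul]; abel
    have h2 := hsub zs
    rw [hzsub, real_inner_smul_right] at h2
    have hchain : ENNReal.ofReal (((R xdag).toReal + s * ip) + c₀ * s * (1 - s) * K)
        ≤ ENNReal.ofReal s * R x + ENNReal.ofReal (1 - s) * R xdag := by
      calc ENNReal.ofReal (((R xdag).toReal + s * ip) + c₀ * s * (1 - s) * K)
          ≤ ENNReal.ofReal ((R xdag).toReal + s * ip)
              + ENNReal.ofReal (c₀ * s * (1 - s) * K) := ENNReal.ofReal_add_le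
        _ ≤ R zs + ENNReal.ofReal (c₀ * s * (1 - s) * K) := by gcongr
        _ ≤ _ := h1
    have hreal := (ENNReal.ofReal_le_iff_le_toReal hRHS).mp hchain
    have htr : (ENNReal.ofReal s * R x + ENNReal.ofReal (1 - s) * R xdag).toReal
        = s * (R x).toReal + (1 - s) * (R xdag).toReal := by
      rw [ENNReal.toReal_add (ENNReal.mul_ne_top ENNReal.ofReal_ne_top hx)
          (ENNReal.mul_ne_top ENNReal.ofReal_ne_top hxdag_dom),
        ENNReal.toReal_mul, ENNReal.toReal_mul, ENNReal.toReal_ofReal hs0.le,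
        ENNReal.toReal_ofReal (by linarith)]
    rw [htr] at hreal
    -- now a real inequality: (Rxdag) + s ip + c₀ s (1-s) K ≤ s Rx + (1-s) Rxdag
    have hmul : s * (ip + c₀ * (1 - s) * K) ≤ s * ΔR := by nlinarith
    exact le_of_mul_le_mul_left (by linarith) hs0
  have hD : c₀ * K ≤ ΔR - ip := by
    rcases eq_or_lt_of_le hK0 with hKz | hKz
    · have := hstep 1 one_pos le_rfl
      rw [← hKz] at *
      simp at this ⊢
      linarith [hstep 1 one_pos le_rfl]
    · apply le_of_forall_pos_le_add
      intro ε hε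
      set s : ℝ := min (ε / (c₀ * K)) 1 with hsdef
      have hs0 : 0 < s := lt_min (by positivity) one_pos
      have hs1 : s ≤ 1 := min_le_right _ _
      have := hstep s hs0 hs1
      have hsεK : s * (c₀ * K) ≤ ε := by
        calc s * (c₀ * K) ≤ (ε / (c₀ * K)) * (c₀ * K) := by
              apply mul_le_mul_of_nonneg_right (min_le_left _ _) (by positivity)
          _ = ε := by field_simp
      nlinarith
  -- Step 2: the interpolation bound on -ip
  have hip2 : -ip ≤ ‖w‖ * ‖x - xdag‖ ^ (1 - ν) * ‖A x - y‖ ^ ν := by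
    have hv : -ip = ⟪ξdag, xdag - x⟫ := by
      rw [hip, ← inner_neg_right, neg_sub]
    have hsa : ⟪ξdag, xdag - x⟫ = ⟪w, (Φ (rpowC (‖A‖ ^ 2) (ν / 2) (by positivity))) (xdag - x)⟫ := by
      rw [hξ]
      have hstar : star (rpowC (‖A‖ ^ 2) (ν / 2) (by positivity : (0:ℝ) ≤ ν/2)) =
          rpowC (‖A‖ ^ 2) (ν / 2) (by positivity) := by ext r; simp
      have hΦstar : ContinuousLinearMap.adjoint (Φ (rpowC (‖A‖ ^ 2) (ν / 2) (by positivity))) =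
          Φ (rpowC (‖A‖ ^ 2) (ν / 2) (by positivity)) := by
        rw [← ContinuousLinearMap.star_eq_adjoint, ← map_star, hstar]
      calc ⟪(Φ (rpowC (‖A‖ ^ 2) (ν / 2) (by positivity))) w, xdag - x⟫
          = ⟪(ContinuousLinearMap.adjoint (Φ (rpowC (‖A‖ ^ 2) (ν / 2) (by positivity)))) w,
              xdag - x⟫ := by rw [hΦstar]
        _ = ⟪w, (Φ (rpowC (‖A‖ ^ 2) (ν / 2) (by positivity))) (xdag - x)⟫ :=
            ContinuousLinearMap.adjoint_inner_left _ _ _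
    have hcs : ⟪w, (Φ (rpowC (‖A‖ ^ 2) (ν / 2) (by positivity))) (xdag - x)⟫
        ≤ ‖w‖ * ‖(Φ (rpowC (‖A‖ ^ 2) (ν / 2) (by positivity))) (xdag - x)‖ :=
      real_inner_le_norm _ _
    have hint := aux_interp A ν hν0 hν1 Φ hΦ_id (by positivity) (xdag - x)
    have hnorm1 : ‖xdag - x‖ = ‖x - xdag‖ := norm_sub_rev _ _
    have hnorm2 : ‖A (xdag - x)‖ = ‖A x - y‖ := by
      rw [map_sub, hxdag_sol, norm_sub_rev]
    rw [hnorm1, hnorm2] at hint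
    calc -ip = ⟪w, (Φ (rpowC (‖A‖ ^ 2) (ν / 2) (by positivity))) (xdag - x)⟫ := by
          rw [hv, hsa]
      _ ≤ ‖w‖ * ‖(Φ (rpowC (‖A‖ ^ 2) (ν / 2) (by positivity))) (xdag - x)‖ := hcs
      _ ≤ ‖w‖ * (‖x - xdag‖ ^ (1 - ν) * ‖A x - y‖ ^ ν) := by
          apply mul_le_mul_of_nonneg_left hint (norm_nonneg w)
      _ = ‖w‖ * ‖x - xdag‖ ^ (1 - ν) * ‖A x - y‖ ^ ν := by ring
  -- Step 3: Young's inequality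
  have hy := aux_young c₀ ν ‖w‖ ‖x - xdag‖ ‖A x - y‖ hc₀ hν0 hν1
    (norm_nonneg _) (norm_nonneg _) (norm_nonneg _)
  rw [← hK] at hy
  linarith
end

section
/- Under the standing assumptions (X Banach, Y Hilbert, A : X → Y bounded linear, R proper, lower semicontinuous, c₀-strongly convex, Ax = y solvable in dom(R), y₁, y₂, … i.i.d. Y-valued with E[y₁] = y and 0 < σ² < ∞), consider the dual gradient iterates with averaged data ȳ⁽ⁿ⁾, λ₀⁽ⁿ⁾ = 0, and 0 < γ < 2c₀/‖A‖². Let t_n be chosen by the discrepancy-type rule (the first integer t ≤ β₀n with ‖Ax_t⁽ⁿ⁾ − ȳ⁽ⁿ⁾‖ ≤ τ_n s_n/√n, and t_n = β₀n if no such t exists), where τ_n → ∞ and τ_n/√n → 0. Set φ(n) := στ_n/(2√n) and let Ω_n := {|s_n − σ| ≤ σ/2, ‖ȳ⁽ⁿ⁾ − y‖ ≤ τ_n √(c s_n²/(2n))} with c := 1/2 − γ‖A‖²/(4c₀). Then for every ε > 0 there is an integer n_ε such that t_n φ(n)² ≤ ε on Ω_n for all n ≥ n_ε. -/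
/-!
Along the dual gradient path with data `ȳ = ȳ⁽ⁿ⁾`, consider the exact-data dual value
`G t = ⟪λ_t, A x_t - y⟫ - R x_t`. On `Ω_n` the noise satisfies `‖ȳ - y‖² ≤ (c/2) δ²` for the
discrepancy threshold `δ = τ_n s_n / √n`, so while the residual `‖A x_t - ȳ‖` exceeds `δ`,
i.e. before the stopping index, each step lowers `G` by at least `γ δ² / 4`.

Fix `ε` and a pair `(λ̄, x̄)`, `x̄` minimizing `R - ⟪λ̄, A ·⟫`, whose dual value is within
`γ ε / 16` of the infimum over all such pairs; every `G t` is such a value, so `G` never drops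
below that of `(λ̄, x̄)` by more than `γ ε / 16`. A Fejér estimate for `‖λ_t - λ̄‖²` over the
first `m` steps brings `G` down to the value of `(λ̄, x̄)` up to `O(1/m) + O(δ)`, so after step
`m` at most `O(1/m + δ + ε) / δ²` further steps happen before stopping. Choosing `m` large and
then `n` large, so that `φ(n) ≤ δ ≤ (3/2) σ τ_n / √n` is small, gives `t_n φ(n)² ≤ ε`.
-/

open MeasureTheory ProbabilityTheory Filter Topology
open scoped RealInnerProductSpace ENNReal BigOperators

/-- The square root `s_n` of the sample variance of the first `n` measurements. -/
noncomputable def sampleSD {Y Ω : Type*} [NormedAddCommGroup Y] [NormedSpace ℝ Y]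
    (ys : ℕ → Ω → Y) (n : ℕ) (ω : Ω) : ℝ :=
  Real.sqrt (((n : ℝ) - 1)⁻¹ * ∑ i ∈ Finset.range n, ‖ys i ω - sampleMean ys n ω‖ ^ 2)

theorem le_of_forall_sub_mul_le {a b M : ℝ} (h : ∀ s : ℝ, 0 < s → s ≤ 1 → a - s * b ≤ M) :
    a ≤ M := by
  have hlim : Tendsto (fun s : ℝ => a - s * b) (𝓝[>] 0) (𝓝 a) := by
    refine tendsto_nhdsWithin_of_tendsto_nhds ?_
    have : Continuous fun s : ℝ => a - s * b := by fun_prop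
    simpa using this.tendsto 0
  exact le_of_tendsto hlim (mem_of_superset (Ioc_mem_nhdsGT one_pos) fun s hs => h s hs.1 hs.2)

theorem one_half_sub_div_nonneg {γ a c₀ : ℝ} (hc₀ : 0 < c₀) (h : γ * a ≤ 2 * c₀) :
    0 ≤ 1 / 2 - γ * a / (4 * c₀) := by
  rw [sub_nonneg, div_le_iff₀ (by positivity)]
  linarith

theorem add_sum_Ico_le {f g : ℕ → ℝ} {k m : ℕ} (hkm : k ≤ m)
    (h : ∀ t ∈ Finset.Ico k m, f (t + 1) + g t ≤ f t) :
    f m + ∑ t ∈ Finset.Ico k m, g t ≤ f k := by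
  have hsum : ∑ t ∈ Finset.Ico k m, g t ≤ ∑ t ∈ Finset.Ico k m, -(f (t + 1) - f t) :=
    Finset.sum_le_sum fun t ht => by linarith [h t ht]
  rw [Finset.sum_neg_distrib, Finset.sum_Ico_sub f hkm] at hsum
  linarith

theorem sq_le_half_mul_sq_of_le_mul_sqrt {e τ c s n : ℝ} (hc : 0 ≤ c) (hn : 0 ≤ n) (he : 0 ≤ e)
    (h : e ≤ τ * √(c * s ^ 2 / (2 * n))) : e ^ 2 ≤ c / 2 * (s * (τ / √n)) ^ 2 := by
  have := pow_le_pow_left₀ he h 2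
  rw [mul_pow, Real.sq_sqrt (by positivity)] at this
  rw [mul_pow, div_pow, Real.sq_sqrt hn]
  exact this.trans_eq (by ring)

section DualGradient

variable {X Y : Type*} [NormedAddCommGroup X] [NormedSpace ℝ X]
  [NormedAddCommGroup Y] [InnerProductSpace ℝ Y]

/-- Strong convexity of an extended-valued function on its effective domain; the modulus is
`2 * c₀` in the convention of `StrongConvexOn`. -/
def IsStronglyConvex (c₀ : ℝ) (R : X → ℝ≥0∞) : Prop :=
  ∀ u v : X, R u ≠ ⊤ → R v ≠ ⊤ → ∀ s : ℝ, 0 ≤ s → s ≤ 1 →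
    R (s • u + (1 - s) • v) + ENNReal.ofReal (c₀ * s * (1 - s) * ‖u - v‖ ^ 2)
      ≤ ENNReal.ofReal s * R u + ENNReal.ofReal (1 - s) * R v

theorem IsStronglyConvex.toReal_add_le {c₀ : ℝ} {R : X → ℝ≥0∞} (hR : IsStronglyConvex c₀ R)
    (hc₀ : 0 ≤ c₀) {u v : X} (hu : R u ≠ ⊤) (hv : R v ≠ ⊤) {s : ℝ} (hs₀ : 0 ≤ s) (hs₁ : s ≤ 1) :
    R (s • u + (1 - s) • v) ≠ ⊤ ∧
      (R (s • u + (1 - s) • v)).toReal + c₀ * s * (1 - s) * ‖u - v‖ ^ 2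
        ≤ s * (R u).toReal + (1 - s) * (R v).toReal := by
  have h := hR u v hu hv s hs₀ hs₁
  have hrhs : ENNReal.ofReal s * R u + ENNReal.ofReal (1 - s) * R v ≠ ⊤ := by finiteness
  have hw : R (s • u + (1 - s) • v) ≠ ⊤ := ne_top_of_le_ne_top hrhs (le_self_add.trans h)
  refine ⟨hw, ?_⟩
  have hs₁' := sub_nonneg.2 hs₁
  have := ENNReal.toReal_mono hrhs h
  rwa [ENNReal.toReal_add hw ENNReal.ofReal_ne_top,
    ENNReal.toReal_add (by finiteness) (by finiteness), ENNReal.toReal_mul, ENNReal.toReal_mul,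
    ENNReal.toReal_ofReal (by positivity), ENNReal.toReal_ofReal hs₀,
    ENNReal.toReal_ofReal hs₁'] at this

variable (A : X →L[ℝ] Y) (R : X → ℝ≥0∞)

/-- `x` minimizes `z ↦ R z - ⟪ν, A z⟫`. -/
def IsDualMinimizer (ν : Y) (x : X) : Prop :=
  R x ≠ ⊤ ∧ ∀ z : X, ENNReal.ofReal ((R x).toReal - ⟪ν, A x⟫ + ⟪ν, A z⟫) ≤ R z

/-- For `IsDualMinimizer A R ν x` this is `R^*(A^* ν) - ⟪ν, b⟫`, the objective at `ν` of the
problem dual to minimizing `R` subject to `A x = b`. -/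
def dualValue (b ν : Y) (x : X) : ℝ := ⟪ν, A x - b⟫ - (R x).toReal

variable {A R}

theorem dualValue_eq_add_inner (b y ν : Y) (x : X) :
    dualValue A R y ν x = dualValue A R b ν x + ⟪ν, b - y⟫ := by
  rw [dualValue, dualValue, ← sub_add_sub_cancel (A x) b y, inner_add_right]
  ring

theorem IsDualMinimizer.toReal_add_inner_le {ν : Y} {x z : X} (h : IsDualMinimizer A R ν x)
    (hz : R z ≠ ⊤) : (R x).toReal + ⟪ν, A z - A x⟫ ≤ (R z).toReal := by
  have := (ENNReal.ofReal_le_iff_le_toReal hz).1 (h.2 z)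
  rw [inner_sub_right]
  linarith

/-- Optimality of `x` tested at the points of the segment `[x, z]`, which strong convexity
controls, in the limit where they approach `x`. -/
theorem IsDualMinimizer.toReal_add_inner_add_sq_le {c₀ : ℝ} (hR : IsStronglyConvex c₀ R)
    (hc₀ : 0 ≤ c₀) {ν : Y} {x z : X} (h : IsDualMinimizer A R ν x) (hz : R z ≠ ⊤) :
    (R x).toReal + ⟪ν, A z - A x⟫ + c₀ * ‖z - x‖ ^ 2 ≤ (R z).toReal := by
  suffices ⟪ν, A z - A x⟫ + c₀ * ‖z - x‖ ^ 2 ≤ (R z).toReal - (R x).toReal by linarith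
  refine le_of_forall_sub_mul_le (b := c₀ * ‖z - x‖ ^ 2) fun s hs₀ hs₁ => ?_
  obtain ⟨hw, hconv⟩ := hR.toReal_add_le hc₀ hz h.1 hs₀.le hs₁
  have hopt := h.toReal_add_inner_le hw
  have hAw : A (s • z + (1 - s) • x) - A x = s • (A z - A x) := by
    simp only [map_add, map_smul]; module
  rw [hAw, inner_smul_right] at hopt
  have := mul_le_mul_of_nonneg_left hconv hs₀.le
  nlinarith

theorem IsDualMinimizer.dualValue_le_sub {c₀ γ : ℝ} (hR : IsStronglyConvex c₀ R) (hc₀ : 0 < c₀)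
    (hγ : 0 ≤ γ) {b ν ν' : Y} {x x' : X} (h : IsDualMinimizer A R ν x)
    (h' : IsDualMinimizer A R ν' x') (hν' : ν' = ν - γ • (A x - b)) :
    dualValue A R b ν' x' ≤
      dualValue A R b ν x - γ * (1 - γ * ‖A‖ ^ 2 / (4 * c₀)) * ‖A x - b‖ ^ 2 := by
  have hopt := h.toReal_add_inner_add_sq_le hR hc₀.le h'.1
  have hd : ‖A x' - A x‖ ≤ ‖A‖ * ‖x' - x‖ := by rw [← map_sub]; exact A.le_opNorm _
  set r := A x - b
  set d := A x' - A x
  have hcs : γ * -⟪r, d⟫ ≤ γ * (‖r‖ * (‖A‖ * ‖x' - x‖)) := by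
    gcongr
    exact (neg_le_abs _).trans ((abs_real_inner_le_norm r d).trans (by gcongr))
  have young : γ * (‖r‖ * (‖A‖ * ‖x' - x‖))
      ≤ c₀ * ‖x' - x‖ ^ 2 + γ ^ 2 * ‖A‖ ^ 2 * ‖r‖ ^ 2 / (4 * c₀) := by
    rw [← sub_nonneg]
    have : c₀ * ‖x' - x‖ ^ 2 + γ ^ 2 * ‖A‖ ^ 2 * ‖r‖ ^ 2 / (4 * c₀)
        - γ * (‖r‖ * (‖A‖ * ‖x' - x‖)) = (2 * c₀ * ‖x' - x‖ - γ * ‖A‖ * ‖r‖) ^ 2 / (4 * c₀) := by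
      field_simp; ring
    rw [this]; positivity
  have hsplit : A x' - b = r + d := by simp only [r, d]; abel
  simp only [dualValue, hν', hsplit, inner_sub_left, inner_add_right, real_inner_smul_left,
    real_inner_self_eq_norm_sq]
  have hq : γ * (1 - γ * ‖A‖ ^ 2 / (4 * c₀)) * ‖r‖ ^ 2
      = γ * ‖r‖ ^ 2 - γ ^ 2 * ‖A‖ ^ 2 * ‖r‖ ^ 2 / (4 * c₀) := by ring
  linarith

theorem IsDualMinimizer.dualValue_add_le {c₀ γ : ℝ} (hR : IsStronglyConvex c₀ R) (hc₀ : 0 < c₀)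
    (hγ : 0 ≤ γ) (hγA : γ * ‖A‖ ^ 2 ≤ 2 * c₀) {b y ν ν' : Y} {x x' : X}
    (h : IsDualMinimizer A R ν x) (h' : IsDualMinimizer A R ν' x') (hν' : ν' = ν - γ • (A x - b))
    (hnoise : ‖b - y‖ ^ 2 ≤ (1 / 2 - γ * ‖A‖ ^ 2 / (4 * c₀)) / 2 * ‖A x - b‖ ^ 2) :
    dualValue A R y ν' x' + γ / 4 * ‖A x - b‖ ^ 2 ≤ dualValue A R y ν x := by
  have hdesc := h.dualValue_le_sub hR hc₀ hγ h' hν'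
  subst hν'
  set r := A x - b
  set c := 1 / 2 - γ * ‖A‖ ^ 2 / (4 * c₀) with hc_def
  have hc : 0 ≤ c := one_half_sub_div_nonneg hc₀ hγA
  have hθ : 1 - γ * ‖A‖ ^ 2 / (4 * c₀) = 1 / 2 + c := by rw [hc_def]; ring
  rw [hθ] at hdesc
  have hcs : γ * -⟪r, b - y⟫ ≤ γ * (‖r‖ ^ 2 / 4 + c / 2 * ‖r‖ ^ 2) := by
    gcongr
    nlinarith [neg_le_abs ⟪r, b - y⟫, abs_real_inner_le_norm r (b - y),
      sq_nonneg (‖r‖ / 2 - ‖b - y‖)]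
  rw [dualValue_eq_add_inner b, dualValue_eq_add_inner b y ν, inner_sub_left,
    real_inner_smul_left]
  nlinarith [mul_nonneg (mul_nonneg hγ hc) (sq_nonneg ‖r‖)]

theorem IsDualMinimizer.dualValue_sub_le_inner {y ν ν' : Y} {x x' : X}
    (h' : IsDualMinimizer A R ν' x') (hx : R x ≠ ⊤) :
    dualValue A R y ν x - dualValue A R y ν' x' ≤ ⟪ν - ν', A x - y⟫ := by
  have := h'.toReal_add_inner_le hx
  simp only [dualValue, inner_sub_left, inner_sub_right] at this ⊢
  linarith

theorem IsDualMinimizer.neg_le_dualValue {y ν : Y} {x x₀ : X} (h : IsDualMinimizer A R ν x)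
    (hx₀ : A x₀ = y) (hR₀ : R x₀ ≠ ⊤) : -(R x₀).toReal ≤ dualValue A R y ν x := by
  have := h.toReal_add_inner_le hR₀
  rw [hx₀] at this
  simp only [dualValue, inner_sub_right] at this ⊢
  linarith

theorem exists_isDualMinimizer_dualValue_le_add {y : Y} {x₀ : X} (hx₀ : A x₀ = y)
    (hR₀ : R x₀ ≠ ⊤) (hne : ∃ ν x, IsDualMinimizer A R ν x) {ε : ℝ} (hε : 0 < ε) :
    ∃ ν' x', IsDualMinimizer A R ν' x' ∧
      ∀ ν x, IsDualMinimizer A R ν x → dualValue A R y ν' x' ≤ dualValue A R y ν x + ε := by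
  set S := {v | ∃ ν x, IsDualMinimizer A R ν x ∧ dualValue A R y ν x = v}
  have hbdd : BddBelow S := ⟨_, by rintro _ ⟨ν, x, h, rfl⟩; exact h.neg_le_dualValue hx₀ hR₀⟩
  obtain ⟨ν₁, x₁, h₁⟩ := hne
  obtain ⟨_, ⟨ν', x', h', rfl⟩, hlt⟩ :=
    Real.lt_sInf_add_pos (s := S) ⟨_, ν₁, x₁, h₁, rfl⟩ hε
  exact ⟨ν', x', h', fun ν x h => by linarith [csInf_le hbdd ⟨ν, x, h, rfl⟩]⟩

variable (A R) in
structure IsDualGradientPath (γ : ℝ) (b : Y) (ν : ℕ → Y) (x : ℕ → X) : Prop where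
  zero : ν 0 = 0
  isDualMinimizer : ∀ t, IsDualMinimizer A R (ν t) (x t)
  succ : ∀ t, ν (t + 1) = ν t - γ • (A (x t) - b)

namespace IsDualGradientPath

variable {γ : ℝ} {b y : Y} {ν : ℕ → Y} {x : ℕ → X}

theorem norm_le_mul (hp : IsDualGradientPath A R γ b ν x) (hγ : 0 ≤ γ) {ρ : ℝ} {t : ℕ}
    (hres : ∀ s < t, ‖A (x s) - b‖ ≤ ρ) : ‖ν t‖ ≤ γ * t * ρ := by
  induction t with
  | zero => simp [hp.zero]
  | succ t ih =>
    rw [hp.succ]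
    calc ‖ν t - γ • (A (x t) - b)‖ ≤ ‖ν t‖ + γ * ‖A (x t) - b‖ :=
          (norm_sub_le _ _).trans_eq (by rw [norm_smul, Real.norm_of_nonneg hγ])
      _ ≤ γ * t * ρ + γ * ρ := by
          gcongr
          · exact ih fun s hs => hres s (hs.trans t.lt_succ_self)
          · exact hres t t.lt_succ_self
      _ = γ * ↑(t + 1) * ρ := by push_cast; ring

theorem two_mul_sum_inner_eq (hp : IsDualGradientPath A R γ b ν x) (μ : Y) (m : ℕ) :
    2 * γ * ∑ t ∈ Finset.range m, ⟪ν t - μ, A (x t) - b⟫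
      = ‖μ‖ ^ 2 - ‖ν m - μ‖ ^ 2 + γ ^ 2 * ∑ t ∈ Finset.range m, ‖A (x t) - b‖ ^ 2 := by
  induction m with
  | zero => simp [hp.zero]
  | succ m ih =>
    have hstep : ν (m + 1) - μ = (ν m - μ) - γ • (A (x m) - b) := by rw [hp.succ]; abel
    rw [Finset.sum_range_succ, Finset.sum_range_succ, hstep, norm_sub_sq_real,
      inner_smul_right, norm_smul, Real.norm_eq_abs, mul_pow, sq_abs]
    linarith

theorem dualValue_zero_nonpos (hp : IsDualGradientPath A R γ b ν x) :
    dualValue A R y (ν 0) (x 0) ≤ 0 := by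
  simp [dualValue, hp.zero]

theorem sum_sq_le (hp : IsDualGradientPath A R γ b ν x) (hγ : 0 < γ) {x₀ : X} (hx₀ : A x₀ = y)
    (hR₀ : R x₀ ≠ ⊤) {m : ℕ}
    (hdesc : ∀ t < m, dualValue A R y (ν (t + 1)) (x (t + 1)) + γ / 4 * ‖A (x t) - b‖ ^ 2
      ≤ dualValue A R y (ν t) (x t)) :
    ∑ t ∈ Finset.range m, ‖A (x t) - b‖ ^ 2 ≤ 4 * (R x₀).toReal / γ := by
  have htel := add_sum_Ico_le (f := fun t => dualValue A R y (ν t) (x t))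
    (g := fun t => γ / 4 * ‖A (x t) - b‖ ^ 2) m.zero_le
    fun t ht => hdesc t (Finset.mem_Ico.1 ht).2
  rw [← Finset.range_eq_Ico, ← Finset.mul_sum] at htel
  have := (hp.isDualMinimizer m).neg_le_dualValue hx₀ hR₀
  have := hp.dualValue_zero_nonpos (y := y)
  rw [le_div_iff₀ hγ]
  linarith

theorem mul_dualValue_sub_le (hp : IsDualGradientPath A R γ b ν x) (hγ : 0 < γ) {x₀ : X}
    (hx₀ : A x₀ = y) (hR₀ : R x₀ ≠ ⊤) {ν' : Y} {x' : X} (h' : IsDualMinimizer A R ν' x') {m : ℕ}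
    (hdesc : ∀ t < m, dualValue A R y (ν (t + 1)) (x (t + 1)) + γ / 4 * ‖A (x t) - b‖ ^ 2
      ≤ dualValue A R y (ν t) (x t)) :
    m * (dualValue A R y (ν m) (x m) - dualValue A R y ν' x')
      ≤ ‖ν'‖ ^ 2 / (2 * γ) + 2 * (R x₀).toReal
        + m * ((γ * m * √(4 * (R x₀).toReal / γ) + ‖ν'‖) * ‖b - y‖) := by
  set G := fun t => dualValue A R y (ν t) (x t)
  set H := dualValue A R y ν' x'
  set ρ := √(4 * (R x₀).toReal / γ)
  set Λ := γ * m * ρ + ‖ν'‖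
  have hsum := hp.sum_sq_le hγ hx₀ hR₀ hdesc
  have hres : ∀ t < m, ‖A (x t) - b‖ ≤ ρ := fun t ht =>
    Real.le_sqrt_of_sq_le <| (Finset.single_le_sum (fun s _ => sq_nonneg ‖A (x s) - b‖)
      (Finset.mem_range.2 ht)).trans hsum
  have hdist : ∀ t < m, ‖ν t - ν'‖ ≤ Λ := fun t ht => by
    have := hp.norm_le_mul hγ.le fun s hs => hres s (hs.trans ht)
    have : γ * t * ρ ≤ γ * m * ρ := by gcongr
    linarith [norm_sub_le (ν t) ν']
  have hanchor : ∀ t < m, G t - H ≤ ⟪ν t - ν', A (x t) - b⟫ + Λ * ‖b - y‖ := by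
    intro t ht
    have h := h'.dualValue_sub_le_inner (y := y) (ν := ν t) (hp.isDualMinimizer t).1
    rw [← sub_add_sub_cancel (A (x t)) b y, inner_add_right] at h
    have := (real_inner_le_norm _ _).trans
      (mul_le_mul_of_nonneg_right (hdist t ht) (norm_nonneg (b - y)))
    simp only [G, H]
    linarith
  have hmono : ∀ t < m, G m ≤ G t := fun t ht => by
    have := add_sum_Ico_le (f := G) (g := fun t => γ / 4 * ‖A (x t) - b‖ ^ 2) ht.le
      fun s hs => hdesc s (Finset.mem_Ico.1 hs).2
    linarith [Finset.sum_nonneg fun s (_ : s ∈ Finset.Ico t m) =>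
      mul_nonneg (by positivity : 0 ≤ γ / 4) (sq_nonneg ‖A (x s) - b‖)]
  have hinner : 2 * γ * ∑ t ∈ Finset.range m, ⟪ν t - ν', A (x t) - b⟫
      ≤ 2 * γ * (‖ν'‖ ^ 2 / (2 * γ) + 2 * (R x₀).toReal) := by
    rw [hp.two_mul_sum_inner_eq]
    have := mul_le_mul_of_nonneg_left hsum (sq_nonneg γ)
    have : γ ^ 2 * (4 * (R x₀).toReal / γ) = 2 * γ * (2 * (R x₀).toReal) := by field_simp; ring
    have : 2 * γ * (‖ν'‖ ^ 2 / (2 * γ)) = ‖ν'‖ ^ 2 := by field_simp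
    nlinarith [sq_nonneg ‖ν m - ν'‖]
  calc (m : ℝ) * (G m - H) = ∑ t ∈ Finset.range m, (G m - H) := by
        rw [Finset.sum_const, Finset.card_range, nsmul_eq_mul]
    _ ≤ ∑ t ∈ Finset.range m, (⟪ν t - ν', A (x t) - b⟫ + Λ * ‖b - y‖) :=
      Finset.sum_le_sum fun t ht => by
        linarith [hmono t (Finset.mem_range.1 ht), hanchor t (Finset.mem_range.1 ht)]
    _ ≤ _ := by
      rw [Finset.sum_add_distrib, Finset.sum_const, Finset.card_range, nsmul_eq_mul]
      gcongr
      exact le_of_mul_le_mul_left hinner (by positivity)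

theorem index_mul_sq_le (hp : IsDualGradientPath A R γ b ν x) {c₀ : ℝ} (hR : IsStronglyConvex c₀ R)
    (hc₀ : 0 < c₀) (hγ : 0 < γ) (hγA : γ * ‖A‖ ^ 2 ≤ 2 * c₀) {x₀ : X} (hx₀ : A x₀ = y)
    (hR₀ : R x₀ ≠ ⊤) {ν' : Y} {x' : X} (h' : IsDualMinimizer A R ν' x') {T : ℕ} {ε₃ : ℝ}
    (hε₃ : 0 ≤ ε₃) (hnear : dualValue A R y ν' x' ≤ dualValue A R y (ν T) (x T) + ε₃)
    {δ : ℝ} (hδ : 0 ≤ δ)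
    (hnoise : ‖b - y‖ ^ 2 ≤ (1 / 2 - γ * ‖A‖ ^ 2 / (4 * c₀)) / 2 * δ ^ 2)
    (hstop : ∀ t < T, δ < ‖A (x t) - b‖) {m : ℕ} (hm : 0 < m) :
    T * δ ^ 2 ≤ m * δ ^ 2 + 4 / γ * ((‖ν'‖ ^ 2 / (2 * γ) + 2 * (R x₀).toReal) / m
      + (γ * m * √(4 * (R x₀).toReal / γ) + ‖ν'‖) * δ + ε₃) := by
  set G := fun t => dualValue A R y (ν t) (x t)
  set C := ‖ν'‖ ^ 2 / (2 * γ) + 2 * (R x₀).toReal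
  set Λ := γ * m * √(4 * (R x₀).toReal / γ) + ‖ν'‖
  have hmR : (0 : ℝ) < m := by exact_mod_cast hm
  have hrest : 0 ≤ C / m + Λ * δ := by positivity
  rcases lt_or_ge T m with hTm | hmT
  · have : (T : ℝ) * δ ^ 2 ≤ m * δ ^ 2 := by gcongr
    nlinarith [mul_nonneg (by positivity : (0 : ℝ) ≤ 4 / γ) (add_nonneg hrest hε₃)]
  have hc := one_half_sub_div_nonneg hc₀ hγA
  have hdesc : ∀ t < T, G (t + 1) + γ / 4 * ‖A (x t) - b‖ ^ 2 ≤ G t := fun t ht =>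
    (hp.isDualMinimizer t).dualValue_add_le hR hc₀ hγ.le hγA (hp.isDualMinimizer (t + 1))
      (hp.succ t) (hnoise.trans (by gcongr; exact (hstop t ht).le))
  have hnoise_le : ‖b - y‖ ≤ δ := by
    refine (pow_le_pow_iff_left₀ (norm_nonneg _) hδ two_ne_zero).1 (hnoise.trans ?_)
    have : γ * ‖A‖ ^ 2 / (4 * c₀) ≥ 0 := by positivity
    nlinarith [sq_nonneg δ]
  have hhead : G m - dualValue A R y ν' x' ≤ C / m + Λ * δ := by
    have := hp.mul_dualValue_sub_le hγ hx₀ hR₀ h' fun t ht => hdesc t (ht.trans_le hmT)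
    have : Λ * ‖b - y‖ ≤ Λ * δ := by gcongr
    rw [← sub_le_iff_le_add, le_div_iff₀ hmR]
    nlinarith
  have htail : γ / 4 * ((T - m : ℕ) * δ ^ 2) ≤ G m - G T := by
    have htel := add_sum_Ico_le (f := G) (g := fun t => γ / 4 * ‖A (x t) - b‖ ^ 2) hmT
      fun t ht => hdesc t (Finset.mem_Ico.1 ht).2
    have hsq : ∀ t ∈ Finset.Ico m T, γ / 4 * δ ^ 2 ≤ γ / 4 * ‖A (x t) - b‖ ^ 2 :=
      fun t ht => by gcongr; exact (hstop t (Finset.mem_Ico.1 ht).2).le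
    have := Finset.sum_le_sum hsq
    rw [Finset.sum_const, Nat.card_Ico, nsmul_eq_mul] at this
    linarith
  rw [Nat.cast_sub hmT] at htail
  have h4 : 4 / γ * (γ / 4) = 1 := by field_simp
  nlinarith [mul_le_mul_of_nonneg_left htail (by positivity : (0 : ℝ) ≤ 4 / γ)]

end IsDualGradientPath

theorem exists_pos_forall_index_mul_sq_le {ι : Type*} {c₀ γ : ℝ} (hR : IsStronglyConvex c₀ R)
    (hc₀ : 0 < c₀) (hγ : 0 < γ) (hγA : γ * ‖A‖ ^ 2 ≤ 2 * c₀) {y : Y} {x₀ : X} (hx₀ : A x₀ = y)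
    (hR₀ : R x₀ ≠ ⊤) {b : ι → Y} {ν : ι → ℕ → Y} {x : ι → ℕ → X}
    (hp : ∀ i, IsDualGradientPath A R γ (b i) (ν i) (x i)) {ε : ℝ} (hε : 0 < ε) :
    ∃ δ₀ > 0, ∀ i (T : ℕ) (δ : ℝ), 0 ≤ δ → δ ≤ δ₀ →
      ‖b i - y‖ ^ 2 ≤ (1 / 2 - γ * ‖A‖ ^ 2 / (4 * c₀)) / 2 * δ ^ 2 →
      (∀ t < T, δ < ‖A (x i t) - b i‖) → T * δ ^ 2 ≤ ε := by
  rcases isEmpty_or_nonempty ι with hι | ⟨⟨i₀⟩⟩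
  · exact ⟨1, one_pos, fun i => isEmptyElim i⟩
  obtain ⟨ν', x', h', hnear⟩ := exists_isDualMinimizer_dualValue_le_add hx₀ hR₀
    ⟨_, _, (hp i₀).isDualMinimizer 0⟩ (by positivity : 0 < γ * ε / 16)
  set C := ‖ν'‖ ^ 2 / (2 * γ) + 2 * (R x₀).toReal
  obtain ⟨m, hm⟩ := exists_nat_gt (16 * C / (γ * ε))
  have hmR : (0 : ℝ) < m := lt_of_le_of_lt (by positivity) hm
  have hC : 4 / γ * (C / m) ≤ ε / 4 := by
    rw [div_lt_iff₀ (by positivity)] at hm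
    rw [div_mul_div_comm, div_le_div_iff₀ (by positivity) (by positivity)]
    nlinarith
  set Λ := γ * m * √(4 * (R x₀).toReal / γ) + ‖ν'‖
  set M := m + 4 / γ * Λ
  have hM : 0 < M := by positivity
  refine ⟨min 1 (ε / (2 * M)), by positivity, fun i T δ hδ hδ₀ hnoise hstop => ?_⟩
  have hbound := (hp i).index_mul_sq_le hR hc₀ hγ hγA hx₀ hR₀ h' (by positivity)
    (hnear _ _ ((hp i).isDualMinimizer T)) hδ hnoise hstop (Nat.cast_pos.1 hmR)
  have hsmall : m * δ ^ 2 + 4 / γ * (Λ * δ) ≤ ε / 2 := calc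
    m * δ ^ 2 + 4 / γ * (Λ * δ) ≤ M * δ := by
      have : δ ^ 2 ≤ δ := by nlinarith [hδ₀.trans (min_le_left _ _)]
      nlinarith
    _ ≤ M * (ε / (2 * M)) := by gcongr; exact hδ₀.trans (min_le_right _ _)
    _ = ε / 2 := by field_simp
  have : 4 / γ * (γ * ε / 16) = ε / 4 := by field_simp; ring
  nlinarith

end DualGradient

theorem discrepancy_stopping_index_bound_general
    {X Y : Type*} [NormedAddCommGroup X] [NormedSpace ℝ X]
    [NormedAddCommGroup Y] [InnerProductSpace ℝ Y]
    {Ω : Type*}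
    (A : X →L[ℝ] Y) (R : X → ℝ≥0∞) (c₀ : ℝ) (hc₀ : 0 < c₀)
    (hsconv : ∀ u v : X, R u ≠ ⊤ → R v ≠ ⊤ → ∀ s : ℝ, 0 ≤ s → s ≤ 1 →
      R (s • u + (1 - s) • v) + ENNReal.ofReal (c₀ * s * (1 - s) * ‖u - v‖ ^ 2)
        ≤ ENNReal.ofReal s * R u + ENNReal.ofReal (1 - s) * R v)
    (y : Y) (xdag : X) (hxdag_sol : A xdag = y) (hxdag_dom : R xdag ≠ ⊤)
    -- the i.i.d. data
    (ys : ℕ → Ω → Y) (σ2 : ℝ)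
    -- the step size
    (γ : ℝ) (hγ0 : 0 < γ) (hγ : γ < 2 * c₀ / ‖A‖ ^ 2)
    -- the dual gradient iterates with averaged data ȳ⁽ⁿ⁾
    (xs : ℕ → ℕ → Ω → X) (lams : ℕ → ℕ → Ω → Y)
    (hlams0 : ∀ n ω, lams n 0 ω = 0)
    (hmins : ∀ n t ω, R (xs n t ω) ≠ ⊤ ∧ ∀ z : X,
      ENNReal.ofReal ((R (xs n t ω)).toReal - ⟪lams n t ω, A (xs n t ω)⟫
        + ⟪lams n t ω, A z⟫) ≤ R z)
    (hupds : ∀ n t ω, lams n (t + 1) ω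
      = lams n t ω - γ • (A (xs n t ω) - sampleMean ys n ω))
    -- the a posteriori stopping rule (statistical discrepancy principle)
    (τ : ℕ → ℝ) (hτ1 : ∀ n, 1 < τ n)
    (hτ_n : Tendsto (fun n : ℕ => τ n / Real.sqrt n) atTop (𝓝 0))
    (tn : ℕ → Ω → ℕ)
    (htn_first : ∀ n ω, ∀ t < tn n ω,
      ¬ ‖A (xs n t ω) - sampleMean ys n ω‖ ≤ τ n * sampleSD ys n ω / Real.sqrt n)
 :
    ∀ ε : ℝ, 0 < ε → ∃ N : ℕ, ∀ n : ℕ, N ≤ n → ∀ ω : Ω,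
      (|sampleSD ys n ω - Real.sqrt σ2| ≤ Real.sqrt σ2 / 2
        ∧ ‖sampleMean ys n ω - y‖
            ≤ τ n * Real.sqrt ((1 / 2 - γ * ‖A‖ ^ 2 / (4 * c₀)) * (sampleSD ys n ω) ^ 2
                / (2 * n))) →
      (tn n ω : ℝ) * (Real.sqrt σ2 * τ n / (2 * Real.sqrt n)) ^ 2 ≤ ε := by
  intro ε hε
  have hγA : γ * ‖A‖ ^ 2 ≤ 2 * c₀ := mul_le_of_le_div₀ (by positivity) (by positivity) hγ.le
  obtain ⟨δ₀, hδ₀, hstop⟩ := exists_pos_forall_index_mul_sq_le (ι := ℕ × Ω) hsconv hc₀ hγ0 hγA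
    hxdag_sol hxdag_dom (b := fun p => sampleMean ys p.1 p.2) (ν := fun p t => lams p.1 t p.2)
    (x := fun p t => xs p.1 t p.2)
    (fun p => ⟨hlams0 p.1 p.2, fun t => hmins p.1 t p.2, fun t => hupds p.1 t p.2⟩) hε
  set σ := √σ2
  obtain ⟨N, hN⟩ := eventually_atTop.1 <|
    (by simpa using hτ_n.const_mul (3 / 2 * σ) :
      Tendsto (fun n : ℕ => 3 / 2 * σ * (τ n / √n)) atTop (𝓝 0)).eventually (ge_mem_nhds hδ₀)
  refine ⟨N, fun n hn ω ⟨hs, hnoise⟩ => ?_⟩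
  set s := sampleSD ys n ω
  set u := τ n / √n
  have hu : 0 ≤ u := div_nonneg (by linarith [hτ1 n]) (Real.sqrt_nonneg _)
  obtain ⟨hs_lo, hs_hi⟩ : σ / 2 ≤ s ∧ s ≤ 3 / 2 * σ := by
    constructor <;> linarith [abs_le.1 hs]
  have hnoise_sq := sq_le_half_mul_sq_of_le_mul_sqrt (one_half_sub_div_nonneg hc₀ hγA)
    n.cast_nonneg (norm_nonneg _) hnoise
  calc (tn n ω : ℝ) * (σ * τ n / (2 * √n)) ^ 2 = tn n ω * (σ / 2 * u) ^ 2 := by ring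
    _ ≤ tn n ω * (s * u) ^ 2 := by gcongr
    _ ≤ ε := hstop (n, ω) (tn n ω) (s * u) (mul_nonneg (Real.sqrt_nonneg _) hu)
      ((mul_le_mul_of_nonneg_right hs_hi hu).trans (hN n hn)) hnoise_sq
      fun t ht => lt_of_eq_of_lt (by ring) (lt_of_not_ge (htn_first n ω t ht))

/-- Lemma 3.9: under the statistical discrepancy principle (Rule 3.1) with `τ_n → ∞` and
`τ_n/√n → 0`, for every `ε > 0` one has `t_n φ(n)² ≤ ε` on the event `Ω_n` for all
sufficiently large `n`, where `φ(n) = στ_n/(2√n)`. -/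
theorem discrepancy_stopping_index_bound
    {X Y : Type*} [NormedAddCommGroup X] [NormedSpace ℝ X] [CompleteSpace X]
    [NormedAddCommGroup Y] [InnerProductSpace ℝ Y] [CompleteSpace Y]
    [MeasurableSpace Y] [BorelSpace Y]
    {Ω : Type*} [MeasurableSpace Ω] (μ : Measure Ω) [IsProbabilityMeasure μ]
    (A : X →L[ℝ] Y) (R : X → ℝ≥0∞) (c₀ : ℝ) (hc₀ : 0 < c₀)
    (hproper : ∃ u : X, R u ≠ ⊤)
    (hlsc : LowerSemicontinuous R)
    (hsconv : ∀ u v : X, R u ≠ ⊤ → R v ≠ ⊤ → ∀ s : ℝ, 0 ≤ s → s ≤ 1 →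
      R (s • u + (1 - s) • v) + ENNReal.ofReal (c₀ * s * (1 - s) * ‖u - v‖ ^ 2)
        ≤ ENNReal.ofReal s * R u + ENNReal.ofReal (1 - s) * R v)
    (y : Y) (xdag : X) (hxdag_sol : A xdag = y) (hxdag_dom : R xdag ≠ ⊤)
    (hxdag_min : ∀ z : X, A z = y → R xdag ≤ R z)
    -- the i.i.d. data
    (ys : ℕ → Ω → Y) (σ2 : ℝ)
    (hmeas : ∀ i, Measurable (ys i))
    (hindep : iIndepFun ys μ)
    (hident : ∀ i, IdentDistrib (ys i) (ys 0) μ μ)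
    (hint1 : Integrable (ys 0) μ)
    (hmean : ∫ ω, ys 0 ω ∂μ = y)
    (hint2 : Integrable (fun ω => ‖ys 0 ω - y‖ ^ 2) μ)
    (hσ2 : σ2 = ∫ ω, ‖ys 0 ω - y‖ ^ 2 ∂μ) (hσ2pos : 0 < σ2)
    -- the step size
    (γ : ℝ) (hγ0 : 0 < γ) (hγ : γ < 2 * c₀ / ‖A‖ ^ 2)
    -- the dual gradient iterates with averaged data ȳ⁽ⁿ⁾
    (xs : ℕ → ℕ → Ω → X) (lams : ℕ → ℕ → Ω → Y)
    (hlams0 : ∀ n ω, lams n 0 ω = 0)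
    (hmins : ∀ n t ω, R (xs n t ω) ≠ ⊤ ∧ ∀ z : X,
      ENNReal.ofReal ((R (xs n t ω)).toReal - ⟪lams n t ω, A (xs n t ω)⟫
        + ⟪lams n t ω, A z⟫) ≤ R z)
    (hupds : ∀ n t ω, lams n (t + 1) ω
      = lams n t ω - γ • (A (xs n t ω) - sampleMean ys n ω))
    -- the a posteriori stopping rule (statistical discrepancy principle)
    (β₀ : ℝ) (hβ₀ : 0 < β₀)
    (τ : ℕ → ℝ) (hτ1 : ∀ n, 1 < τ n)
    (hτ_inf : Tendsto τ atTop atTop)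
    (hτ_n : Tendsto (fun n : ℕ => τ n / Real.sqrt n) atTop (𝓝 0))
    (tn : ℕ → Ω → ℕ)
    (htn_le : ∀ n ω, tn n ω ≤ ⌊β₀ * (n : ℝ)⌋₊)
    (htn_disc : ∀ n ω,
      ‖A (xs n (tn n ω) ω) - sampleMean ys n ω‖ ≤ τ n * sampleSD ys n ω / Real.sqrt n
        ∨ tn n ω = ⌊β₀ * (n : ℝ)⌋₊)
    (htn_first : ∀ n ω, ∀ t < tn n ω,
      ¬ ‖A (xs n t ω) - sampleMean ys n ω‖ ≤ τ n * sampleSD ys n ω / Real.sqrt n)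
 :
    ∀ ε : ℝ, 0 < ε → ∃ N : ℕ, ∀ n : ℕ, N ≤ n → ∀ ω : Ω,
      (|sampleSD ys n ω - Real.sqrt σ2| ≤ Real.sqrt σ2 / 2
        ∧ ‖sampleMean ys n ω - y‖
            ≤ τ n * Real.sqrt ((1 / 2 - γ * ‖A‖ ^ 2 / (4 * c₀)) * (sampleSD ys n ω) ^ 2
                / (2 * n))) →
      (tn n ω : ℝ) * (Real.sqrt σ2 * τ n / (2 * Real.sqrt n)) ^ 2 ≤ ε :=
  discrepancy_stopping_index_bound_general A R c₀ hc₀ hsconv y xdag hxdag_sol hxdag_dom ys σ2 γ hγ0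
    hγ xs lams hlams0 hmins hupds τ hτ1 hτ_n tn htn_first
end

section
/- Let Y be a Hilbert space and y₁, y₂, … independent identically distributed Y-valued random variables with E[y₁] = y, σ² := E[‖y₁ − y‖²] < ∞ and σ₄ := E[‖y₁ − y‖⁴] < ∞. Then the sample mean ȳ⁽ⁿ⁾ := (1/n)∑_{i=1}^n yᵢ satisfies E[‖ȳ⁽ⁿ⁾ − y‖⁴] ≤ σ₄/n³ + (3(n−1)/n³) σ⁴ for every n ≥ 1. -/
open MeasureTheory ProbabilityTheory Filter Topology
open scoped BigOperators RealInnerProductSpace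

/-! Write `S` for a partial sum of the centred variables and `X` for the next one. Expanding
`‖S + X‖⁴ = (‖S‖² + 2⟪S, X⟫ + ‖X‖²)²` and using `⟪S, X⟫² ≤ ‖S‖²‖X‖²` bounds it by
`‖S‖⁴ + 6‖S‖²‖X‖² + ‖X‖⁴` plus `4(⟪‖S‖²S, X⟫ + ⟪S, ‖X‖²X⟫)`, whose expectation vanishes by
independence and centring. Since also `E‖S + X‖² = E‖S‖² + E‖X‖²`, induction gives
`E‖X₁ + ⋯ + Xₙ‖⁴ ≤ nσ₄ + 3n(n-1)σ⁴`; dividing by `n⁴` gives the bound for the sample mean.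

Partial sums of Borel maps into a non-separable space need not be measurable, so the induction is
run in a separable closed subspace carrying almost all values, onto which the variables are
projected orthogonally. -/

theorem norm_add_pow_four_le {E : Type*} [NormedAddCommGroup E] [InnerProductSpace ℝ E]
    (u v : E) :
    ‖u + v‖ ^ 4 ≤ ‖u‖ ^ 4 + 6 * (‖u‖ ^ 2 * ‖v‖ ^ 2) + ‖v‖ ^ 4
      + 4 * (⟪‖u‖ ^ 2 • u, v⟫ + ⟪u, ‖v‖ ^ 2 • v⟫) := by
  have hsq : ⟪u, v⟫ ^ 2 ≤ ‖u‖ ^ 2 * ‖v‖ ^ 2 := by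
    rw [← mul_pow, ← sq_abs]
    exact pow_le_pow_left₀ (abs_nonneg _) (abs_real_inner_le_norm u v) 2
  rw [show ‖u + v‖ ^ 4 = (‖u + v‖ ^ 2) ^ 2 by ring, norm_add_sq_real, real_inner_smul_left,
    real_inner_smul_right]
  nlinarith

theorem exists_isClosed_isSeparable_submodule_ae_mem {Ω E ι : Type*} [MeasurableSpace Ω]
    {μ : Measure Ω} [NormedAddCommGroup E] [NormedSpace ℝ E] [Countable ι] {f : ι → Ω → E}
    (hf : ∀ i, AEStronglyMeasurable (f i) μ) :
    ∃ K : Submodule ℝ E, IsClosed (K : Set E) ∧ TopologicalSpace.IsSeparable (K : Set E) ∧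
      ∀ᵐ ω ∂μ, ∀ i, f i ω ∈ K := by
  choose t ht using fun i => (hf i).isSeparable_ae_range
  refine ⟨(Submodule.span ℝ (⋃ i, t i)).topologicalClosure,
    Submodule.isClosed_topologicalClosure _,
    (TopologicalSpace.IsSeparable.iUnion fun i => (ht i).1).span.closure, ae_all_iff.2 fun i => ?_⟩
  filter_upwards [(ht i).2] with ω hω
  exact Submodule.le_topologicalClosure _ (Submodule.subset_span (Set.mem_iUnion_of_mem i hω))

section

variable {Ω E : Type*} [MeasurableSpace Ω] {μ : Measure Ω}
  [NormedAddCommGroup E] [InnerProductSpace ℝ E]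

theorem MeasureTheory.MemLp.integrable_norm_sq_smul [IsFiniteMeasure μ] {X : Ω → E}
    (hX : MemLp X 4 μ) : Integrable (fun ω => ‖X ω‖ ^ 2 • X ω) μ := by
  have h3 : Integrable (fun ω => ‖X ω‖ ^ 3) μ :=
    (hX.mono_exponent (by norm_num : (3 : ENNReal) ≤ 4)).integrable_norm_pow (by norm_num)
  refine (integrable_norm_iff (by have := hX.1; fun_prop)).1 (h3.congr (ae_of_all _ fun ω => ?_))
  simp [norm_smul]
  ring

variable [MeasurableSpace E] [BorelSpace E]

namespace ProbabilityTheory.IndepFun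

theorem integrable_inner {X Z : Ω → E} (h : IndepFun X Z μ)
    (hX : Integrable X μ) (hZ : Integrable Z μ) : Integrable (fun ω => ⟪X ω, Z ω⟫) μ :=
  h.integrable_bilin hX hZ (innerSL ℝ)

theorem integral_inner [CompleteSpace E] {X Z : Ω → E} (h : IndepFun X Z μ)
    (hX : Integrable X μ) (hZ : Integrable Z μ) :
    ∫ ω, ⟪X ω, Z ω⟫ ∂μ = ⟪∫ ω, X ω ∂μ, ∫ ω, Z ω ∂μ⟫ :=
  h.integral_bilin hX hZ (innerSL ℝ)

variable [CompleteSpace E] [IsFiniteMeasure μ] {S X : Ω → E}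

theorem integral_norm_add_sq (h : IndepFun S X μ) (hS : MemLp S 2 μ) (hX : MemLp X 2 μ)
    (hX0 : ∫ ω, X ω ∂μ = 0) :
    ∫ ω, ‖S ω + X ω‖ ^ 2 ∂μ = ∫ ω, ‖S ω‖ ^ 2 ∂μ + ∫ ω, ‖X ω‖ ^ 2 ∂μ := by
  have hS1 := hS.integrable one_le_two
  have hX1 := hX.integrable one_le_two
  have hcross : ∫ ω, ⟪S ω, X ω⟫ ∂μ = 0 := by rw [h.integral_inner hS1 hX1, hX0, inner_zero_right]
  have hS2 := hS.integrable_norm_pow two_ne_zero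
  have hX2 := hX.integrable_norm_pow two_ne_zero
  have hSX := (h.integrable_inner hS1 hX1).const_mul 2
  simp only [norm_add_sq_real]
  rw [integral_add ?_ hX2, integral_add hS2 hSX, integral_const_mul, hcross, mul_zero, add_zero]
  exact hS2.add hSX

theorem integral_norm_add_pow_four_le (h : IndepFun S X μ) (hS : MemLp S 4 μ)
    (hX : MemLp X 4 μ) (hS0 : ∫ ω, S ω ∂μ = 0) (hX0 : ∫ ω, X ω ∂μ = 0) :
    ∫ ω, ‖S ω + X ω‖ ^ 4 ∂μ ≤
      ∫ ω, ‖S ω‖ ^ 4 ∂μ + 6 * ((∫ ω, ‖S ω‖ ^ 2 ∂μ) * ∫ ω, ‖X ω‖ ^ 2 ∂μ) + ∫ ω, ‖X ω‖ ^ 4 ∂μ := by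
  have hcube : Measurable fun v : E => ‖v‖ ^ 2 • v := by fun_prop
  have hcubeS := h.comp hcube measurable_id
  have hcubeX := h.comp measurable_id hcube
  have hsq := h.comp (measurable_norm.pow_const 2) (measurable_norm.pow_const 2)
  have hS1 : Integrable S μ := hS.integrable (by norm_num)
  have hX1 : Integrable X μ := hX.integrable (by norm_num)
  have hS2 : Integrable (fun ω => ‖S ω‖ ^ 2) μ :=
    (hS.mono_exponent (by norm_num : (2 : ENNReal) ≤ 4)).integrable_norm_pow (by norm_num)
  have hX2 : Integrable (fun ω => ‖X ω‖ ^ 2) μ :=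
    (hX.mono_exponent (by norm_num : (2 : ENNReal) ≤ 4)).integrable_norm_pow (by norm_num)
  have hS4 : Integrable (fun ω => ‖S ω‖ ^ 4) μ := hS.integrable_norm_pow (by norm_num)
  have hX4 : Integrable (fun ω => ‖X ω‖ ^ 4) μ := hX.integrable_norm_pow (by norm_num)
  have hSX4 : Integrable (fun ω => ‖S ω + X ω‖ ^ 4) μ :=
    (hS.add hX).integrable_norm_pow (by norm_num)
  have hSX : Integrable (fun ω => ‖S ω‖ ^ 2 * ‖X ω‖ ^ 2) μ := hsq.integrable_mul hS2 hX2
  have hcubeSX : Integrable (fun ω => ⟪‖S ω‖ ^ 2 • S ω, X ω⟫) μ :=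
    hcubeS.integrable_inner hS.integrable_norm_sq_smul hX1
  have hScubeX : Integrable (fun ω => ⟪S ω, ‖X ω‖ ^ 2 • X ω⟫) μ :=
    hcubeX.integrable_inner hS1 hX.integrable_norm_sq_smul
  have hE_SX : ∫ ω, ‖S ω‖ ^ 2 * ‖X ω‖ ^ 2 ∂μ = (∫ ω, ‖S ω‖ ^ 2 ∂μ) * ∫ ω, ‖X ω‖ ^ 2 ∂μ :=
    hsq.integral_mul_eq_mul_integral hS2.1 hX2.1
  have hE_cubeSX : ∫ ω, ⟪‖S ω‖ ^ 2 • S ω, X ω⟫ ∂μ = 0 :=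
    (hcubeS.integral_inner hS.integrable_norm_sq_smul hX1).trans (by simp [hX0])
  have hE_ScubeX : ∫ ω, ⟪S ω, ‖X ω‖ ^ 2 • X ω⟫ ∂μ = 0 :=
    (hcubeX.integral_inner hS1 hX.integrable_norm_sq_smul).trans (by simp [hS0])
  calc ∫ ω, ‖S ω + X ω‖ ^ 4 ∂μ
      ≤ ∫ ω, (‖S ω‖ ^ 4 + 6 * (‖S ω‖ ^ 2 * ‖X ω‖ ^ 2) + ‖X ω‖ ^ 4
          + 4 * (⟪‖S ω‖ ^ 2 • S ω, X ω⟫ + ⟪S ω, ‖X ω‖ ^ 2 • X ω⟫)) ∂μ :=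
        integral_mono hSX4 (by fun_prop) fun ω => norm_add_pow_four_le (S ω) (X ω)
    _ = _ := by
        rw [integral_add, integral_add, integral_add, integral_const_mul, integral_const_mul,
          integral_add, hE_cubeSX, hE_ScubeX, hE_SX, add_zero, mul_zero, add_zero]
        all_goals fun_prop

end ProbabilityTheory.IndepFun

namespace ProbabilityTheory.iIndepFun

theorem indepFun_fun_sum_range {β : Type*} [AddCommMonoid β] [MeasurableSpace β]
    [MeasurableAdd₂ β] {X : ℕ → Ω → β} (hindep : iIndepFun X μ) (hX : ∀ i, AEMeasurable (X i) μ)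
    (n : ℕ) : IndepFun (fun ω => ∑ i ∈ Finset.range n, X i ω) (X n) μ := by
  simpa only [Finset.sum_fn] using hindep.indepFun_sum_range_succ₀ hX n

variable [CompleteSpace E] [IsFiniteMeasure μ] {X : ℕ → Ω → E} {σ2 σ4 : ℝ}

theorem integral_norm_sum_range_sq_le [SecondCountableTopology E] (hindep : iIndepFun X μ)
    (hX : ∀ i, MemLp (X i) 2 μ) (hmean : ∀ i, ∫ ω, X i ω ∂μ = 0)
    (h2 : ∀ i, ∫ ω, ‖X i ω‖ ^ 2 ∂μ ≤ σ2) (n : ℕ) :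
    ∫ ω, ‖∑ i ∈ Finset.range n, X i ω‖ ^ 2 ∂μ ≤ n * σ2 := by
  induction n with
  | zero => simp
  | succ n ih =>
    simp only [Finset.sum_range_succ]
    rw [(hindep.indepFun_fun_sum_range (fun i => (hX i).aemeasurable) n).integral_norm_add_sq
      (memLp_finsetSum _ fun i _ => hX i) (hX n) (hmean n)]
    push_cast
    linarith [h2 n]

theorem integral_norm_sum_range_pow_four_le_of_secondCountable [SecondCountableTopology E]
    (hindep : iIndepFun X μ) (hX : ∀ i, MemLp (X i) 4 μ) (hmean : ∀ i, ∫ ω, X i ω ∂μ = 0)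
    (h2 : ∀ i, ∫ ω, ‖X i ω‖ ^ 2 ∂μ ≤ σ2) (h4 : ∀ i, ∫ ω, ‖X i ω‖ ^ 4 ∂μ ≤ σ4) (n : ℕ) :
    ∫ ω, ‖∑ i ∈ Finset.range n, X i ω‖ ^ 4 ∂μ ≤ n * σ4 + 3 * n * (n - 1) * σ2 ^ 2 := by
  have hX2 : ∀ i, MemLp (X i) 2 μ := fun i => (hX i).mono_exponent (by norm_num)
  have hσ2 : 0 ≤ σ2 := (integral_nonneg fun ω => by positivity).trans (h2 0)
  induction n with
  | zero => simp
  | succ n ih =>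
    simp only [Finset.sum_range_succ]
    have hsum_mean : ∫ ω, ∑ i ∈ Finset.range n, X i ω ∂μ = 0 := by
      rw [integral_finsetSum _ fun i _ => (hX i).integrable (by norm_num)]
      simp [hmean]
    refine ((hindep.indepFun_fun_sum_range (fun i => (hX i).aemeasurable) n)
      |>.integral_norm_add_pow_four_le (memLp_finsetSum _ fun i _ => hX i) (hX n) hsum_mean
        (hmean n)).trans ?_
    have hcross : (∫ ω, ‖∑ i ∈ Finset.range n, X i ω‖ ^ 2 ∂μ) * ∫ ω, ‖X n ω‖ ^ 2 ∂μ
        ≤ n * σ2 * σ2 :=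
      mul_le_mul (hindep.integral_norm_sum_range_sq_le hX2 hmean h2 n) (h2 n)
        (integral_nonneg fun ω => by positivity) (by positivity)
    push_cast
    nlinarith [h4 n]

theorem integral_norm_sum_range_pow_four_le (hindep : iIndepFun X μ) (hX : ∀ i, MemLp (X i) 4 μ)
    (hmean : ∀ i, ∫ ω, X i ω ∂μ = 0) (h2 : ∀ i, ∫ ω, ‖X i ω‖ ^ 2 ∂μ ≤ σ2)
    (h4 : ∀ i, ∫ ω, ‖X i ω‖ ^ 4 ∂μ ≤ σ4) (n : ℕ) :
    ∫ ω, ‖∑ i ∈ Finset.range n, X i ω‖ ^ 4 ∂μ ≤ n * σ4 + 3 * n * (n - 1) * σ2 ^ 2 := by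
  obtain ⟨K, hKclosed, hKsep, hXK⟩ :=
    exists_isClosed_isSeparable_submodule_ae_mem fun i => (hX i).aestronglyMeasurable
  have : CompleteSpace K := hKclosed.completeSpace_coe
  have : TopologicalSpace.SeparableSpace K := hKsep.separableSpace
  set P := K.orthogonalProjectionOnto
  have hP : ∀ v ∈ K, ‖P v‖ = ‖v‖ := fun v hv => by
    rw [← Submodule.norm_coe, Submodule.coe_orthogonalProjectionOnto_apply,
      Submodule.starProjection_eq_self_iff.2 hv]
  have hPX : ∀ i k, ∫ ω, ‖P (X i ω)‖ ^ k ∂μ = ∫ ω, ‖X i ω‖ ^ k ∂μ := fun i k =>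
    integral_congr_ae <| hXK.mono fun ω hω => by simp only [hP _ (hω i)]
  have hsum := (hindep.comp (fun _ => P) fun _ => P.measurable)
    |>.integral_norm_sum_range_pow_four_le_of_secondCountable
      (fun i => (hX i).continuousLinearMap_comp P)
      (fun i => by
        rw [Function.comp_def, P.integral_comp_comm ((hX i).integrable (by norm_num)), hmean i,
          map_zero])
      (fun i => (hPX i 2).trans_le (h2 i)) (fun i => (hPX i 4).trans_le (h4 i)) n
  refine (integral_congr_ae ?_).trans_le hsum
  filter_upwards [hXK] with ω hω
  simp only [Function.comp_apply, ← map_sum, hP _ (K.sum_mem fun i _ => hω i)]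

end ProbabilityTheory.iIndepFun

end

theorem sample_mean_fourth_moment_bound_general
    {Y : Type*} [NormedAddCommGroup Y] [InnerProductSpace ℝ Y] [CompleteSpace Y]
    [MeasurableSpace Y] [BorelSpace Y]
    {Ω : Type*} [MeasurableSpace Ω] (μ : Measure Ω) [IsProbabilityMeasure μ]
    (ys : ℕ → Ω → Y) (y : Y) (σ2 σ4 : ℝ)
    (hindep : iIndepFun ys μ)
    (hident : ∀ i, IdentDistrib (ys i) (ys 0) μ μ)
    (hint1 : Integrable (ys 0) μ)
    (hmean : ∫ ω, ys 0 ω ∂μ = y)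
    (hσ2 : σ2 = ∫ ω, ‖ys 0 ω - y‖ ^ 2 ∂μ)
    (hint4 : Integrable (fun ω => ‖ys 0 ω - y‖ ^ 4) μ)
    (hσ4 : σ4 = ∫ ω, ‖ys 0 ω - y‖ ^ 4 ∂μ) :
    ∀ n : ℕ, 1 ≤ n →
      ∫ ω, ‖(n : ℝ)⁻¹ • (∑ i ∈ Finset.range n, ys i ω) - y‖ ^ 4 ∂μ
        ≤ σ4 / (n : ℝ) ^ 3 + (3 * ((n : ℝ) - 1) / (n : ℝ) ^ 3) * σ2 ^ 2 := by
  intro n hn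
  set X : ℕ → Ω → Y := fun i ω => ys i ω - y
  have hident' : ∀ i, IdentDistrib (X i) (X 0) μ μ := fun i =>
    (hident i).comp (measurable_id.sub_const y)
  have hX0 : MemLp (X 0) 4 μ :=
    (integrable_norm_rpow_iff (hint1.1.sub aestronglyMeasurable_const) (by norm_num)
      (by norm_num)).1 (by simpa using hint4)
  have hmean0 : ∫ ω, X 0 ω ∂μ = 0 := by
    simp [X, integral_sub hint1 (integrable_const y), hmean]
  have hXindep : iIndepFun X μ :=
    hindep.comp (fun _ v => v - y) fun _ => measurable_id.sub_const y
  have hsum := hXindep.integral_norm_sum_range_pow_four_le (σ2 := σ2) (σ4 := σ4)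
      (fun i => (hident' i).memLp_iff.2 hX0) (fun i => (hident' i).integral_eq.trans hmean0)
      (fun i => (((hident' i).comp (measurable_norm.pow_const 2)).integral_eq.trans hσ2.symm).le)
      (fun i => (((hident' i).comp (measurable_norm.pow_const 4)).integral_eq.trans hσ4.symm).le) n
  have hn0 : (n : ℝ) ≠ 0 := Nat.cast_ne_zero.2 (by omega)
  have hcenter : ∀ ω, (n : ℝ)⁻¹ • (∑ i ∈ Finset.range n, ys i ω) - y
      = (n : ℝ)⁻¹ • ∑ i ∈ Finset.range n, X i ω := fun ω => by
    simp [X, Finset.sum_sub_distrib, smul_sub, ← Nat.cast_smul_eq_nsmul ℝ, smul_smul, hn0]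
  calc ∫ ω, ‖(n : ℝ)⁻¹ • (∑ i ∈ Finset.range n, ys i ω) - y‖ ^ 4 ∂μ
      = (n : ℝ)⁻¹ ^ 4 * ∫ ω, ‖∑ i ∈ Finset.range n, X i ω‖ ^ 4 ∂μ := by
        simp_rw [hcenter, norm_smul, mul_pow, ← integral_const_mul]
        simp
    _ ≤ (n : ℝ)⁻¹ ^ 4 * (n * σ4 + 3 * n * (n - 1) * σ2 ^ 2) := by gcongr
    _ = σ4 / (n : ℝ) ^ 3 + (3 * ((n : ℝ) - 1) / (n : ℝ) ^ 3) * σ2 ^ 2 := by field_simp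

/-- Fourth-moment bound for the sample mean of i.i.d. `Y`-valued random variables:
`E[‖ȳ⁽ⁿ⁾ - y‖⁴] ≤ σ₄/n³ + (3(n-1)/n³) σ⁴` where `σ² = E[‖y₁ - y‖²]` and
`σ₄ = E[‖y₁ - y‖⁴]`. -/
theorem sample_mean_fourth_moment_bound
    {Y : Type*} [NormedAddCommGroup Y] [InnerProductSpace ℝ Y] [CompleteSpace Y]
    [MeasurableSpace Y] [BorelSpace Y]
    {Ω : Type*} [MeasurableSpace Ω] (μ : Measure Ω) [IsProbabilityMeasure μ]
    (ys : ℕ → Ω → Y) (y : Y) (σ2 σ4 : ℝ)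
    (hmeas : ∀ i, Measurable (ys i))
    (hindep : iIndepFun ys μ)
    (hident : ∀ i, IdentDistrib (ys i) (ys 0) μ μ)
    (hint1 : Integrable (ys 0) μ)
    (hmean : ∫ ω, ys 0 ω ∂μ = y)
    (hint2 : Integrable (fun ω => ‖ys 0 ω - y‖ ^ 2) μ)
    (hσ2 : σ2 = ∫ ω, ‖ys 0 ω - y‖ ^ 2 ∂μ)
    (hint4 : Integrable (fun ω => ‖ys 0 ω - y‖ ^ 4) μ)
    (hσ4 : σ4 = ∫ ω, ‖ys 0 ω - y‖ ^ 4 ∂μ) :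
    ∀ n : ℕ, 1 ≤ n →
      ∫ ω, ‖(n : ℝ)⁻¹ • (∑ i ∈ Finset.range n, ys i ω) - y‖ ^ 4 ∂μ
        ≤ σ4 / (n : ℝ) ^ 3 + (3 * ((n : ℝ) - 1) / (n : ℝ) ^ 3) * σ2 ^ 2 :=
  sample_mean_fourth_moment_bound_general μ ys y σ2 σ4 hindep hident hint1 hmean hσ2 hint4 hσ4
end

section
/- Let X be a Banach space, Y a Hilbert space, A : X → Y a bounded linear operator, and R : X → [0,∞] proper, lower semicontinuous and c₀-strongly convex for some c₀ > 0; assume Ax = y has a solution in dom(R) and let x† be the unique R-minimizing solution. Consider the dual gradient iteration with exact data: λ₀ = 0, x_t = argmin_{x∈X}{R(x) − ⟨λ_t, Ax⟩}, λ_{t+1} = λ_t − γ(Ax_t − y). If 0 < γ < 4c₀/‖A‖², then the Bregman distance D_R^{A*λ_t}(x†, x_t) → 0 as t → ∞; in particular ‖x_t − x†‖ → 0. -/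
open Filter Topology
open scoped RealInnerProductSpace ENNReal

set_option maxHeartbeats 1000000

/-- Lemma 3.3: for the dual gradient method with exact data `y` and step size
`0 < γ < 4c₀/‖A‖²`, the Bregman distance `D_R^{A*λ_t}(x†, x_t)` converges to `0`;
in particular `‖x_t - x†‖ → 0`. -/
theorem dual_gradient_exact_data_convergence
    {X Y : Type*} [NormedAddCommGroup X] [NormedSpace ℝ X] [CompleteSpace X]
    [NormedAddCommGroup Y] [InnerProductSpace ℝ Y] [CompleteSpace Y]
    (A : X →L[ℝ] Y) (R : X → ℝ≥0∞) (c₀ : ℝ) (hc₀ : 0 < c₀)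
    (hproper : ∃ u : X, R u ≠ ⊤)
    (hlsc : LowerSemicontinuous R)
    (hsconv : ∀ u v : X, R u ≠ ⊤ → R v ≠ ⊤ → ∀ s : ℝ, 0 ≤ s → s ≤ 1 →
      R (s • u + (1 - s) • v) + ENNReal.ofReal (c₀ * s * (1 - s) * ‖u - v‖ ^ 2)
        ≤ ENNReal.ofReal s * R u + ENNReal.ofReal (1 - s) * R v)
    (y : Y) (xdag : X) (hxdag_sol : A xdag = y) (hxdag_dom : R xdag ≠ ⊤)
    (hxdag_min : ∀ z : X, A z = y → R xdag ≤ R z)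
    (γ : ℝ) (hγ0 : 0 < γ) (hγ : γ < 4 * c₀ / ‖A‖ ^ 2)
    (x : ℕ → X) (lam : ℕ → Y)
    (hlam0 : lam 0 = 0)
    (hmin : ∀ t : ℕ, R (x t) ≠ ⊤ ∧ ∀ z : X,
      ENNReal.ofReal ((R (x t)).toReal - ⟪lam t, A (x t)⟫ + ⟪lam t, A z⟫) ≤ R z)
    (hupd : ∀ t : ℕ, lam (t + 1) = lam t - γ • (A (x t) - y)) :
    Tendsto (fun t : ℕ =>
        (R xdag).toReal - (R (x t)).toReal - ⟪lam t, A xdag - A (x t)⟫) atTop (𝓝 0)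
      ∧ Tendsto (fun t : ℕ => ‖x t - xdag‖) atTop (𝓝 0) := by
  classical
  set r : ℕ → Y := fun t => A (x t) - y with hrdef
  set D : ℕ → ℝ := fun t =>
    (R xdag).toReal - (R (x t)).toReal - ⟪lam t, A xdag - A (x t)⟫ with hDdef
  have hdom : ∀ t, R (x t) ≠ ⊤ := fun t => (hmin t).1
  have hminR : ∀ (t : ℕ) (z : X), R z ≠ ⊤ →
      (R (x t)).toReal - ⟪lam t, A (x t)⟫ + ⟪lam t, A z⟫ ≤ (R z).toReal := fun t z hz =>
    (ENNReal.ofReal_le_iff_le_toReal hz).mp ((hmin t).2 z)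
  -- strengthened subgradient inequality
  have hstar : ∀ (t : ℕ) (z : X), R z ≠ ⊤ →
      (R (x t)).toReal + ⟪lam t, A z - A (x t)⟫ + c₀ * ‖z - x t‖ ^ 2 ≤ (R z).toReal := by
    intro t z hz
    have key : ∀ s : ℝ, 0 < s → s ≤ 1 →
        (R (x t)).toReal + ⟪lam t, A z - A (x t)⟫ + c₀ * ‖z - x t‖ ^ 2
          ≤ (R z).toReal + s * (c₀ * ‖z - x t‖ ^ 2) := by
      intro s hs hs1
      have hs0 : (0:ℝ) ≤ s := hs.le
      have hs1' : (0:ℝ) ≤ 1 - s := by linarith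
      have hconv := hsconv z (x t) hz (hdom t) s hs0 hs1
      have hfin : ENNReal.ofReal s * R z + ENNReal.ofReal (1 - s) * R (x t) ≠ ⊤ :=
        ENNReal.add_ne_top.mpr ⟨ENNReal.mul_ne_top ENNReal.ofReal_ne_top hz,
          ENNReal.mul_ne_top ENNReal.ofReal_ne_top (hdom t)⟩
      have hmfin : R (s • z + (1 - s) • x t) ≠ ⊤ :=
        ne_top_of_le_ne_top hfin (le_trans le_self_add hconv)
      have hnn : (0:ℝ) ≤ c₀ * s * (1 - s) * ‖z - x t‖ ^ 2 :=
        mul_nonneg (mul_nonneg (mul_nonneg hc₀.le hs0) hs1') (sq_nonneg _)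
      have hconvR : (R (s • z + (1 - s) • x t)).toReal + c₀ * s * (1 - s) * ‖z - x t‖ ^ 2
          ≤ s * (R z).toReal + (1 - s) * (R (x t)).toReal := by
        have h1 := ENNReal.toReal_mono hfin hconv
        rw [ENNReal.toReal_add hmfin ENNReal.ofReal_ne_top, ENNReal.toReal_ofReal hnn,
          ENNReal.toReal_add (ENNReal.mul_ne_top ENNReal.ofReal_ne_top hz)
            (ENNReal.mul_ne_top ENNReal.ofReal_ne_top (hdom t)), ENNReal.toReal_mul,
          ENNReal.toReal_mul, ENNReal.toReal_ofReal hs0, ENNReal.toReal_ofReal hs1'] at h1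
        exact h1
      have hm := hminR t (s • z + (1 - s) • x t) hmfin
      have hAm : ⟪lam t, A (s • z + (1 - s) • x t)⟫
          = s * ⟪lam t, A z⟫ + (1 - s) * ⟪lam t, A (x t)⟫ := by
        rw [map_add, map_smul, map_smul, inner_add_right, real_inner_smul_right,
          real_inner_smul_right]
      rw [hAm] at hm
      have hip : ⟪lam t, A z - A (x t)⟫ = ⟪lam t, A z⟫ - ⟪lam t, A (x t)⟫ :=
        inner_sub_right _ _ _
      rw [hip]
      nlinarith [hconvR, hm, hs]
    have hq : (0:ℝ) ≤ c₀ * ‖z - x t‖ ^ 2 := by positivity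
    refine le_of_forall_pos_le_add ?_
    intro η hη
    rcases le_or_gt (c₀ * ‖z - x t‖ ^ 2) η with h | h
    · have := key 1 one_pos le_rfl
      linarith
    · have hqpos : 0 < c₀ * ‖z - x t‖ ^ 2 := lt_of_le_of_lt hη.le h
      have hk := key (η / (c₀ * ‖z - x t‖ ^ 2)) (by positivity)
        (by rw [div_le_one hqpos]; exact h.le)
      rw [div_mul_cancel₀ _ (ne_of_gt hqpos)] at hk
      linarith
  -- nonnegativity / lower bound of D
  have hDlow : ∀ t, c₀ * ‖xdag - x t‖ ^ 2 ≤ D t := by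
    intro t
    have h := hstar t xdag hxdag_dom
    simp only [hDdef]
    linarith
  have hD0 : ∀ t, 0 ≤ D t := fun t => le_trans (by positivity) (hDlow t)
  -- step size
  have hA2 : γ * ‖A‖ ^ 2 < 4 * c₀ := by
    rcases eq_or_lt_of_le (norm_nonneg A) with h | h
    · exfalso
      rw [← h] at hγ
      simp at hγ
      linarith
    · exact (lt_div_iff₀ (by positivity)).mp hγ
  set eps : ℝ := 1 - γ * ‖A‖ ^ 2 / (4 * c₀) with hepsdef
  have hepspos : 0 < eps := by
    rw [hepsdef, sub_pos, div_lt_one (by positivity)]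
    exact hA2
  have heq4 : 4 * c₀ * (γ * (1 - eps)) = γ ^ 2 * ‖A‖ ^ 2 := by
    rw [hepsdef]
    field_simp
    ring
  -- descent inequality
  have hdesc : ∀ t, D (t + 1) + γ * eps * ‖r t‖ ^ 2 ≤ D t := by
    intro t
    have h1 := hstar t (x (t + 1)) (hdom (t + 1))
    have hAd : ‖A (x (t + 1)) - A (x t)‖ ≤ ‖A‖ * ‖x (t + 1) - x t‖ := by
      have h := A.le_opNorm (x (t + 1) - x t)
      rwa [map_sub] at h
    have hlam1 : lam (t + 1) = lam t - γ • r t := hupd t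
    have e1 : ⟪lam t, A xdag - A (x t)⟫ - ⟪lam (t+1), A xdag - A (x (t+1))⟫
        - ⟪lam t, A (x (t+1)) - A (x t)⟫
        = γ * (- ‖r t‖ ^ 2 - ⟪r t, A (x (t+1)) - A (x t)⟫) := by
      rw [hlam1, hxdag_sol]
      simp only [hrdef, inner_sub_left, inner_sub_right, real_inner_smul_left,
        real_inner_smul_right, norm_sub_sq_real, real_inner_self_eq_norm_sq, real_inner_comm]
      ring
    have e2 : -(‖r t‖ * (‖A‖ * ‖x (t + 1) - x t‖)) ≤ ⟪r t, A (x (t+1)) - A (x t)⟫ := by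
      have h2 := abs_real_inner_le_norm (r t) (A (x (t+1)) - A (x t))
      have h3 : -(‖r t‖ * ‖A (x (t+1)) - A (x t)‖) ≤ ⟪r t, A (x (t+1)) - A (x t)⟫ := by
        have := neg_abs_le (⟪r t, A (x (t+1)) - A (x t)⟫)
        linarith
      have h4 : ‖r t‖ * ‖A (x (t+1)) - A (x t)‖ ≤ ‖r t‖ * (‖A‖ * ‖x (t + 1) - x t‖) :=
        mul_le_mul_of_nonneg_left hAd (norm_nonneg _)
      linarith
    have e2γ := mul_le_mul_of_nonneg_left e2 hγ0.le
    have hfin : γ * (‖r t‖ * (‖A‖ * ‖x (t + 1) - x t‖))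
        ≤ γ * (1 - eps) * ‖r t‖ ^ 2 + c₀ * ‖x (t + 1) - x t‖ ^ 2 := by
      nlinarith [sq_nonneg (2 * c₀ * ‖x (t + 1) - x t‖ - γ * ‖A‖ * ‖r t‖), heq4, hc₀]
    simp only [hDdef]
    linarith [h1, e1, e2γ, hfin]
  have hanti : Antitone D := antitone_nat_of_succ_le fun t => by
    have h := hdesc t
    have h2 : 0 ≤ γ * eps * ‖r t‖ ^ 2 := by positivity
    linarith
  -- summability of residuals
  have hsum_bound : ∀ n, ∑ t ∈ Finset.range n, ‖r t‖ ^ 2 ≤ D 0 / (γ * eps) := by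
    intro n
    have h : γ * eps * ∑ t ∈ Finset.range n, ‖r t‖ ^ 2 ≤ D 0 - D n := by
      induction n with
      | zero => simp
      | succ n ih =>
          rw [Finset.sum_range_succ, mul_add]
          have := hdesc n
          linarith
    rw [le_div_iff₀ (by positivity)]
    have := hD0 n
    linarith [h]
  have hsummable : Summable (fun t => ‖r t‖ ^ 2) :=
    summable_of_sum_range_le (fun t => by positivity) hsum_bound
  have hr2 : Tendsto (fun t => ‖r t‖ ^ 2) atTop (𝓝 0) := hsummable.tendsto_atTop_zero
  have hrnorm : Tendsto (fun t => ‖r t‖) atTop (𝓝 0) := by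
    have h := hr2.sqrt
    rw [Real.sqrt_zero] at h
    exact h.congr fun t => Real.sqrt_sq (norm_nonneg _)
  have hrtend : Tendsto r atTop (𝓝 0) := tendsto_zero_iff_norm_tendsto_zero.mpr hrnorm
  -- tails of the series vanish
  have htail : ∀ δ : ℝ, 0 < δ → ∃ N : ℕ, ∀ s t : ℕ, N ≤ s →
      (∑ k ∈ Finset.Ico s t, ‖r k‖ ^ 2) < δ := by
    intro δ hδ
    obtain ⟨s₀, hs₀⟩ := summable_iff_vanishing.mp hsummable (Set.Iio δ) (Iio_mem_nhds hδ)
    refine ⟨s₀.sup id + 1, fun s t hs => ?_⟩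
    have hdisj : Disjoint (Finset.Ico s t) s₀ := by
      rw [Finset.disjoint_left]
      intro k hk hk0
      have h1 : s ≤ k := (Finset.mem_Ico.mp hk).1
      have h2 : k ≤ s₀.sup id := Finset.le_sup (f := id) hk0
      omega
    exact hs₀ _ hdisj
  -- lambda as sum of residuals
  have hlamsum : ∀ s t : ℕ, s ≤ t →
      lam t = lam s - γ • (∑ k ∈ Finset.Ico s t, r k) := by
    intro s t hst
    induction t, hst using Nat.le_induction with
    | base => simp
    | succ t hst ih =>
        rw [hupd t, ih, Finset.sum_Ico_succ_top hst, smul_add]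
        abel
  -- key comparison inequality
  have hkey : ∀ s t : ℕ, s ≤ t →
      D t + c₀ * ‖x t - x s‖ ^ 2 ≤ D s + ⟪lam t - lam s, r t⟫ := by
    intro s t hst
    have h1 := hstar s (x t) (hdom t)
    have e : ⟪lam s, A (x t) - A (x s)⟫ + ⟪lam t, A xdag - A (x t)⟫
        = ⟪lam s, A xdag - A (x s)⟫ - ⟪lam t - lam s, r t⟫ := by
      rw [hxdag_sol]
      simp only [hrdef, inner_sub_left, inner_sub_right]
      ring
    simp only [hDdef]
    linarith [h1, e]
  -- pairing bound for records
  have hpair : ∀ s t : ℕ, s ≤ t → (∀ k, k < t → ‖r t‖ ≤ ‖r k‖) →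
      ⟪lam t - lam s, r t⟫ ≤ γ * ∑ k ∈ Finset.Ico s t, ‖r k‖ ^ 2 := by
    intro s t hst hrec
    rw [hlamsum s t hst, sub_sub_cancel_left, inner_neg_left, real_inner_smul_left, sum_inner]
    have hs : -∑ k ∈ Finset.Ico s t, ⟪r k, r t⟫ ≤ ∑ k ∈ Finset.Ico s t, ‖r k‖ ^ 2 := by
      rw [← Finset.sum_neg_distrib]
      refine Finset.sum_le_sum fun k hk => ?_
      obtain ⟨hk1, hk2⟩ := Finset.mem_Ico.mp hk
      have h2 := abs_real_inner_le_norm (r k) (r t)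
      have h3 := neg_abs_le (⟪r k, r t⟫)
      have h4 := hrec k hk2
      nlinarith [norm_nonneg (r k), norm_nonneg (r t)]
    calc -(γ * ∑ k ∈ Finset.Ico s t, ⟪r k, r t⟫)
        = γ * (-∑ k ∈ Finset.Ico s t, ⟪r k, r t⟫) := by ring
      _ ≤ γ * ∑ k ∈ Finset.Ico s t, ‖r k‖ ^ 2 := mul_le_mul_of_nonneg_left hs hγ0.le
  -- limit of D
  have hbdd : BddBelow (Set.range D) := ⟨0, by rintro v ⟨t, rfl⟩; exact hD0 t⟩
  set L : ℝ := ⨅ t, D t with hLdef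
  have hDlim : Tendsto D atTop (𝓝 L) := tendsto_atTop_ciInf hanti hbdd
  have hLle : ∀ t, L ≤ D t := fun t => ciInf_le hbdd t
  have hL0 : 0 ≤ L := le_ciInf hD0
  -- the crucial claim : L ≤ 0
  have hLneg : L ≤ 0 := by
    by_cases hz : ∃ t₀, A (x t₀) = y
    · obtain ⟨t₀, ht₀⟩ := hz
      have h2 : (R xdag).toReal ≤ (R (x t₀)).toReal :=
        ENNReal.toReal_mono (hdom t₀) (hxdag_min _ ht₀)
      have h3 : D t₀ ≤ 0 := by
        simp only [hDdef]
        rw [hxdag_sol, ht₀, sub_self, inner_zero_right]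
        linarith
      exact le_trans (hLle t₀) h3
    · push_neg at hz
      have hrpos : ∀ t, 0 < ‖r t‖ := fun t =>
        norm_pos_iff.mpr (show A (x t) - y ≠ 0 from sub_ne_zero_of_ne (hz t))
      -- existence of arbitrarily late records
      have hrecord : ∀ N : ℕ, ∃ t : ℕ, N ≤ t ∧ ∀ k, k < t → ‖r t‖ ≤ ‖r k‖ := by
        intro N
        obtain ⟨k₀, hk₀mem, hk₀⟩ := Finset.exists_min_image (Finset.range (N + 1))
          (fun k => ‖r k‖) ⟨0, by simp⟩
        obtain ⟨M, hM⟩ := (Metric.tendsto_atTop.mp hrnorm) (‖r k₀‖) (hrpos k₀)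
        have hm : ‖r (max M N)‖ < ‖r k₀‖ := by
          have h := hM (max M N) (le_max_left _ _)
          rwa [Real.dist_eq, sub_zero, abs_of_nonneg (norm_nonneg _)] at h
        obtain ⟨t, htmem, ht⟩ := Finset.exists_min_image (Finset.range (max M N + 1))
          (fun k => ‖r k‖) ⟨0, by simp⟩
        have htm : t ≤ max M N := Nat.lt_succ_iff.mp (Finset.mem_range.mp htmem)
        have htr : ‖r t‖ < ‖r k₀‖ :=
          lt_of_le_of_lt (ht (max M N) (Finset.mem_range.mpr (Nat.lt_succ_self _))) hm
        have hNt : N ≤ t := by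
          by_contra hc
          push_neg at hc
          have h5 : ‖r k₀‖ ≤ ‖r t‖ := hk₀ t (Finset.mem_range.mpr (by omega))
          linarith
        exact ⟨t, hNt, fun k hk => ht k (Finset.mem_range.mpr (by omega))⟩
      choose f hf1 hf2 using hrecord
      set φ : ℕ → ℕ := fun n => Nat.rec (f 0) (fun _ p => f (p + 1)) n with hφdef
      have hφs : ∀ n, φ (n + 1) = f (φ n + 1) := fun n => rfl
      have hφrec : ∀ n, ∀ k, k < φ n → ‖r (φ n)‖ ≤ ‖r k‖ := by
        intro n
        cases n with
        | zero => exact hf2 0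
        | succ p => exact hf2 (φ p + 1)
      have hφmono : StrictMono φ := strictMono_nat_of_lt_succ fun n =>
        lt_of_lt_of_le (Nat.lt_succ_self _) (by rw [hφs]; exact hf1 (φ n + 1))
      have hφge : ∀ n, n ≤ φ n := fun n => hφmono.le_apply
      -- D t - L is eventually small
      have hDtend' : ∀ η : ℝ, 0 < η → ∃ N, ∀ t, N ≤ t → D t - L < η := by
        intro η hη
        obtain ⟨N, hN⟩ := (Metric.tendsto_atTop.mp hDlim) η hη
        refine ⟨N, fun t ht => ?_⟩
        have h := hN t ht
        rw [Real.dist_eq] at h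
        have := (abs_lt.mp h).2
        linarith
      -- the record subsequence is Cauchy
      have hcauchy : CauchySeq (fun n => x (φ n)) := by
        rw [Metric.cauchySeq_iff']
        intro η hη
        have hq : (0:ℝ) < c₀ * η ^ 2 / 2 := by positivity
        obtain ⟨N₁, hN₁⟩ := htail ((c₀ * η ^ 2 / 2) / γ) (by positivity)
        obtain ⟨N₂, hN₂⟩ := hDtend' (c₀ * η ^ 2 / 2) hq
        refine ⟨max N₁ N₂, fun n hn => ?_⟩
        have hsle : φ (max N₁ N₂) ≤ φ n := hφmono.monotone hn
        have hkey' := hkey (φ (max N₁ N₂)) (φ n) hsle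
        have hpair' := hpair (φ (max N₁ N₂)) (φ n) hsle (hφrec n)
        have htail' := hN₁ (φ (max N₁ N₂)) (φ n)
          (le_trans (le_max_left _ _) (hφge _))
        have hDs := hN₂ (φ (max N₁ N₂)) (le_trans (le_max_right _ _) (hφge _))
        have hDt := hLle (φ n)
        have hsum' : γ * ∑ k ∈ Finset.Ico (φ (max N₁ N₂)) (φ n), ‖r k‖ ^ 2
            < c₀ * η ^ 2 / 2 := by
          have := mul_lt_mul_of_pos_left htail' hγ0
          rwa [mul_div_cancel₀ _ (ne_of_gt hγ0)] at this
        have hsq : ‖x (φ n) - x (φ (max N₁ N₂))‖ ^ 2 < η ^ 2 := by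
          have h6 : c₀ * ‖x (φ n) - x (φ (max N₁ N₂))‖ ^ 2 < c₀ * η ^ 2 := by
            clear_value φ D r
            linarith [hkey', hpair', hsum', hDs, hDt]
          exact lt_of_mul_lt_mul_left (by linarith) hc₀.le
        rw [dist_eq_norm]
        exact lt_of_pow_lt_pow_left₀ 2 hη.le hsq
      obtain ⟨xbar, hxbar⟩ := cauchySeq_tendsto_of_complete hcauchy
      have hφtop : Tendsto φ atTop atTop := hφmono.tendsto_atTop
      have hrφ : Tendsto (fun n => r (φ n)) atTop (𝓝 0) := hrtend.comp hφtop
      have hAxbar : A xbar = y := by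
        have h1 : Tendsto (fun n => A (x (φ n))) atTop (𝓝 (A xbar)) :=
          (A.continuous.tendsto xbar).comp hxbar
        have h2 : Tendsto (fun n => A (x (φ n))) atTop (𝓝 y) := by
          have he : (fun n => A (x (φ n))) = fun n => r (φ n) + y := by
            funext n
            simp [hrdef]
          rw [he]
          simpa using hrφ.add (tendsto_const_nhds (x := y))
        exact tendsto_nhds_unique h1 h2
      -- conclude L ≤ 0
      refine le_of_forall_pos_le_add ?_
      intro δ hδ
      obtain ⟨l₀, hl₀⟩ := htail (δ / 3 / γ) (by positivity)
      set B : ℝ := ∑ k ∈ Finset.range l₀, ‖r k‖ with hBdef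
      have hB : 0 ≤ B := Finset.sum_nonneg fun k _ => norm_nonneg _
      -- pairing bound with split
      have hpair0 : ∀ t, l₀ ≤ t → (∀ k, k < t → ‖r t‖ ≤ ‖r k‖) →
          ⟪lam t, r t⟫ ≤ γ * (B * ‖r t‖) + γ * ∑ k ∈ Finset.Ico l₀ t, ‖r k‖ ^ 2 := by
        intro t hlt hrec
        have hl : lam t = lam 0 - γ • (∑ k ∈ Finset.Ico 0 t, r k) :=
          hlamsum 0 t (Nat.zero_le t)
        rw [hl, hlam0, zero_sub, inner_neg_left, real_inner_smul_left, sum_inner,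
          ← Finset.sum_Ico_consecutive (fun k => ⟪r k, r t⟫) (Nat.zero_le l₀) hlt]
        have h1 : -∑ k ∈ Finset.Ico 0 l₀, ⟪r k, r t⟫ ≤ B * ‖r t‖ := by
          rw [hBdef, Finset.range_eq_Ico, Finset.sum_mul, ← Finset.sum_neg_distrib]
          refine Finset.sum_le_sum fun k hk => ?_
          have h2 := abs_real_inner_le_norm (r k) (r t)
          have h3 := neg_abs_le (⟪r k, r t⟫)
          linarith
        have h2 : -∑ k ∈ Finset.Ico l₀ t, ⟪r k, r t⟫ ≤ ∑ k ∈ Finset.Ico l₀ t, ‖r k‖ ^ 2 := by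
          rw [← Finset.sum_neg_distrib]
          refine Finset.sum_le_sum fun k hk => ?_
          obtain ⟨hk1, hk2⟩ := Finset.mem_Ico.mp hk
          have h3 := abs_real_inner_le_norm (r k) (r t)
          have h4 := neg_abs_le (⟪r k, r t⟫)
          have h5 := hrec k hk2
          nlinarith [norm_nonneg (r k), norm_nonneg (r t)]
        have e : -(γ * (∑ k ∈ Finset.Ico 0 l₀, ⟪r k, r t⟫ + ∑ k ∈ Finset.Ico l₀ t, ⟪r k, r t⟫))
            = γ * (-∑ k ∈ Finset.Ico 0 l₀, ⟪r k, r t⟫)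
              + γ * (-∑ k ∈ Finset.Ico l₀ t, ⟪r k, r t⟫) := by ring
        rw [e]
        have := mul_le_mul_of_nonneg_left h1 hγ0.le
        have := mul_le_mul_of_nonneg_left h2 hγ0.le
        linarith
      -- lower semicontinuity part
      have hlsceven : ∀ᶠ n in atTop, (R xdag).toReal - δ / 3 < (R (x (φ n))).toReal := by
        rcases lt_or_ge ((R xdag).toReal - δ / 3) 0 with h | h
        · exact Filter.Eventually.of_forall fun n =>
            lt_of_lt_of_le h ENNReal.toReal_nonneg
        · have hRpos : 0 < (R xdag).toReal := by linarith [hδ]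
          have hlt : ENNReal.ofReal ((R xdag).toReal - δ / 3) < R xbar := by
            have h1 : ENNReal.ofReal ((R xdag).toReal - δ / 3)
                < ENNReal.ofReal ((R xdag).toReal) := by
              rw [ENNReal.ofReal_lt_ofReal_iff hRpos]
              linarith
            rw [ENNReal.ofReal_toReal hxdag_dom] at h1
            exact lt_of_lt_of_le h1 (hxdag_min xbar hAxbar)
          have hev := hxbar.eventually (hlsc xbar _ hlt)
          refine hev.mono fun n hn => ?_
          have h2 := (ENNReal.toReal_lt_toReal ENNReal.ofReal_ne_top (hdom (φ n))).mpr hn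
          rwa [ENNReal.toReal_ofReal h] at h2
      -- small residual
      have hrsmall : ∀ᶠ n in atTop, ‖r (φ n)‖ < δ / 3 / (γ * B + 1) := by
        have := hrnorm.comp hφtop
        exact this.eventually_lt_const (by positivity)
      have hlarge : ∀ᶠ n in atTop, l₀ ≤ φ n :=
        hφtop.eventually (eventually_ge_atTop l₀)
      obtain ⟨n, hn1, hn2, hn3⟩ := (hlsceven.and (hrsmall.and hlarge)).exists
      -- assemble
      have hDt : D (φ n) = (R xdag).toReal - (R (x (φ n))).toReal + ⟪lam (φ n), r (φ n)⟫ := by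
        simp only [hDdef, hrdef]
        rw [hxdag_sol]
        simp only [inner_sub_right]
        ring
      have hp := hpair0 (φ n) hn3 (hφrec n)
      have ht' := hl₀ l₀ (φ n) le_rfl
      have hsum2 : γ * ∑ k ∈ Finset.Ico l₀ (φ n), ‖r k‖ ^ 2 < δ / 3 := by
        have := mul_lt_mul_of_pos_left ht' hγ0
        rwa [mul_div_cancel₀ _ (ne_of_gt hγ0)] at this
      have hBbound : γ * (B * ‖r (φ n)‖) ≤ δ / 3 := by
        have h6 : γ * B * ‖r (φ n)‖ ≤ γ * B * (δ / 3 / (γ * B + 1)) :=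
          mul_le_mul_of_nonneg_left hn2.le (by positivity)
        have h7 : γ * B * (δ / 3 / (γ * B + 1)) ≤ δ / 3 := by
          rw [div_div, show γ * B * (δ / (3 * (γ * B + 1))) = γ * B * δ / (3 * (γ * B + 1))
            from by ring, div_le_div_iff₀ (by positivity) (by norm_num)]
          nlinarith [mul_nonneg (mul_nonneg hγ0.le hB) hδ.le, hδ.le]
        calc γ * (B * ‖r (φ n)‖) = γ * B * ‖r (φ n)‖ := by ring
          _ ≤ δ / 3 := le_trans h6 h7
      have hfinal : D (φ n) < δ := by
        rw [hDt]
        have : ⟪lam (φ n), r (φ n)⟫ ≤ δ / 3 + δ / 3 := by linarith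
        linarith
      have := hLle (φ n)
      linarith
  have hLz : L = 0 := le_antisymm hLneg hL0
  have hDzero : Tendsto D atTop (𝓝 0) := hLz ▸ hDlim
  refine ⟨hDzero, ?_⟩
  have hbound : ∀ t, ‖x t - xdag‖ ≤ Real.sqrt (D t / c₀) := by
    intro t
    have h1 : ‖x t - xdag‖ ^ 2 ≤ D t / c₀ := by
      rw [le_div_iff₀ hc₀]
      have h2 := hDlow t
      rw [norm_sub_rev]
      linarith
    calc ‖x t - xdag‖ = Real.sqrt (‖x t - xdag‖ ^ 2) :=
          (Real.sqrt_sq (norm_nonneg _)).symm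
      _ ≤ Real.sqrt (D t / c₀) := Real.sqrt_le_sqrt h1
  have hg : Tendsto (fun t => Real.sqrt (D t / c₀)) atTop (𝓝 0) := by
    have := (hDzero.div_const c₀).sqrt
    simpa using this
  exact squeeze_zero (fun t => norm_nonneg _) hbound hg
end
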